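/- arXiv:2506.12868 — 6 statements merged into one kernel-verified Lean document; each statement's English description precedes it below -/
import Mathlib

section
/- For every integer n ≥ 1, the map B ↦ Odd(B) = [n−1] ∖ (B ∪ (B−1)) is a bijection from the set of peak sets B ⊆ {2,3,…,n−1} onto the set of odd sets A ⊆ [n−1]. -/
/-- `B` is a peak set: `B ⊆ {2,…,n−1}` and `b ∈ B` implies `b−1 ∉ B` and `b+1 ∉ B`. -/
def IsPeakSet (n : ℕ) (B : Finset ℕ) : Prop :=
  B ⊆ Finset.Icc 2 (n - 1) ∧ ∀ b ∈ B, b - 1 ∉ B ∧ b + 1 ∉ B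

/-- `Odd(B) = [n−1] ∖ (B ∪ (B−1))`. -/
def OddSetOf (n : ℕ) (B : Finset ℕ) : Finset ℕ :=
  Finset.Icc 1 (n - 1) \ (B ∪ B.image (fun b => b - 1))

/-- `A = {a₁ < ⋯ < a_k} ⊆ [n−1]` is an odd set: with `a₀ = 0`, `a_{k+1} = n`, all
consecutive differences `a_i − a_{i−1}` are odd.  For `a ∈ A ∪ {n}`, the predecessor of
`a` is the largest element of `A` below `a` (or `0`), i.e. `(A.filter (· < a)).sup id`. -/
def IsOddSet (n : ℕ) (A : Finset ℕ) : Prop :=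
  A ⊆ Finset.Icc 1 (n - 1) ∧
    ∀ a ∈ insert n A, Odd (a - ((A.filter (fun x => x < a)).sup id))

/-- Predecessor of `c` in `A` (or `0`). -/
def predA (A : Finset ℕ) (c : ℕ) : ℕ := (A.filter (fun x => x < c)).sup id

lemma predA_lt (A : Finset ℕ) {c : ℕ} (hc : 1 ≤ c) : predA A c < c := by
  apply (Finset.sup_lt_iff (show (⊥ : ℕ) < c from hc)).2
  intro b hb
  simpa using (Finset.mem_filter.1 hb).2

lemma le_predA {A : Finset ℕ} {a c : ℕ} (ha : a ∈ A) (h : a < c) : a ≤ predA A c :=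
  Finset.le_sup (f := id) (Finset.mem_filter.2 ⟨ha, h⟩)

lemma predA_step {A : Finset ℕ} {c : ℕ} (h : c - 1 ∉ A) :
    predA A c = predA A (c - 1) := by
  unfold predA
  congr 1
  ext x
  simp only [Finset.mem_filter, and_congr_right_iff]
  intro hx
  constructor
  · intro hlt
    rcases eq_or_ne x (c - 1) with rfl | hne
    · exact absurd hx h
    · omega
  · intro h'
    omega

lemma mem_oddSetOf {n : ℕ} {B : Finset ℕ} {a : ℕ} :
    a ∈ OddSetOf n B ↔ 1 ≤ a ∧ a ≤ n - 1 ∧ a ∉ B ∧ a + 1 ∉ B := by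
  unfold OddSetOf
  constructor
  · intro h
    rw [Finset.mem_sdiff, Finset.mem_Icc] at h
    obtain ⟨⟨h1, h2⟩, h3⟩ := h
    rw [Finset.mem_union] at h3
    push_neg at h3
    refine ⟨h1, h2, h3.1, fun hb => ?_⟩
    exact h3.2 (Finset.mem_image.2 ⟨a + 1, hb, by omega⟩)
  · rintro ⟨h1, h2, h3, h4⟩
    rw [Finset.mem_sdiff, Finset.mem_Icc, Finset.mem_union]
    push_neg
    refine ⟨⟨h1, h2⟩, h3, fun hc => ?_⟩
    obtain ⟨b, hb, hba⟩ := Finset.mem_image.1 hc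
    have hb' : b = a + 1 := by omega
    exact h4 (hb' ▸ hb)

/-- Key parity invariant for the image of a peak set, by strong induction. -/
lemma key {n : ℕ} {B : Finset ℕ} (hB : IsPeakSet n B) (hn : 1 ≤ n) :
    ∀ c, 1 ≤ c → c ≤ n →
      ((c ∈ OddSetOf n B ∨ c = n) → Odd (c - predA (OddSetOf n B) c)) ∧
      (c ∉ OddSetOf n B → c ≤ n - 1 →
        (c ∈ B ↔ Even (c - predA (OddSetOf n B) c))) := by
  intro c
  induction c using Nat.strong_induction_on with
  | _ c IH =>
    intro hc1 hcn
    rcases Nat.lt_or_ge c 2 with hc2 | hc2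
    · -- c = 1
      have hc : c = 1 := by omega
      subst hc
      have hp : predA (OddSetOf n B) 1 = 0 := by
        have := predA_lt (OddSetOf n B) (le_refl 1); omega
      rw [hp]
      constructor
      · intro _; exact ⟨0, by norm_num⟩
      · intro _ _
        have h1B : 1 ∉ B := fun h => by
          have := Finset.mem_Icc.1 (hB.1 h); omega
        constructor
        · intro h; exact absurd h h1B
        · intro h; rw [Nat.even_iff] at h; omega
    · by_cases hmem : c - 1 ∈ OddSetOf n B
      · have hp : predA (OddSetOf n B) c = c - 1 := by
          refine le_antisymm ?_ (le_predA hmem (by omega))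
          have := predA_lt (OddSetOf n B) (show 1 ≤ c by omega); omega
        rw [hp]
        have hco : c - (c - 1) = 1 := by omega
        rw [hco]
        constructor
        · intro _; exact ⟨0, by norm_num⟩
        · intro _ _
          have hm := mem_oddSetOf.1 hmem
          have hcB : c ∉ B := by
            have h4 := hm.2.2.2
            have hcc : c - 1 + 1 = c := by omega
            rwa [hcc] at h4
          constructor
          · intro h; exact absurd h hcB
          · intro h; rw [Nat.even_iff] at h; omega
      · have hstep : predA (OddSetOf n B) c = predA (OddSetOf n B) (c - 1) :=
          predA_step hmem
        have hIH := (IH (c - 1) (by omega) (by omega) (by omega)).2 hmem (by omega)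
        have hplt : predA (OddSetOf n B) (c - 1) < c - 1 :=
          predA_lt _ (by omega)
        have hd : c - 1 ∈ B ∨ c ∈ B := by
          by_contra h
          push_neg at h
          apply hmem
          apply mem_oddSetOf.2
          refine ⟨by omega, by omega, h.1, ?_⟩
          have hcc : c - 1 + 1 = c := by omega
          rw [hcc]; exact h.2
        rw [hstep]
        set p := predA (OddSetOf n B) (c - 1) with hpdef
        constructor
        · intro hor
          have hcB : c ∉ B := by
            rcases hor with h | h
            · exact (mem_oddSetOf.1 h).2.2.1
            · intro hcB
              have := Finset.mem_Icc.1 (hB.1 hcB); omega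
          have hc1B : c - 1 ∈ B := hd.resolve_right hcB
          have hE : Even (c - 1 - p) := hIH.1 hc1B
          rw [Nat.even_iff] at hE
          rw [Nat.odd_iff]
          omega
        · intro hcA hcn1
          constructor
          · intro hcB
            have hc1B : c - 1 ∉ B := (hB.2 c hcB).1
            have hne : ¬ Even (c - 1 - p) := fun h => hc1B (hIH.2 h)
            rw [Nat.even_iff] at hne ⊢
            omega
          · intro hE
            have hne : ¬ Even (c - 1 - p) := by
              rw [Nat.even_iff] at hE ⊢
              omega
            have hc1B : c - 1 ∉ B := fun h => hne (hIH.1 h)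
            exact hd.resolve_left hc1B

/-- Inverse map: odd sets to peak sets. -/
def invOdd (n : ℕ) (A : Finset ℕ) : Finset ℕ :=
  (Finset.Icc 1 (n - 1)).filter (fun c => c ∉ A ∧ (c - predA A c) % 2 = 0)

lemma mem_invOdd {n : ℕ} {A : Finset ℕ} {c : ℕ} :
    c ∈ invOdd n A ↔ 1 ≤ c ∧ c ≤ n - 1 ∧ c ∉ A ∧ Even (c - predA A c) := by
  rw [invOdd, Finset.mem_filter, Finset.mem_Icc, Nat.even_iff]
  tauto

lemma invOdd_isPeak {n : ℕ} {A : Finset ℕ} (_hA : IsOddSet n A) (_hn : 1 ≤ n) :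
    IsPeakSet n (invOdd n A) := by
  constructor
  · intro c hc
    obtain ⟨h1, h2, h3, h4⟩ := mem_invOdd.1 hc
    have hplt := predA_lt A h1
    rw [Nat.even_iff] at h4
    rw [Finset.mem_Icc]
    omega
  · intro c hc
    obtain ⟨h1, h2, h3, h4⟩ := mem_invOdd.1 hc
    constructor
    · intro hc'
      obtain ⟨g1, g2, g3, g4⟩ := mem_invOdd.1 hc'
      have hstep : predA A c = predA A (c - 1) := predA_step g3
      have hplt := predA_lt A g1
      rw [Nat.even_iff] at h4 g4
      rw [hstep] at h4
      omega
    · intro hc'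
      obtain ⟨g1, g2, g3, g4⟩ := mem_invOdd.1 hc'
      have hstep : predA A (c + 1) = predA A c := by
        have h := predA_step (A := A) (c := c + 1) (by simpa using h3)
        simpa using h
      have hplt := predA_lt A h1
      rw [Nat.even_iff] at h4 g4
      rw [hstep] at g4
      omega

lemma oddSetOf_invOdd {n : ℕ} {A : Finset ℕ} (hA : IsOddSet n A) (hn : 1 ≤ n) :
    OddSetOf n (invOdd n A) = A := by
  obtain ⟨hA1, hA2⟩ := hA
  ext c
  rw [mem_oddSetOf]
  constructor
  · rintro ⟨h1, h2, h3, h4⟩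
    by_contra hcA
    by_cases hE : Even (c - predA A c)
    · exact h3 (mem_invOdd.2 ⟨h1, h2, hcA, hE⟩)
    · have hplt := predA_lt A h1
      have hstep : predA A (c + 1) = predA A c := by
        have h := predA_step (A := A) (c := c + 1) (by simpa using hcA)
        simpa using h
      have hc1A : c + 1 ∉ A := by
        intro h
        have hodd : Odd (c + 1 - predA A (c + 1)) :=
          hA2 (c + 1) (Finset.mem_insert_of_mem h)
        rw [hstep, Nat.odd_iff] at hodd
        rw [Nat.even_iff] at hE
        omega
      have hc1n : c + 1 ≤ n - 1 := by
        by_contra hgt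
        have hcn : c + 1 = n := by omega
        have hodd : Odd (n - predA A n) := hA2 n (Finset.mem_insert_self n A)
        rw [← hcn, hstep, Nat.odd_iff] at hodd
        rw [Nat.even_iff] at hE
        omega
      apply h4
      apply mem_invOdd.2
      refine ⟨by omega, hc1n, hc1A, ?_⟩
      rw [hstep]
      rw [Nat.even_iff] at hE ⊢
      omega
  · intro hcA
    have hm := Finset.mem_Icc.1 (hA1 hcA)
    refine ⟨hm.1, hm.2, ?_, ?_⟩
    · intro h
      exact (mem_invOdd.1 h).2.2.1 hcA
    · intro h
      obtain ⟨g1, g2, g3, g4⟩ := mem_invOdd.1 h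
      have hle : predA A (c + 1) = c := by
        refine le_antisymm ?_ (le_predA hcA (by omega))
        have := predA_lt A (show 1 ≤ c + 1 by omega)
        omega
      rw [hle] at g4
      rw [Nat.even_iff] at g4
      omega

lemma invOdd_oddSetOf {n : ℕ} {B : Finset ℕ} (hB : IsPeakSet n B) (hn : 1 ≤ n) :
    invOdd n (OddSetOf n B) = B := by
  ext c
  rw [mem_invOdd]
  constructor
  · rintro ⟨h1, h2, h3, h4⟩
    exact ((key hB hn c h1 (by omega)).2 h3 h2).2 h4
  · intro hcB
    have hm := Finset.mem_Icc.1 (hB.1 hcB)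
    have h3 : c ∉ OddSetOf n B := fun h => (mem_oddSetOf.1 h).2.2.1 hcB
    exact ⟨by omega, by omega, h3,
      ((key hB hn c (by omega) (by omega)).2 h3 (by omega)).1 hcB⟩

lemma oddSetOf_isOdd {n : ℕ} {B : Finset ℕ} (hB : IsPeakSet n B) (hn : 1 ≤ n) :
    IsOddSet n (OddSetOf n B) := by
  refine ⟨Finset.sdiff_subset, ?_⟩
  intro a ha
  rcases Finset.mem_insert.1 ha with rfl | haA
  · exact (key hB hn a hn le_rfl).1 (Or.inr rfl)
  · obtain ⟨h1, h2, _, _⟩ := mem_oddSetOf.1 haA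
    exact (key hB hn a h1 (by omega)).1 (Or.inl haA)

/-- The map `B ↦ Odd(B)` is a bijection from peak sets onto odd sets. -/
theorem stmt0 (n : ℕ) (hn : 1 ≤ n) :
    Set.BijOn (OddSetOf n) {B : Finset ℕ | IsPeakSet n B} {A : Finset ℕ | IsOddSet n A} := by
  apply Set.InvOn.bijOn (f' := invOdd n)
  · constructor
    · intro B hB
      exact invOdd_oddSetOf hB hn
    · intro A hA
      exact oddSetOf_invOdd hA hn
  · intro B hB
    exact oddSetOf_isOdd hB hn
  · intro A hA
    exact invOdd_isPeak hA hn
end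

section
/- For every integer n ≥ 1, the map (B,σ) ↦ SetComp(Odd(B),σ) is a bijection from the set of enriched standard pairs (B,σ), with B ⊆ {2,…,n−1} a peak set and σ a permutation of [n] such that Des(σ) ⊆ Odd(B), onto the set of odd set compositions of [n]. -/
/-- `σ` is a permutation of `[n] = {1,…,n}`: it fixes everything outside `[n]`. -/
def IsPermOn (n : ℕ) (σ : Equiv.Perm ℕ) : Prop :=
  ∀ i, i ∉ Finset.Icc 1 n → σ i = i

/-- The descent set `Des(σ) = {i ∈ [n−1] : σ(i) > σ(i+1)}`. -/
def DesSet (n : ℕ) (σ : Equiv.Perm ℕ) : Finset ℕ :=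
  (Finset.Icc 1 (n - 1)).filter (fun i => σ (i + 1) < σ i)

/-- `SetComp(A,σ)`: for `A = {a₁ < ⋯ < a_k} ⊆ [n−1]`, the list of blocks
`({σ(1),…,σ(a₁)}, {σ(a₁+1),…,σ(a₂)}, …, {σ(a_k+1),…,σ(n)})`. -/
def setCompBlocks (n : ℕ) (A : Finset ℕ) (σ : Equiv.Perm ℕ) : List (Finset ℕ) :=
  ((0 :: (A.sort (· ≤ ·) ++ [n])).zip (A.sort (· ≤ ·) ++ [n])).map
    (fun p => (Finset.Icc (p.1 + 1) p.2).image (fun x => σ x))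

/-- `φ` is a set composition of `[n]`. -/
def IsSetComposition (n : ℕ) (φ : List (Finset ℕ)) : Prop :=
  (∀ B ∈ φ, B.Nonempty) ∧ φ.Pairwise (fun B C => Disjoint B C) ∧
    φ.foldr (· ∪ ·) ∅ = Finset.Icc 1 n

section Aux


/-- Recursive version of the block construction. -/
def blocksFrom (σ : Equiv.Perm ℕ) : ℕ → List ℕ → List (Finset ℕ)
  | _, [] => []
  | p, q :: t => (Finset.Icc (p+1) q).image (fun x => σ x) :: blocksFrom σ q t

lemma zip_map_eq (σ : Equiv.Perm ℕ) : ∀ (l : List ℕ) (p : ℕ),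
    ((p :: l).zip l).map (fun pr => (Finset.Icc (pr.1 + 1) pr.2).image (fun x => σ x))
      = blocksFrom σ p l := by
  intro l
  induction l with
  | nil => intro p; rfl
  | cons q t ih => intro p; simp only [List.zip_cons_cons, List.map_cons, blocksFrom, ih]

lemma setCompBlocks_eq (n : ℕ) (A : Finset ℕ) (σ : Equiv.Perm ℕ) :
    setCompBlocks n A σ = blocksFrom σ 0 (A.sort (· ≤ ·) ++ [n]) := by
  unfold setCompBlocks
  exact zip_map_eq σ _ 0

lemma chain_cons_old {R : ℕ → ℕ → Prop} {a b : ℕ} {l : List ℕ} :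
    List.Chain R a (b :: l) ↔ R a b ∧ List.Chain R b l := List.isChain_cons_cons

lemma chain_iff_pairwise_old {a : ℕ} {l : List ℕ} :
    List.Chain (· < ·) a l ↔ List.Pairwise (· < ·) (a :: l) := List.isChain_iff_pairwise

/-- all elements of a `<`-chain are above the head. -/
lemma chain_lt_mem {p x : ℕ} {l : List ℕ} (h : List.Chain (· < ·) p l) (hx : x ∈ l) : p < x := by
  rw [chain_iff_pairwise_old] at h
  exact (List.pairwise_cons.1 h).1 x hx

lemma chain_le_getLastD {p : ℕ} {l : List ℕ} (h : List.Chain (· < ·) p l) : p ≤ l.getLastD p := by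
  induction l generalizing p with
  | nil => simp
  | cons q t ih =>
    rw [List.getLastD_cons]
    exact le_trans (le_of_lt (List.chain_cons.1 h).1) (ih (List.chain_cons.1 h).2)

lemma foldr_union_blocksFrom (σ : Equiv.Perm ℕ) : ∀ (l : List ℕ) (p : ℕ),
    List.Chain (· < ·) p l →
    (blocksFrom σ p l).foldr (· ∪ ·) ∅ = (Finset.Icc (p+1) (l.getLastD p)).image (fun x => σ x) := by
  intro l
  induction l with
  | nil => intro p _; simp [blocksFrom]
  | cons q t ih =>
    intro p h
    rw [chain_cons_old] at h
    have hq := chain_le_getLastD h.2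
    rw [List.getLastD_cons]
    simp only [blocksFrom, List.foldr_cons, ih q h.2]
    rw [← Finset.image_union]
    congr 1
    ext x
    simp only [Finset.mem_union, Finset.mem_Icc]
    omega

lemma mem_foldr_union {b : Finset ℕ} {L : List (Finset ℕ)} (hb : b ∈ L) :
    b ⊆ L.foldr (· ∪ ·) ∅ := by
  induction L with
  | nil => simp at hb
  | cons c t ih =>
    rcases List.mem_cons.1 hb with h | h
    · subst h; exact Finset.subset_union_left
    · exact (ih h).trans Finset.subset_union_right

lemma nonempty_blocksFrom (σ : Equiv.Perm ℕ) : ∀ (l : List ℕ) (p : ℕ),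
    List.Chain (· < ·) p l → ∀ b ∈ blocksFrom σ p l, b.Nonempty := by
  intro l
  induction l with
  | nil => intro p _ b hb; simp [blocksFrom] at hb
  | cons q t ih =>
    intro p h b hb
    rw [chain_cons_old] at h
    rcases List.mem_cons.1 hb with hb | hb
    · subst hb
      exact (Finset.nonempty_Icc.2 (by omega)).image _
    · exact ih q h.2 b hb

lemma pairwise_disjoint_blocksFrom (σ : Equiv.Perm ℕ) : ∀ (l : List ℕ) (p : ℕ),
    List.Chain (· < ·) p l →
    (blocksFrom σ p l).Pairwise (fun B C => Disjoint B C) := by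
  intro l
  induction l with
  | nil => intro p _; simp [blocksFrom]
  | cons q t ih =>
    intro p h
    rw [chain_cons_old] at h
    refine List.pairwise_cons.2 ⟨?_, ih q h.2⟩
    intro b hb
    have h1 : b ⊆ (Finset.Icc (q+1) (t.getLastD q)).image (fun x => σ x) := by
      rw [← foldr_union_blocksFrom σ t q h.2]
      exact mem_foldr_union hb
    refine Finset.disjoint_left.2 fun x hx hx' => ?_
    have hx1 := hx
    rw [Finset.mem_image] at hx1
    obtain ⟨i, hi, hix⟩ := hx1
    obtain ⟨j, hj, hjx⟩ := Finset.mem_image.1 (h1 hx')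
    rw [Finset.mem_Icc] at hi hj
    have : i = j := σ.injective (by rw [hix, hjx])
    omega



lemma mem_oddSetOf_iff {n : ℕ} {B : Finset ℕ} {x : ℕ} :
    x ∈ OddSetOf n B ↔ (1 ≤ x ∧ x ≤ n - 1) ∧ (x ∉ B ∧ ∀ b ∈ B, b - 1 ≠ x) := by
  simp only [OddSetOf, Finset.mem_sdiff, Finset.mem_Icc, Finset.mem_union, Finset.mem_image,
    not_or, not_exists]
  push_neg
  tauto

lemma chain_sort_append (n : ℕ) (A : Finset ℕ) (hA : A ⊆ Finset.Icc 1 (n-1)) (hn : 1 ≤ n) :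
    List.Chain (· < ·) 0 (A.sort (· ≤ ·) ++ [n]) := by
  rw [chain_iff_pairwise_old, List.pairwise_cons]
  constructor
  · intro a ha
    rcases List.mem_append.1 ha with h | h
    · have := hA (Finset.mem_sort (· ≤ ·) |>.1 h)
      rw [Finset.mem_Icc] at this; omega
    · simp at h; omega
  · rw [List.pairwise_append]
    refine ⟨(Finset.sortedLT_sort A).pairwise, List.pairwise_singleton _ _, ?_⟩
    intro a ha b hb
    simp at hb
    subst hb
    have := hA (Finset.mem_sort (· ≤ ·) |>.1 ha)
    rw [Finset.mem_Icc] at this; omega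

lemma mem_sort_append (n : ℕ) (A : Finset ℕ) {x : ℕ} :
    x ∈ A.sort (· ≤ ·) ++ [n] ↔ (x ∈ A ∨ x = n) := by
  simp [List.mem_append, Finset.mem_sort]

lemma getLastD_sort_append (n : ℕ) (A : Finset ℕ) :
    (A.sort (· ≤ ·) ++ [n]).getLastD 0 = n := by
  induction (A.sort (· ≤ ·)) with
  | nil => rfl
  | cons q t ih =>
    rw [List.cons_append, List.getLastD_cons]
    cases t with
    | nil => rfl
    | cons r s => rw [List.cons_append, List.getLastD_cons] at ih ⊢; exact ih

lemma perm_image_Icc {n : ℕ} {σ : Equiv.Perm ℕ} (hσ : IsPermOn n σ) :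
    (Finset.Icc 1 n).image (fun x => σ x) = Finset.Icc 1 n := by
  have hsub : ∀ i ∈ Finset.Icc 1 n, σ i ∈ Finset.Icc 1 n := by
    intro i hi
    by_contra h
    have h2 := hσ _ h
    have : σ i = i := σ.injective (by rw [h2])
    rw [this] at h; exact h hi
  apply Finset.eq_of_subset_of_card_le
  · intro x hx
    obtain ⟨i, hi, rfl⟩ := Finset.mem_image.1 hx
    exact hsub i hi
  · rw [Finset.card_image_of_injective _ σ.injective]

lemma gap_odd {n : ℕ} {B : Finset ℕ} (hB : IsPeakSet n B) {p q : ℕ}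
    (hp : p ∈ OddSetOf n B ∨ p = 0) (hq : q ∈ OddSetOf n B ∨ q = n)
    (hpq : p < q) (hqn : q ≤ n)
    (hbet : ∀ a ∈ OddSetOf n B, p < a → a < q → False) :
    Odd (q - p) := by
  classical
  obtain ⟨hB1, hB2⟩ := hB
  have hBIcc : ∀ b ∈ B, 2 ≤ b ∧ b ≤ n - 1 := fun b hb => Finset.mem_Icc.1 (hB1 hb)
  set I := Finset.Icc (p+1) (q-1) with hI
  set S := I.filter (fun x => x ∈ B) with hS
  have hSmem : ∀ x, x ∈ S ↔ (p+1 ≤ x ∧ x ≤ q-1 ∧ x ∈ B) := by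
    intro x; rw [hS, Finset.mem_filter, hI, Finset.mem_Icc]; tauto
  have hqB : q ∉ B := by
    rcases hq with hq' | hq'
    · exact (mem_oddSetOf_iff.1 hq').2.1
    · intro hqB; have := hBIcc q hqB; omega
  have hpNotPred : ∀ b ∈ B, b - 1 ≠ p := by
    rcases hp with hp' | hp'
    · exact (mem_oddSetOf_iff.1 hp').2.2
    · intro b hb; have := hBIcc b hb; omega
  have himg : I = S ∪ S.image (fun b => b - 1) := by
    ext x
    constructor
    · intro hx
      rw [hI, Finset.mem_Icc] at hx
      have hxA : x ∉ OddSetOf n B := fun h => hbet x h (by omega) (by omega)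
      have hx2 : x ≤ n - 1 := by omega
      rw [mem_oddSetOf_iff] at hxA
      push_neg at hxA
      by_cases hxB : x ∈ B
      · exact Finset.mem_union_left _ ((hSmem x).2 ⟨hx.1, hx.2, hxB⟩)
      · obtain ⟨b, hb, hbx⟩ := hxA ⟨by omega, hx2⟩ hxB
        have hb2 := hBIcc b hb
        have hbval : b = x + 1 := by omega
        have hbq : b ≠ q := fun h => hqB (h ▸ hb)
        refine Finset.mem_union_right _ (Finset.mem_image.2 ⟨b, (hSmem b).2 ⟨?_, ?_, hb⟩, hbx⟩)
        · omega
        · omega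
    · intro hx
      rcases Finset.mem_union.1 hx with hx | hx
      · rw [hSmem] at hx; rw [hI, Finset.mem_Icc]; omega
      · obtain ⟨b, hb, rfl⟩ := Finset.mem_image.1 hx
        rw [hSmem] at hb
        have hb2 := hBIcc b hb.2.2
        have hbp : b - 1 ≠ p := hpNotPred b hb.2.2 
        rw [hI, Finset.mem_Icc]
        omega
  have hdisj : Disjoint S (S.image (fun b => b - 1)) := by
    refine Finset.disjoint_left.2 fun x hx hx' => ?_
    obtain ⟨b, hb, rfl⟩ := Finset.mem_image.1 hx'
    rw [hSmem] at hx hb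
    exact (hB2 b hb.2.2).1 hx.2.2
  have hcardimg : (S.image (fun b => b - 1)).card = S.card := by
    apply Finset.card_image_of_injOn
    intro a ha b hb hab
    rw [Finset.mem_coe, hSmem] at ha hb
    have hab' : a - 1 = b - 1 := hab
    have := hBIcc a ha.2.2
    have := hBIcc b hb.2.2
    omega
  have hIcard : I.card = 2 * S.card := by
    rw [himg, Finset.card_union_of_disjoint hdisj, hcardimg]
    omega
  have : I.card = q - 1 + 1 - (p + 1) := Nat.card_Icc _ _
  exact ⟨S.card, by omega⟩



lemma oddSetOf_subset (n : ℕ) (B : Finset ℕ) : OddSetOf n B ⊆ Finset.Icc 1 (n-1) :=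
  Finset.sdiff_subset

lemma card_image_Icc (σ : Equiv.Perm ℕ) (p q : ℕ) :
    ((Finset.Icc (p+1) q).image (fun x => σ x)).card = q - p := by
  rw [Finset.card_image_of_injective _ σ.injective, Nat.card_Icc]
  omega

lemma odd_card_blocksFrom {n : ℕ} {B : Finset ℕ} (σ : Equiv.Perm ℕ) (hB : IsPeakSet n B) :
    ∀ (l : List ℕ) (p : ℕ), List.Chain (· < ·) p l →
    (∀ x ∈ l, x ∈ OddSetOf n B ∨ x = n) →
    (∀ x, (x ∈ OddSetOf n B ∨ x = n) → p < x → x ∈ l) →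
    (p ∈ OddSetOf n B ∨ p = 0) →
    ∀ b ∈ blocksFrom σ p l, Odd b.card := by
  intro l
  induction l with
  | nil => intro p _ _ _ _ b hb; simp [blocksFrom] at hb
  | cons q t ih =>
    intro p hch hmem hconv hp b hb
    rw [chain_cons_old] at hch
    have hqA : q ∈ OddSetOf n B ∨ q = n := hmem q (List.mem_cons_self)
    have hqn : q ≤ n := by
      rcases hqA with h | h
      · have := Finset.mem_Icc.1 (oddSetOf_subset n B h); omega
      · omega
    rcases List.mem_cons.1 hb with hb | hb
    · subst hb
      rw [card_image_Icc]
      refine gap_odd hB hp hqA hch.1 hqn ?_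
      intro a ha hpa haq
      have hal : a ∈ q :: t := hconv a (Or.inl ha) hpa
      rcases List.mem_cons.1 hal with h | h
      · omega
      · exact absurd (chain_lt_mem hch.2 h) (by omega)
    · rcases hqA with hqA' | hqA'
      · refine ih q hch.2 (fun x hx => hmem x (List.mem_cons_of_mem _ hx)) ?_ (Or.inl hqA') b hb
        intro x hx hqx
        rcases List.mem_cons.1 (hconv x hx (lt_trans hch.1 hqx)) with h | h
        · omega
        · exact h
      · -- q = n : t must be empty
        have ht : t = [] := by
          rw [List.eq_nil_iff_forall_not_mem]
          intro x hx
          have h1 := chain_lt_mem hch.2 hx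
          rcases hmem x (List.mem_cons_of_mem _ hx) with h | h
          · have := Finset.mem_Icc.1 (oddSetOf_subset n B h); omega
          · omega
        rw [ht] at hb
        simp [blocksFrom] at hb



-- strict mono from adjacent
lemma strictmono_of_adjacent (f : ℕ → ℕ) (a b : ℕ) (h : ∀ i, a ≤ i → i + 1 ≤ b → f i < f (i+1)) :
    ∀ i j, a ≤ i → i < j → j ≤ b → f i < f j := by
  intro i j hai hij hjb
  induction j with
  | zero => omega
  | succ k ihk =>
    rcases Nat.lt_or_ge i k with h' | h'
    · exact lt_trans (ihk h' (by omega)) (h k (by omega) hjb)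
    · have : i = k := by omega
      subst this
      exact h i hai hjb

-- uniqueness of strictly monotone enumeration
lemma strictMonoOn_unique : ∀ (k a : ℕ) (f g : ℕ → ℕ),
    (∀ i j, a ≤ i → i < j → j ≤ a + k → f i < f j) →
    (∀ i j, a ≤ i → i < j → j ≤ a + k → g i < g j) →
    (Finset.Icc a (a+k)).image f = (Finset.Icc a (a+k)).image g →
    ∀ i, a ≤ i → i ≤ a + k → f i = g i := by
  intro k
  induction k with
  | zero =>
    intro a f g _ _ himg i hi hi'
    have : i = a := by omega
    subst this
    have : f i ∈ (Finset.Icc i (i+0)).image g := by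
      rw [← himg]; exact Finset.mem_image_of_mem f (by simp)
    simp at this
    omega
  | succ k ih =>
    intro a f g hf hg himg i hi hi'
    set S := (Finset.Icc a (a+(k+1))).image f with hSdef
    have hSg : S = (Finset.Icc a (a+(k+1))).image g := himg
    have hSne : S.Nonempty := ⟨f a, Finset.mem_image_of_mem f (by simp)⟩
    have hminf : f a = S.min' hSne := by
      apply le_antisymm
      · apply Finset.le_min'
        intro y hy
        obtain ⟨j, hj, rfl⟩ := Finset.mem_image.1 hy
        rw [Finset.mem_Icc] at hj
        rcases Nat.eq_or_lt_of_le hj.1 with h | h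
        · exact le_of_eq (congrArg f h)
        · exact le_of_lt (hf a j le_rfl h hj.2)
      · exact Finset.min'_le _ _ (Finset.mem_image_of_mem f (by simp))
    have hming : g a = S.min' hSne := by
      apply le_antisymm
      · apply Finset.le_min'
        intro y hy
        rw [hSg] at hy
        obtain ⟨j, hj, rfl⟩ := Finset.mem_image.1 hy
        rw [Finset.mem_Icc] at hj
        rcases Nat.eq_or_lt_of_le hj.1 with h | h
        · exact le_of_eq (congrArg g h)
        · exact le_of_lt (hg a j le_rfl h hj.2)
      · refine Finset.min'_le _ _ ?_
        rw [hSg]; exact Finset.mem_image_of_mem g (by simp)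
    have hfa : f a = g a := by rw [hminf, hming]
    rcases Nat.eq_or_lt_of_le hi with h | h
    · rw [← h]; exact hfa
    · -- use IH on [a+1, a+1+k]
      have hIcc : Finset.Icc a (a+(k+1)) = insert a (Finset.Icc (a+1) (a+1+k)) := by
        ext x; simp [Finset.mem_Icc, Finset.mem_insert]; omega
      have hfrest : (Finset.Icc (a+1) (a+1+k)).image f = S.erase (f a) := by
        rw [hSdef, hIcc, Finset.image_insert]
        rw [Finset.erase_insert]
        intro hmem
        obtain ⟨j, hj, hjf⟩ := Finset.mem_image.1 hmem
        rw [Finset.mem_Icc] at hj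
        exact absurd hjf (Nat.ne_of_gt (hf a j le_rfl (by omega) (by omega)))
      have hgrest : (Finset.Icc (a+1) (a+1+k)).image g = S.erase (g a) := by
        rw [hSg, hIcc, Finset.image_insert]
        rw [Finset.erase_insert]
        intro hmem
        obtain ⟨j, hj, hjg⟩ := Finset.mem_image.1 hmem
        rw [Finset.mem_Icc] at hj
        exact absurd hjg (Nat.ne_of_gt (hg a j le_rfl (by omega) (by omega)))
      refine ih (a+1) f g ?_ ?_ ?_ i h (by omega)
      · intro i j h1 h2 h3; exact hf i j (by omega) h2 (by omega)
      · intro i j h1 h2 h3; exact hg i j (by omega) h2 (by omega)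
      · rw [hfrest, hgrest, hfa]



lemma list_eq_of_blocks_eq (σ₁ σ₂ : Equiv.Perm ℕ) : ∀ (l₁ l₂ : List ℕ) (p : ℕ),
    List.Chain (· < ·) p l₁ → List.Chain (· < ·) p l₂ →
    blocksFrom σ₁ p l₁ = blocksFrom σ₂ p l₂ → l₁ = l₂ := by
  intro l₁
  induction l₁ with
  | nil =>
    intro l₂ p _ _ h
    cases l₂ with
    | nil => rfl
    | cons q t => exact absurd (congrArg List.length h) (by simp [blocksFrom])
  | cons q₁ t₁ ih =>
    intro l₂ p hc1 hc2 h
    cases l₂ with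
    | nil => exact absurd (congrArg List.length h) (by simp [blocksFrom])
    | cons q₂ t₂ =>
      rw [chain_cons_old] at hc1 hc2
      simp only [blocksFrom, List.cons.injEq] at h
      have hcards := congrArg Finset.card h.1
      rw [card_image_Icc, card_image_Icc] at hcards
      have hq : q₁ = q₂ := by
        have := hc1.1; have := hc2.1; omega
      subst hq
      rw [ih t₂ q₁ hc1.2 hc2.2 h.2]

/-- within-block strict monotonicity from descent condition -/
lemma sigma_mono_block {n : ℕ} {A : Finset ℕ} {σ : Equiv.Perm ℕ}
    (hDes : DesSet n σ ⊆ A) {p q : ℕ} (hq : q ≤ n)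
    (hbet : ∀ a ∈ A, p < a → a < q → False) :
    ∀ i j, p + 1 ≤ i → i < j → j ≤ q → σ i < σ j := by
  apply strictmono_of_adjacent
  intro i hi hi'
  by_contra hcon
  push_neg at hcon
  rcases Nat.lt_or_ge (σ (i+1)) (σ i) with h | h
  · have hdes : i ∈ DesSet n σ := by
      rw [DesSet, Finset.mem_filter, Finset.mem_Icc]
      exact ⟨⟨by omega, by omega⟩, h⟩
    exact hbet i (hDes hdes) (by omega) (by omega)
  · have : i = i + 1 := σ.injective (by omega)
    omega

lemma sigma_eq_on {n : ℕ} {A : Finset ℕ} (hA : A ⊆ Finset.Icc 1 (n-1))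
    (σ₁ σ₂ : Equiv.Perm ℕ) (hD1 : DesSet n σ₁ ⊆ A) (hD2 : DesSet n σ₂ ⊆ A) :
    ∀ (l : List ℕ) (p : ℕ), List.Chain (· < ·) p l →
    (∀ x ∈ l, x ∈ A ∨ x = n) →
    (∀ x, (x ∈ A ∨ x = n) → p < x → x ∈ l) →
    blocksFrom σ₁ p l = blocksFrom σ₂ p l →
    ∀ i, p < i → i ≤ l.getLastD p → σ₁ i = σ₂ i := by
  intro l
  induction l with
  | nil => intro p _ _ _ _ i h1 h2; simp at h2; omega
  | cons q t ih =>
    intro p hch hmem hconv hblocks i hpi hile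
    rw [chain_cons_old] at hch
    simp only [blocksFrom, List.cons.injEq] at hblocks
    have hqn : q ≤ n := by
      rcases hmem q (List.mem_cons_self) with h | h
      · have := Finset.mem_Icc.1 (hA h); omega
      · omega
    have hbet : ∀ a ∈ A, p < a → a < q → False := by
      intro a ha hpa haq
      rcases List.mem_cons.1 (hconv a (Or.inl ha) hpa) with h | h
      · omega
      · exact absurd (chain_lt_mem hch.2 h) (by omega)
    rcases Nat.lt_or_ge q i with hqi | hqi
    · -- i in later blocks
      rw [List.getLastD_cons] at hile
      refine ih q hch.2 (fun x hx => hmem x (List.mem_cons_of_mem _ hx)) ?_ hblocks.2 i hqi hile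
      intro x hx hqx
      rcases List.mem_cons.1 (hconv x hx (lt_trans hch.1 hqx)) with h | h
      · omega
      · exact h
    · -- i in this block [p+1, q]
      have hm1 := sigma_mono_block (A := A) hD1 hqn hbet
      have hm2 := sigma_mono_block (A := A) hD2 hqn hbet
      have hkey := strictMonoOn_unique (q - (p+1)) (p+1) (fun x => σ₁ x) (fun x => σ₂ x)
        (by intro a b h1 h2 h3; exact hm1 a b h1 h2 (by omega))
        (by intro a b h1 h2 h3; exact hm2 a b h1 h2 (by omega))
        (by have : p + 1 + (q - (p+1)) = q := by omega
            rw [this]; exact hblocks.1)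
      exact hkey i (by omega) (by omega)



lemma peak_mem_iff {n : ℕ} {B : Finset ℕ} (hB : IsPeakSet n B) (m : ℕ) :
    m ∈ B ↔ 2 ≤ m ∧ m ≤ n - 1 ∧ m ∉ OddSetOf n B ∧ m - 1 ∉ OddSetOf n B ∧ m - 1 ∉ B := by
  obtain ⟨hB1, hB2⟩ := hB
  constructor
  · intro hm
    have hbd := Finset.mem_Icc.1 (hB1 hm)
    refine ⟨hbd.1, hbd.2, ?_, ?_, (hB2 m hm).1⟩
    · rw [mem_oddSetOf_iff]; push_neg; intro _; intro h; exact absurd hm h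
    · rw [mem_oddSetOf_iff]; push_neg; intro _ _; exact ⟨m, hm, rfl⟩
  · rintro ⟨h2, hn1, _, hm1A, hm1B⟩
    rw [mem_oddSetOf_iff] at hm1A
    push_neg at hm1A
    obtain ⟨b, hb, hbm⟩ := hm1A ⟨by omega, by omega⟩ hm1B
    have hbbd := Finset.mem_Icc.1 (hB1 hb)
    have : b = m := by omega
    rwa [← this]

lemma peak_unique {n : ℕ} {B₁ B₂ : Finset ℕ} (h1 : IsPeakSet n B₁) (h2 : IsPeakSet n B₂)
    (hOdd : OddSetOf n B₁ = OddSetOf n B₂) : B₁ = B₂ := by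
  have key : ∀ m, (m ∈ B₁ ↔ m ∈ B₂) := by
    intro m
    induction m using Nat.strong_induction_on with
    | _ m ih =>
      rcases Nat.eq_zero_or_pos m with hm | hm
      · subst hm
        rw [peak_mem_iff h1, peak_mem_iff h2]
        omega
      · have hprev := ih (m - 1) (by omega)
        rw [peak_mem_iff h1, peak_mem_iff h2, hOdd]
        tauto
  exact Finset.ext key

/-- The canonical peak set reconstructed from a cut set `A`. -/
def buildB (n : ℕ) (A : Finset ℕ) : ℕ → Bool
  | 0 => false
  | (m+1) => (decide (m + 1 ≤ n - 1) && decide (2 ≤ m + 1) && decide ((m + 1) ∉ A)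
      && decide (m ∉ A)) && !(buildB n A m)

def Bset (n : ℕ) (A : Finset ℕ) : Finset ℕ :=
  (Finset.Icc 2 (n-1)).filter (fun m => buildB n A m)

lemma buildB_succ_iff {n : ℕ} {A : Finset ℕ} {m : ℕ} :
    buildB n A (m+1) = true ↔
      (m + 1 ≤ n - 1 ∧ 2 ≤ m + 1 ∧ (m+1) ∉ A ∧ m ∉ A ∧ buildB n A m = false) := by
  simp [buildB]
  tauto

lemma mem_Bset_iff {n : ℕ} {A : Finset ℕ} {x : ℕ} :
    x ∈ Bset n A ↔ buildB n A x = true := by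
  rw [Bset, Finset.mem_filter]
  constructor
  · exact fun h => h.2
  · intro h
    refine ⟨?_, h⟩
    cases x with
    | zero => simp [buildB] at h
    | succ m =>
      rw [buildB_succ_iff] at h
      rw [Finset.mem_Icc]
      omega

lemma isPeakSet_Bset (n : ℕ) (A : Finset ℕ) : IsPeakSet n (Bset n A) := by
  constructor
  · exact Finset.filter_subset _ _
  · intro b hb
    rw [mem_Bset_iff] at hb
    cases b with
    | zero => simp [buildB] at hb
    | succ m =>
      have hbtrue := hb
      rw [buildB_succ_iff] at hb
      constructor
      · simp only [Nat.add_sub_cancel]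
        rw [mem_Bset_iff]
        intro h
        rw [hb.2.2.2.2] at h
        cases h
      · rw [mem_Bset_iff, buildB_succ_iff]
        rintro ⟨_, _, _, _, hf⟩
        rw [hbtrue] at hf
        cases hf

lemma buildB_run {n : ℕ} {A : Finset ℕ} {p q : ℕ} (hq : q ≤ n)
    (hbet : ∀ x, p < x → x < q → x ∉ A) (hp : p ∈ A ∨ p = 0)
    (hp0 : buildB n A p = false) :
    ∀ i, i ≤ q - p - 1 → (buildB n A (p+i) = true ↔ (i % 2 = 0 ∧ i ≠ 0)) := by
  intro i
  induction i with
  | zero => intro _; simp [hp0]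
  | succ i ih =>
    intro hile
    have hrec := ih (by omega)
    have heq : p + (i+1) = (p + i) + 1 := by omega
    rw [heq, buildB_succ_iff]
    rcases Nat.eq_zero_or_pos i with hi0 | hi0
    · subst hi0
      simp only [Nat.add_zero]
      constructor
      · rintro ⟨_, h2, _, hpA, _⟩
        rcases hp with hp' | hp'
        · exact absurd hp' hpA
        · omega
      · intro h; omega
    · have h1 : p + i ∉ A := hbet _ (by omega) (by omega)
      have h2 : p + i + 1 ∉ A := hbet _ (by omega) (by omega)
      have hb1 : p + i + 1 ≤ n - 1 := by omega
      have hfalse_iff : buildB n A (p+i) = false ↔ ¬(i % 2 = 0 ∧ i ≠ 0) := by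
        rw [← hrec]
        cases (buildB n A (p+i)) <;> simp
      constructor
      · rintro ⟨_, _, _, _, hf⟩
        rw [hfalse_iff] at hf
        omega
      · rintro ⟨hpar, _⟩
        exact ⟨hb1, by omega, h2, h1, hfalse_iff.2 (by omega)⟩

lemma buildB_cover {n : ℕ} {A : Finset ℕ} (hn : 1 ≤ n) (hA : A ⊆ Finset.Icc 1 (n-1)) :
    ∀ (l : List ℕ) (p : ℕ), List.Chain (· < ·) p l →
    (∀ x ∈ l, x ∈ A ∨ x = n) →
    (∀ x, (x ∈ A ∨ x = n) → p < x → x ∈ l) →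
    List.Chain (fun a b => Odd (b - a)) p l →
    (p ∈ A ∨ p = 0) → buildB n A p = false →
    ∀ x, p < x → x ≤ n - 1 → x ∉ A →
      (buildB n A x = true ∨ buildB n A (x+1) = true) := by
  intro l
  induction l with
  | nil =>
    intro p _ _ hconv _ _ _ x hpx hxn _
    rcases Nat.lt_or_ge p n with h | h
    · exact absurd (hconv n (Or.inr rfl) h) List.not_mem_nil
    · omega
  | cons q t ih =>
    intro p hch hmem hconv hodd hp hp0 x hpx hxn hxA
    rw [chain_cons_old] at hch hodd
    have hqA : q ∈ A ∨ q = n := hmem q (List.mem_cons_self)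
    have hqn : q ≤ n := by
      rcases hqA with h | h
      · have := Finset.mem_Icc.1 (hA h); omega
      · omega
    have hbet : ∀ y, p < y → y < q → y ∉ A := by
      intro y hpy hyq hy
      rcases List.mem_cons.1 (hconv y (Or.inl hy) hpy) with h | h
      · omega
      · exact absurd (chain_lt_mem hch.2 h) (by omega)
    have hrun := buildB_run hqn hbet hp hp0
    rcases Nat.lt_or_ge x q with hxq | hxq
    · -- x strictly inside the gap (p, q)
      set i := x - p with hi
      have hix : x = p + i := by omega
      obtain ⟨c, hc⟩ := hodd.1
      rcases Nat.even_or_odd i with he | ho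
      · left
        rw [hix]
        rw [hrun i (by omega)]
        obtain ⟨d, hd⟩ := he
        omega
      · right
        have hle : i + 1 ≤ q - p - 1 := by
          obtain ⟨d, hd⟩ := ho
          omega
        have : x + 1 = p + (i+1) := by omega
        rw [this, hrun (i+1) hle]
        obtain ⟨d, hd⟩ := ho
        omega
    · rcases Nat.eq_or_lt_of_le hxq with hxq' | hxq'
      · -- x = q impossible
        rcases hqA with h | h
        · rw [hxq'] at h; exact absurd h hxA
        · omega
      · -- x beyond q : recurse
        have hqA' : q ∈ A := by
          rcases hqA with h | h
          · exact h
          · omega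
        have hq0 : buildB n A q = false := by
          cases q with
          | zero => rfl
          | succ m =>
            by_contra hcon
            rw [Bool.not_eq_false, buildB_succ_iff] at hcon
            exact hcon.2.2.1 hqA'
        refine ih q hch.2 (fun y hy => hmem y (List.mem_cons_of_mem _ hy)) ?_ hodd.2
          (Or.inl hqA') hq0 x hxq' hxn hxA
        intro y hy hqy
        rcases List.mem_cons.1 (hconv y hy (lt_trans hch.1 hqy)) with h | h
        · omega
        · exact h

lemma oddSetOf_Bset {n : ℕ} {A : Finset ℕ} (hn : 1 ≤ n) (hA : A ⊆ Finset.Icc 1 (n-1))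
    (hcover : ∀ x, 0 < x → x ≤ n - 1 → x ∉ A →
      (buildB n A x = true ∨ buildB n A (x+1) = true)) :
    OddSetOf n (Bset n A) = A := by
  ext x
  rw [mem_oddSetOf_iff]
  constructor
  · rintro ⟨⟨hx1, hx2⟩, hxB, hxB1⟩
    by_contra hxA
    rcases hcover x (by omega) hx2 hxA with h | h
    · exact hxB (mem_Bset_iff.2 h)
    · refine hxB1 (x+1) (mem_Bset_iff.2 h) ?_
      omega
  · intro hxA
    have hbd := Finset.mem_Icc.1 (hA hxA)
    refine ⟨⟨hbd.1, hbd.2⟩, ?_, ?_⟩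
    · intro hxB
      rw [mem_Bset_iff] at hxB
      cases x with
      | zero => simp [buildB] at hxB
      | succ m => exact (buildB_succ_iff.1 hxB).2.2.1 hxA
    · intro b hb hbx
      rw [mem_Bset_iff] at hb
      cases b with
      | zero => simp [buildB] at hb
      | succ m =>
        rw [buildB_succ_iff] at hb
        have : m = x := by omega
        subst this
        exact hb.2.2.2.1 hxA



def cuts : ℕ → List (Finset ℕ) → List ℕ
  | _, [] => []
  | p, b :: t => (p + b.card) :: cuts (p + b.card) t

lemma chain_lt_cuts : ∀ (φ : List (Finset ℕ)) (p : ℕ), (∀ b ∈ φ, b.Nonempty) →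
    List.Chain (· < ·) p (cuts p φ) := by
  intro φ
  induction φ with
  | nil => intro p _; exact List.Chain.nil
  | cons b t ih =>
    intro p hne
    refine List.Chain.cons ?_ (ih _ (fun c hc => hne c (List.mem_cons_of_mem _ hc)))
    have := Finset.card_pos.2 (hne b (List.mem_cons_self))
    omega

lemma chain_odd_cuts : ∀ (φ : List (Finset ℕ)) (p : ℕ), (∀ b ∈ φ, Odd b.card) →
    List.Chain (fun a b => Odd (b - a)) p (cuts p φ) := by
  intro φ
  induction φ with
  | nil => intro p _; exact List.Chain.nil
  | cons b t ih =>
    intro p hodd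
    refine List.Chain.cons ?_ (ih _ (fun c hc => hodd c (List.mem_cons_of_mem _ hc)))
    have := hodd b (List.mem_cons_self)
    simpa using this

lemma getLastD_cuts : ∀ (φ : List (Finset ℕ)) (p : ℕ),
    (cuts p φ).getLastD p = p + (φ.map Finset.card).sum := by
  intro φ
  induction φ with
  | nil => intro p; simp [cuts]
  | cons b t ih =>
    intro p
    rw [cuts, List.getLastD_cons, ih]
    simp
    omega

lemma mem_cuts_le : ∀ (φ : List (Finset ℕ)) (p x : ℕ), x ∈ cuts p φ →
    x ≤ p + (φ.map Finset.card).sum := by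
  intro φ
  induction φ with
  | nil => intro p x hx; simp [cuts] at hx
  | cons b t ih =>
    intro p x hx
    rcases List.mem_cons.1 hx with h | h
    · simp; omega
    · have := ih _ x h; simp at this ⊢; omega

lemma card_foldr_union : ∀ (φ : List (Finset ℕ)), φ.Pairwise (fun B C => Disjoint B C) →
    (φ.foldr (· ∪ ·) ∅).card = (φ.map Finset.card).sum := by
  intro φ
  induction φ with
  | nil => simp
  | cons b t ih =>
    intro hp
    rw [List.pairwise_cons] at hp
    have hdisj : Disjoint b (t.foldr (· ∪ ·) ∅) := by
      clear ih
      induction t with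
      | nil => simp
      | cons c s ihs =>
        simp only [List.foldr_cons]
        rw [Finset.disjoint_union_right]
        exact ⟨hp.1 c (List.mem_cons_self),
          ihs ⟨fun d hd => hp.1 d (List.mem_cons_of_mem _ hd), hp.2.of_cons⟩⟩
    simp only [List.foldr_cons, List.map_cons, List.sum_cons]
    rw [Finset.card_union_of_disjoint hdisj, ih hp.2]

lemma mem_foldr_union_iff : ∀ (φ : List (Finset ℕ)) (x : ℕ),
    x ∈ φ.foldr (· ∪ ·) ∅ ↔ ∃ b ∈ φ, x ∈ b := by
  intro φ x
  induction φ with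
  | nil => simp
  | cons b t ih => simp [ih]



/-- image of an index interval through list lookup equals the toFinset. -/
lemma image_Icc_getD (l : List ℕ) (p : ℕ) :
    (Finset.Icc (p+1) (p + l.length)).image (fun j => l.getD (j - p - 1) 0) = l.toFinset := by
  ext y
  simp only [Finset.mem_image, Finset.mem_Icc, List.mem_toFinset]
  constructor
  · rintro ⟨j, ⟨hj1, hj2⟩, rfl⟩
    have hlt : j - p - 1 < l.length := by omega
    rw [List.getD_eq_getElem l 0 hlt]
    exact List.getElem_mem hlt
  · intro hy
    obtain ⟨k, hk, hky⟩ := List.mem_iff_getElem.1 hy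
    refine ⟨p + 1 + k, ⟨by omega, by omega⟩, ?_⟩
    have : p + 1 + k - p - 1 = k := by omega
    rw [this, List.getD_eq_getElem l 0 hk, hky]

lemma blocksFrom_cuts (σ : Equiv.Perm ℕ) : ∀ (φ : List (Finset ℕ)) (p : ℕ),
    (∀ j, p < j → j ≤ p + (φ.map Finset.card).sum →
      σ j = ((φ.map (fun b => Finset.sort b (· ≤ ·))).flatten).getD (j - p - 1) 0) →
    blocksFrom σ p (cuts p φ) = φ := by
  intro φ
  induction φ with
  | nil => intro p _; rfl
  | cons b t ih =>
    intro p hσ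
    have hlen : (Finset.sort b (· ≤ ·)).length = b.card := Finset.length_sort _
    simp only [cuts, blocksFrom, List.cons.injEq]
    constructor
    · have himg : ∀ j ∈ Finset.Icc (p+1) (p + b.card), σ j
          = (Finset.sort b (· ≤ ·)).getD (j - p - 1) 0 := by
        intro j hj
        rw [Finset.mem_Icc] at hj
        rw [hσ j hj.1 (by simp; omega)]
        simp only [List.map_cons, List.flatten_cons]
        exact List.getD_append _ _ _ _ (by omega)
      rw [Finset.image_congr (fun j hj => himg j hj)]
      have := image_Icc_getD (Finset.sort b (· ≤ ·)) p
      rw [hlen] at this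
      rw [this, Finset.sort_toFinset]
    · refine ih (p + b.card) ?_
      intro j hj1 hj2
      rw [hσ j (by omega) (by simp at hj2 ⊢; omega)]
      simp only [List.map_cons, List.flatten_cons]
      rw [List.getD_append_right _ _ _ _ (by omega)]
      congr 1
      omega

lemma flatten_sorted_between : ∀ (φ : List (Finset ℕ)) (p k : ℕ),
    k + 1 < ((φ.map (fun b => Finset.sort b (· ≤ ·))).flatten).length →
    (p + k + 1) ∉ cuts p φ →
    ((φ.map (fun b => Finset.sort b (· ≤ ·))).flatten).getD k 0
      ≤ ((φ.map (fun b => Finset.sort b (· ≤ ·))).flatten).getD (k+1) 0 := by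
  intro φ
  induction φ with
  | nil => intro p k h _; simp at h
  | cons b t ih =>
    intro p k hlen hcut
    have hlenb : (Finset.sort b (· ≤ ·)).length = b.card := Finset.length_sort _
    simp only [List.map_cons, List.flatten_cons] at hlen ⊢
    rcases Nat.lt_or_ge (k+1) b.card with h | h
    · rw [List.getD_append _ _ _ _ (by omega), List.getD_append _ _ _ _ (by omega)]
      rw [List.getD_eq_getElem _ 0 (by omega), List.getD_eq_getElem _ 0 (by omega)]
      have hs : List.Pairwise (· ≤ ·) (Finset.sort b (· ≤ ·)) := Finset.pairwise_sort _ _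
      exact List.pairwise_iff_getElem.1 hs k (k+1) (by omega) (by omega) (by omega)
    · rcases Nat.eq_or_lt_of_le h with h' | h'
      · exfalso
        apply hcut
        rw [cuts]
        have : p + k + 1 = p + b.card := by omega
        rw [this]
        exact List.mem_cons_self
      · rw [List.getD_append_right _ _ _ _ (by omega),
          List.getD_append_right _ _ _ _ (by omega)]
        have e1 : k - (Finset.sort b (· ≤ ·)).length = k - b.card := by rw [hlenb]
        have e2 : k + 1 - (Finset.sort b (· ≤ ·)).length = (k - b.card) + 1 := by
          rw [hlenb]; omega
        rw [e1, e2]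
        refine ih (p + b.card) (k - b.card) ?_ ?_
        · rw [List.length_append, hlenb] at hlen
          omega
        · intro hmem
          apply hcut
          rw [cuts]
          refine List.mem_cons_of_mem _ ?_
          have : p + b.card + (k - b.card) + 1 = p + k + 1 := by omega
          rwa [this] at hmem



lemma exists_perm (n : ℕ) (L : List ℕ) (hlen : L.length = n) (hnd : L.Nodup)
    (hmem : ∀ x, x ∈ L ↔ x ∈ Finset.Icc 1 n) :
    ∃ σ : Equiv.Perm ℕ, (∀ i, 1 ≤ i → i ≤ n → σ i = L.getD (i-1) 0) ∧ IsPermOn n σ := by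
  classical
  set f : ℕ → ℕ := fun i => if 1 ≤ i ∧ i ≤ n then L.getD (i-1) 0 else i with hf
  have hval : ∀ i, 1 ≤ i → i ≤ n → f i = L.getD (i-1) 0 := by
    intro i h1 h2; simp only [hf]; rw [if_pos ⟨h1, h2⟩]
  have hvalElem : ∀ i (h1 : 1 ≤ i) (h2 : i ≤ n), f i = L[i-1]'(by omega) := by
    intro i h1 h2
    rw [hval i h1 h2, List.getD_eq_getElem L 0 (by omega)]
  have hrange : ∀ i, 1 ≤ i → i ≤ n → f i ∈ Finset.Icc 1 n := by
    intro i h1 h2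
    rw [hvalElem i h1 h2]
    exact (hmem _).1 (List.getElem_mem _)
  have hfix : ∀ i, ¬(1 ≤ i ∧ i ≤ n) → f i = i := by
    intro i h; simp only [hf]; rw [if_neg h]
  have hinj : Function.Injective f := by
    intro i j hij
    by_cases hi : 1 ≤ i ∧ i ≤ n <;> by_cases hj : 1 ≤ j ∧ j ≤ n
    · rw [hvalElem i hi.1 hi.2, hvalElem j hj.1 hj.2] at hij
      have := (hnd.getElem_inj_iff).1 hij
      omega
    · exfalso
      rw [hfix j hj] at hij
      have := hrange i hi.1 hi.2
      rw [hij] at this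
      rw [Finset.mem_Icc] at this
      exact hj ⟨this.1, this.2⟩
    · exfalso
      rw [hfix i hi] at hij
      have := hrange j hj.1 hj.2
      rw [← hij] at this
      rw [Finset.mem_Icc] at this
      exact hi ⟨this.1, this.2⟩
    · rw [hfix i hi, hfix j hj] at hij; exact hij
  have hsurj : Function.Surjective f := by
    intro y
    by_cases hy : 1 ≤ y ∧ y ≤ n
    · have : y ∈ L := (hmem y).2 (Finset.mem_Icc.2 hy)
      obtain ⟨k, hk, hky⟩ := List.mem_iff_getElem.1 this
      refine ⟨k + 1, ?_⟩
      rw [hvalElem (k+1) (by omega) (by omega)]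
      simpa using hky
    · exact ⟨y, hfix y hy⟩
  refine ⟨Equiv.ofBijective f ⟨hinj, hsurj⟩, ?_, ?_⟩
  · intro i h1 h2; exact hval i h1 h2
  · intro i hi
    rw [Finset.mem_Icc] at hi
    exact hfix i (by omega)

lemma sort_filter_cuts (n : ℕ) (hn : 1 ≤ n) (φ : List (Finset ℕ))
    (hne : ∀ b ∈ φ, b.Nonempty) (hsum : (φ.map Finset.card).sum = n) :
    ((Finset.Icc 1 (n-1)).filter (fun x => x ∈ cuts 0 φ)).sort (· ≤ ·) ++ [n] = cuts 0 φ := by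
  classical
  set l := cuts 0 φ with hl
  have hch : List.Chain (· < ·) 0 l := chain_lt_cuts φ 0 hne
  have hlast : l.getLastD 0 = n := by rw [hl, getLastD_cuts, hsum]; omega
  have hlne : l ≠ [] := by
    intro h
    rw [h] at hlast
    simp at hlast
    omega
  have hsplit : l.dropLast ++ [n] = l := by
    have h1 := List.dropLast_append_getLast hlne
    have h2 : l.getLast hlne = n := by
      rw [← hlast, List.getLastD_eq_getLast?]
      rw [List.getLast?_eq_getLast hlne]
      rfl
    rw [← h2]
    exact h1
  have hpw : List.Pairwise (· < ·) l := ((chain_iff_pairwise_old).1 hch).of_cons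
  have hpw' : List.Pairwise (· < ·) (l.dropLast ++ [n]) := by rw [hsplit]; exact hpw
  rw [List.pairwise_append] at hpw'
  have hdl_lt : ∀ x ∈ l.dropLast, x < n := by
    intro x hx
    exact hpw'.2.2 x hx n (List.mem_singleton_self n)
  have hsorted : List.Pairwise (· ≤ ·) l.dropLast :=
    hpw'.1.imp (fun h => le_of_lt h)
  have hnodup : l.dropLast.Nodup := hpw'.1.nodup
  have htf : l.dropLast.toFinset = (Finset.Icc 1 (n-1)).filter (fun x => x ∈ cuts 0 φ) := by
    ext x
    rw [List.mem_toFinset, Finset.mem_filter, Finset.mem_Icc]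
    constructor
    · intro hx
      have hx1 : x ∈ l := by rw [← hsplit]; exact List.mem_append_left _ hx
      have := chain_lt_mem hch hx1
      have := hdl_lt x hx
      exact ⟨⟨by omega, by omega⟩, hx1⟩
    · rintro ⟨⟨hx1, hx2⟩, hx3⟩
      have : x ∈ l.dropLast ++ [n] := by rw [hsplit]; exact hx3
      rcases List.mem_append.1 this with h | h
      · exact h
      · simp at h; omega
  rw [← htf]
  rw [(List.toFinset_sort (· ≤ ·) hnodup).2 hsorted]
  exact hsplit

lemma des_subset_cuts (n : ℕ) (hn : 1 ≤ n) (φ : List (Finset ℕ)) (σ : Equiv.Perm ℕ)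
    (hsum : (φ.map Finset.card).sum = n)
    (hσ : ∀ i, 1 ≤ i → i ≤ n →
      σ i = ((φ.map (fun b => Finset.sort b (· ≤ ·))).flatten).getD (i-1) 0) :
    DesSet n σ ⊆ (Finset.Icc 1 (n-1)).filter (fun x => x ∈ cuts 0 φ) := by
  classical
  intro i hi
  rw [DesSet, Finset.mem_filter, Finset.mem_Icc] at hi
  obtain ⟨⟨hi1, hi2⟩, hdes⟩ := hi
  rw [Finset.mem_filter, Finset.mem_Icc]
  refine ⟨⟨hi1, hi2⟩, ?_⟩
  by_contra hcut
  have hlen : ((φ.map (fun b => Finset.sort b (· ≤ ·))).flatten).length = n := by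
    rw [List.length_flatten, List.map_map]
    rw [show (List.length ∘ (fun b => Finset.sort b (· ≤ ·))) = Finset.card by
      funext b; exact Finset.length_sort _]
    exact hsum
  have hle := flatten_sorted_between φ 0 (i-1) (by omega) (by
    have : 0 + (i-1) + 1 = i := by omega
    rw [this]; exact hcut)
  have e1 : i - 1 + 1 = i := by omega
  rw [e1] at hle
  have hv1 := hσ i hi1 (by omega)
  have hv2 := hσ (i+1) (by omega) (by omega)
  have e2 : i + 1 - 1 = i := by omega
  rw [e2] at hv2
  rw [hv1, hv2] at hdes
  omega

end Aux

/-- The map `(B,σ) ↦ SetComp(Odd(B),σ)` is a bijection from enriched standard pairs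
(`B` a peak set, `σ` a permutation of `[n]` with `Des(σ) ⊆ Odd(B)`) onto odd set
compositions of `[n]`. -/
theorem stmt2 (n : ℕ) (hn : 1 ≤ n) :
    Set.BijOn (fun p : Finset ℕ × Equiv.Perm ℕ => setCompBlocks n (OddSetOf n p.1) p.2)
      {p : Finset ℕ × Equiv.Perm ℕ |
        IsPeakSet n p.1 ∧ IsPermOn n p.2 ∧ DesSet n p.2 ⊆ OddSetOf n p.1}
      {φ : List (Finset ℕ) | IsSetComposition n φ ∧ ∀ B ∈ φ, Odd B.card} := by
  classical
  refine ⟨?_, ?_, ?_⟩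
  · -- MapsTo
    rintro ⟨B, σ⟩ ⟨hB, hσ, hDes⟩
    have hAsub : OddSetOf n B ⊆ Finset.Icc 1 (n-1) := oddSetOf_subset n B
    have hch := chain_sort_append n (OddSetOf n B) hAsub hn
    simp only [Set.mem_setOf_eq]
    rw [setCompBlocks_eq]
    refine ⟨⟨?_, ?_, ?_⟩, ?_⟩
    · exact nonempty_blocksFrom σ _ 0 hch
    · exact pairwise_disjoint_blocksFrom σ _ 0 hch
    · rw [foldr_union_blocksFrom σ _ 0 hch, getLastD_sort_append]
      exact perm_image_Icc hσ
    · intro b hb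
      refine odd_card_blocksFrom σ hB _ 0 hch ?_ ?_ (Or.inr rfl) b hb
      · intro x hx; exact (mem_sort_append n _).1 hx
      · intro x hx _; exact (mem_sort_append n _).2 hx
  · -- InjOn
    rintro ⟨B₁, σ₁⟩ ⟨hB₁, hσ₁, hD₁⟩ ⟨B₂, σ₂⟩ ⟨hB₂, hσ₂, hD₂⟩ heq
    simp only at heq
    rw [setCompBlocks_eq, setCompBlocks_eq] at heq
    have hA1 : OddSetOf n B₁ ⊆ Finset.Icc 1 (n-1) := oddSetOf_subset n B₁
    have hA2 : OddSetOf n B₂ ⊆ Finset.Icc 1 (n-1) := oddSetOf_subset n B₂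
    have hch1 := chain_sort_append n (OddSetOf n B₁) hA1 hn
    have hch2 := chain_sort_append n (OddSetOf n B₂) hA2 hn
    have hleq := list_eq_of_blocks_eq σ₁ σ₂ _ _ 0 hch1 hch2 heq
    have hAeq : OddSetOf n B₁ = OddSetOf n B₂ := by
      ext x
      constructor <;> intro hx
      · have hx1 : x ∈ (OddSetOf n B₁).sort (· ≤ ·) ++ [n] :=
          (mem_sort_append n _).2 (Or.inl hx)
        rw [hleq] at hx1
        rcases (mem_sort_append n _).1 hx1 with h | h
        · exact h
        · have := Finset.mem_Icc.1 (hA1 hx); omega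
      · have hx1 : x ∈ (OddSetOf n B₂).sort (· ≤ ·) ++ [n] :=
          (mem_sort_append n _).2 (Or.inl hx)
        rw [← hleq] at hx1
        rcases (mem_sort_append n _).1 hx1 with h | h
        · exact h
        · have := Finset.mem_Icc.1 (hA2 hx); omega
    have hBeq : B₁ = B₂ := peak_unique hB₁ hB₂ hAeq
    have hσeq : σ₁ = σ₂ := by
      apply Equiv.ext
      intro i
      by_cases hi : 1 ≤ i ∧ i ≤ n
      · rw [← hleq] at heq
        have hgl : ((OddSetOf n B₁).sort (· ≤ ·) ++ [n]).getLastD 0 = n :=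
          getLastD_sort_append n _
        refine sigma_eq_on hA1 σ₁ σ₂ hD₁ ?_ _ 0 hch1 ?_ ?_ heq i (by omega) (by rw [hgl]; omega)
        · rw [hAeq]; exact hD₂
        · intro x hx; exact (mem_sort_append n _).1 hx
        · intro x hx _; exact (mem_sort_append n _).2 hx
      · rw [hσ₁ i (by rw [Finset.mem_Icc]; omega), hσ₂ i (by rw [Finset.mem_Icc]; omega)]
    simp only [Prod.mk.injEq]
    exact ⟨hBeq, hσeq⟩
  · -- SurjOn
    rintro φ ⟨⟨hne, hdisj, hunion⟩, hodd⟩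
    have hsum : (φ.map Finset.card).sum = n := by
      rw [← card_foldr_union φ hdisj, hunion, Nat.card_Icc]
      omega
    have hLlen : ((φ.map (fun b => Finset.sort b (· ≤ ·))).flatten).length = n := by
      rw [List.length_flatten, List.map_map]
      rw [show (List.length ∘ (fun b => Finset.sort b (· ≤ ·))) = Finset.card by
        funext b; exact Finset.length_sort _]
      exact hsum
    have hLnd : ((φ.map (fun b => Finset.sort b (· ≤ ·))).flatten).Nodup := by
      rw [List.nodup_flatten]
      constructor
      · intro l hl
        obtain ⟨b, hb, rfl⟩ := List.mem_map.1 hl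
        exact Finset.sort_nodup _ _
      · rw [List.pairwise_map]
        refine hdisj.imp ?_
        intro b c hbc x hxb hxc
        rw [Finset.mem_sort] at hxb hxc
        exact Finset.disjoint_left.1 hbc hxb hxc
    have hLmem : ∀ x, x ∈ (φ.map (fun b => Finset.sort b (· ≤ ·))).flatten ↔ x ∈ Finset.Icc 1 n := by
      intro x
      rw [List.mem_flatten, ← hunion, mem_foldr_union_iff]
      constructor
      · rintro ⟨l, hl, hx⟩
        obtain ⟨b, hb, rfl⟩ := List.mem_map.1 hl
        exact ⟨b, hb, (Finset.mem_sort _).1 hx⟩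
      · rintro ⟨b, hb, hx⟩
        exact ⟨_, List.mem_map_of_mem hb, (Finset.mem_sort _).2 hx⟩
    obtain ⟨σ, hσval, hσperm⟩ := exists_perm n _ hLlen hLnd hLmem
    set A := (Finset.Icc 1 (n-1)).filter (fun x => x ∈ cuts 0 φ) with hAdef
    have hAsub : A ⊆ Finset.Icc 1 (n-1) := Finset.filter_subset _ _
    have hsort : A.sort (· ≤ ·) ++ [n] = cuts 0 φ := sort_filter_cuts n hn φ hne hsum
    have hchlt : List.Chain (· < ·) 0 (cuts 0 φ) := chain_lt_cuts φ 0 hne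
    have hchodd : List.Chain (fun a b => Odd (b - a)) 0 (cuts 0 φ) := chain_odd_cuts φ 0 hodd
    have hmeml : ∀ x ∈ cuts 0 φ, x ∈ A ∨ x = n := by
      intro x hx
      rw [← hsort] at hx
      exact (mem_sort_append n A).1 hx
    have hconvl : ∀ x, (x ∈ A ∨ x = n) → 0 < x → x ∈ cuts 0 φ := by
      intro x hx _
      rw [← hsort]
      exact (mem_sort_append n A).2 hx
    have hcover := buildB_cover hn hAsub (cuts 0 φ) 0 hchlt hmeml hconvl hchodd (Or.inr rfl) rfl
    have hOddA : OddSetOf n (Bset n A) = A := oddSetOf_Bset hn hAsub hcover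
    refine ⟨(Bset n A, σ), ⟨isPeakSet_Bset n A, hσperm, ?_⟩, ?_⟩
    · rw [hOddA]
      exact des_subset_cuts n hn φ σ hsum (fun i h1 h2 => hσval i h1 h2)
    · show setCompBlocks n (OddSetOf n (Bset n A)) σ = φ
      rw [hOddA, setCompBlocks_eq, hsort]
      refine blocksFrom_cuts σ φ 0 ?_
      intro j hj1 hj2
      rw [hσval j (by omega) (by omega)]
      norm_num
end

section
/- Let ≤_P be a partial order on [n] and let γ and σ be permutations of [n]. Then for every map u : [n] → ℕ₊, #{f ∈ 𝒜(P,γ) : f(σ⁻¹(i)) = u(i) for all i ∈ [n]} = Σ_{w ∈ ℒ(P)} #{f ∈ 𝒜(w,γ) : f(σ⁻¹(i)) = u(i) for all i ∈ [n]}; that is, the fundamental function in noncommuting variables satisfies F_{(P,γ,σ)} = Σ_{w ∈ ℒ(P)} F_{(w,γ,σ)}. -/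
/-- `w` is a linear extension of the partial order `r` on `[n]`: `w` is a bijection of
`[n]` (written as the list `(w 1, …, w n)`) such that `w i <_P w j` implies `i < j`. -/
def IsLinExt (n : ℕ) (r : ℕ → ℕ → Prop) (w : Equiv.Perm ℕ) : Prop :=
  IsPermOn n w ∧
    ∀ i ∈ Finset.Icc 1 n, ∀ j ∈ Finset.Icc 1 n, r (w i) (w j) → w i ≠ w j → i < j

/-- The set `𝒜(P,γ)` of `(P,γ)`-partitions: maps `f : [n] → ℕ₊` (normalized to `1`
outside `[n]`) such that `a ≤_P b` implies `f a ≤ f b`, and `f a < f b` if moreover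
`γ a > γ b`. -/
def OrdPart (n : ℕ) (r : ℕ → ℕ → Prop) (γ : Equiv.Perm ℕ) : Set (ℕ → ℕ+) :=
  {f | (∀ j, j ∉ Finset.Icc 1 n → f j = 1) ∧
    ∀ a ∈ Finset.Icc 1 n, ∀ b ∈ Finset.Icc 1 n, r a b →
      f a ≤ f b ∧ (γ b < γ a → f a < f b)}

/-- The set `𝒜(w,γ)` for a linear extension `w`: maps `f : [n] → ℕ₊` (normalized to `1`
outside `[n]`) with `f (w i) ≤ f (w (i+1))` for `1 ≤ i ≤ n−1`, and strict whenever
`γ (w i) > γ (w (i+1))`. -/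
def AofChain (n : ℕ) (w γ : Equiv.Perm ℕ) : Set (ℕ → ℕ+) :=
  {f | (∀ j, j ∉ Finset.Icc 1 n → f j = 1) ∧
    ∀ i ∈ Finset.Icc 1 (n - 1),
      f (w i) ≤ f (w (i + 1)) ∧ (γ (w (i + 1)) < γ (w i) → f (w i) < f (w (i + 1)))}

namespace Stmt3Aux


def key (f : ℕ → ℕ+) (γ : Equiv.Perm ℕ) (x : ℕ) : ℕ+ ×ₗ ℕ := toLex (f x, γ x)

lemma key_injective (f : ℕ → ℕ+) (γ : Equiv.Perm ℕ) : Function.Injective (key f γ) := by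
  intro x y h
  have : γ x = γ y := congrArg (fun p => (ofLex p).2) h
  exact γ.injective this

lemma key_lt_iff {f : ℕ → ℕ+} {γ : Equiv.Perm ℕ} {x y : ℕ} :
    key f γ x < key f γ y ↔ f x < f y ∨ (f x = f y ∧ γ x < γ y) :=
  Prod.Lex.lt_iff

lemma key_lt_of {f : ℕ → ℕ+} {γ : Equiv.Perm ℕ} {x y : ℕ} (h1 : f x ≤ f y)
    (h2 : γ y < γ x → f x < f y) (h3 : x ≠ y) : key f γ x < key f γ y := by
  rcases lt_or_eq_of_le h1 with h | h
  · exact key_lt_iff.2 (Or.inl h)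
  · refine key_lt_iff.2 (Or.inr ⟨h, ?_⟩)
    rcases lt_trichotomy (γ x) (γ y) with h' | h' | h'
    · exact h'
    · exact absurd (γ.injective h') h3
    · exact absurd (h2 h') (by rw [h]; exact lt_irrefl _)

lemma of_key_lt {f : ℕ → ℕ+} {γ : Equiv.Perm ℕ} {x y : ℕ}
    (h : key f γ x < key f γ y) :
    f x ≤ f y ∧ (γ y < γ x → f x < f y) := by
  rcases key_lt_iff.1 h with h | ⟨h1, h2⟩
  · exact ⟨le_of_lt h, fun _ => h⟩
  · exact ⟨le_of_eq h1, fun hd => absurd hd (by omega)⟩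

lemma permOn_mem {n : ℕ} {σ : Equiv.Perm ℕ} (hσ : IsPermOn n σ) {i : ℕ}
    (h : i ∈ Finset.Icc 1 n) : σ i ∈ Finset.Icc 1 n := by
  by_contra hc
  have h2 := hσ _ hc
  exact hc (by rw [σ.injective h2]; exact h)

lemma permOn_symm {n : ℕ} {σ : Equiv.Perm ℕ} (hσ : IsPermOn n σ) : IsPermOn n σ.symm := by
  intro i hi
  have h2 := hσ i hi
  exact σ.injective (by rw [Equiv.apply_symm_apply, h2])

/-- Monotonicity of the key along a chain. -/
lemma chain_key_lt {n : ℕ} {w γ : Equiv.Perm ℕ} {f : ℕ → ℕ+} (hf : f ∈ AofChain n w γ) :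
    ∀ j i, 1 ≤ i → i < j → j ≤ n → key f γ (w i) < key f γ (w j) := by
  intro j
  induction j with
  | zero => intro i h1 h2 h3; omega
  | succ j ih =>
    intro i h1 h2 h3
    have hstep : key f γ (w j) < key f γ (w (j + 1)) := by
      have hj : j ∈ Finset.Icc 1 (n - 1) := by rw [Finset.mem_Icc]; omega
      obtain ⟨hle, hlt⟩ := hf.2 j hj
      exact key_lt_of hle hlt (fun he => by have := w.injective he; omega)
    have hij : i ≤ j := Nat.lt_succ_iff.mp h2
    rcases eq_or_lt_of_le hij with h | h
    · rw [h]; exact hstep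
    · exact lt_trans (ih i h1 h (by omega)) hstep

/-- Counting lemma: the number of elements with smaller key than `w i` is `i - 1`. -/
lemma count_lt {n : ℕ} {w : Equiv.Perm ℕ} (hw : IsPermOn n w) {f : ℕ → ℕ+} {γ : Equiv.Perm ℕ}
    (hm : ∀ i j, 1 ≤ i → i < j → j ≤ n → key f γ (w i) < key f γ (w j))
    {i : ℕ} (hi : i ∈ Finset.Icc 1 n) :
    ((Finset.Icc 1 n).filter (fun y => key f γ y < key f γ (w i))).card = i - 1 := by
  classical
  rw [Finset.mem_Icc] at hi
  have himg : (Finset.Icc 1 n).filter (fun y => key f γ y < key f γ (w i))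
      = (Finset.Icc 1 (i - 1)).image w := by
    ext y
    simp only [Finset.mem_filter, Finset.mem_image, Finset.mem_Icc]
    constructor
    · rintro ⟨⟨hy1, hy2⟩, hlt⟩
      refine ⟨w.symm y, ?_, w.apply_symm_apply y⟩
      have hys := permOn_mem (permOn_symm hw) (Finset.mem_Icc.2 ⟨hy1, hy2⟩)
      rw [Finset.mem_Icc] at hys
      have hni : ¬ i ≤ w.symm y := by
        intro hle
        rcases eq_or_lt_of_le hle with he | hl
        · rw [he, w.apply_symm_apply] at hlt
          exact lt_irrefl _ hlt
        · have h2 := hm i (w.symm y) hi.1 hl hys.2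
          rw [w.apply_symm_apply] at h2
          exact lt_asymm h2 hlt
      omega
    · rintro ⟨j, ⟨hj1, hj2⟩, rfl⟩
      have hjI : j ∈ Finset.Icc 1 n := by rw [Finset.mem_Icc]; omega
      have := permOn_mem hw hjI
      rw [Finset.mem_Icc] at this
      exact ⟨this, hm j i hj1 (by omega) hi.2⟩
  rw [himg, Finset.card_image_of_injective _ w.injective, Nat.card_Icc]
  omega

/-- Uniqueness of the key-sorting permutation. -/
lemma unique_w {n : ℕ} {w w' : Equiv.Perm ℕ} (hw : IsPermOn n w) (hw' : IsPermOn n w')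
    {f : ℕ → ℕ+} {γ : Equiv.Perm ℕ}
    (hm : ∀ i j, 1 ≤ i → i < j → j ≤ n → key f γ (w i) < key f γ (w j))
    (hm' : ∀ i j, 1 ≤ i → i < j → j ≤ n → key f γ (w' i) < key f γ (w' j)) :
    w = w' := by
  classical
  have main : ∀ (v v' : Equiv.Perm ℕ), IsPermOn n v → IsPermOn n v' →
      (∀ i j, 1 ≤ i → i < j → j ≤ n → key f γ (v i) < key f γ (v j)) →
      (∀ i j, 1 ≤ i → i < j → j ≤ n → key f γ (v' i) < key f γ (v' j)) →
      ∀ i ∈ Finset.Icc 1 n, ¬ key f γ (v i) < key f γ (v' i) := by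
    intro v v' hv hv' hmv hmv' i hi hlt
    have h1 := count_lt hv hmv hi
    have h2 := count_lt hv' hmv' hi
    have hcard : ((Finset.Icc 1 n).filter (fun y => key f γ y < key f γ (v i))).card
        < ((Finset.Icc 1 n).filter (fun y => key f γ y < key f γ (v' i))).card := by
      apply Finset.card_lt_card
      constructor
      · intro y hy
        rw [Finset.mem_filter] at hy ⊢
        exact ⟨hy.1, lt_trans hy.2 hlt⟩
      · intro hsub
        have hvi : v i ∈ (Finset.Icc 1 n).filter (fun y => key f γ y < key f γ (v' i)) := by
          rw [Finset.mem_filter]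
          exact ⟨permOn_mem hv hi, hlt⟩
        have := hsub hvi
        rw [Finset.mem_filter] at this
        exact lt_irrefl _ this.2
    rw [Finset.mem_Icc] at hi
    omega
  ext i
  by_cases hi : i ∈ Finset.Icc 1 n
  · have h1 := main w w' hw hw' hm hm' i hi
    have h2 := main w' w hw' hw hm' hm i hi
    rcases lt_trichotomy (key f γ (w i)) (key f γ (w' i)) with h | h | h
    · exact absurd h h1
    · exact key_injective f γ h
    · exact absurd h h2
  · rw [hw i hi, hw' i hi]

/-- Existence of a permutation of `[n]` sorting by key. -/
lemma exists_sorting (n : ℕ) (f : ℕ → ℕ+) (γ : Equiv.Perm ℕ) :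
    ∃ w : Equiv.Perm ℕ, IsPermOn n w ∧
      ∀ i j, 1 ≤ i → i < j → j ≤ n → key f γ (w i) < key f γ (w j) := by
  classical
  set T : Finset (ℕ+ ×ₗ ℕ) := (Finset.Icc 1 n).image (key f γ) with hT
  have hTcard : T.card = n := by
    rw [hT, Finset.card_image_of_injective _ (key_injective f γ), Nat.card_Icc]
    omega
  set e := T.orderIsoOfFin hTcard with he
  have hρlt : ∀ x : {x : ℕ // x ∈ Finset.Icc 1 n}, (x : ℕ) - 1 < n := by
    rintro ⟨x, hx⟩
    rw [Finset.mem_Icc] at hx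
    simp only
    omega
  set ρ : Fin n ≃ {x : ℕ // x ∈ Finset.Icc 1 n} :=
    { toFun := fun j => ⟨(j : ℕ) + 1, by rw [Finset.mem_Icc]; exact ⟨by omega, by have := j.isLt; omega⟩⟩
      invFun := fun x => ⟨(x : ℕ) - 1, hρlt x⟩
      left_inv := fun j => by ext; simp
      right_inv := fun x => by
        have hx := x.2
        rw [Finset.mem_Icc] at hx
        ext
        simp only
        omega } with hρ
  have hKb : Function.Bijective
      (fun x : {x : ℕ // x ∈ Finset.Icc 1 n} =>
        (⟨key f γ x.1, Finset.mem_image_of_mem _ x.2⟩ : {y // y ∈ T})) := by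
    constructor
    · intro a b h
      exact Subtype.ext (key_injective f γ (congrArg Subtype.val h))
    · rintro ⟨y, hy⟩
      rw [hT, Finset.mem_image] at hy
      obtain ⟨x, hx, rfl⟩ := hy
      exact ⟨⟨x, hx⟩, rfl⟩
  set Kres := Equiv.ofBijective _ hKb with hKres
  set π : Equiv.Perm (Fin n) := (e.toEquiv.trans Kres.symm).trans ρ.symm with hπ
  refine ⟨π.extendDomain ρ, fun i hi => Equiv.Perm.extendDomain_apply_not_subtype π ρ hi, ?_⟩
  have hkey : ∀ x : {x : ℕ // x ∈ Finset.Icc 1 n},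
      key f γ (π.extendDomain ρ x.1) = (e (ρ.symm x)).1 := by
    rintro ⟨x, hx⟩
    rw [Equiv.Perm.extendDomain_apply_subtype π ρ hx]
    have h1 : π (ρ.symm ⟨x, hx⟩) = ρ.symm (Kres.symm (e (ρ.symm ⟨x, hx⟩))) := rfl
    rw [h1, Equiv.apply_symm_apply]
    exact congrArg Subtype.val (Kres.apply_symm_apply (e (ρ.symm ⟨x, hx⟩)))
  intro i j h1 h2 h3
  have hiI : i ∈ Finset.Icc 1 n := by rw [Finset.mem_Icc]; omega
  have hjI : j ∈ Finset.Icc 1 n := by rw [Finset.mem_Icc]; omega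
  rw [hkey ⟨i, hiI⟩, hkey ⟨j, hjI⟩]
  have hvi : ((ρ.symm ⟨i, hiI⟩ : Fin n) : ℕ) = i - 1 := rfl
  have hvj : ((ρ.symm ⟨j, hjI⟩ : Fin n) : ℕ) = j - 1 := rfl
  have hlt : ρ.symm ⟨i, hiI⟩ < ρ.symm ⟨j, hjI⟩ := by
    rw [Fin.lt_def, hvi, hvj]
    omega
  exact Subtype.coe_lt_coe.2 (e.strictMono hlt)


/-- A chain for a linear extension yields a `(P,γ)`-partition. -/
lemma mem_ordPart_of_mem_aofChain {n : ℕ} {r : ℕ → ℕ → Prop} {w γ : Equiv.Perm ℕ}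
    (hw : IsLinExt n r w) {f : ℕ → ℕ+} (hf : f ∈ AofChain n w γ) : f ∈ OrdPart n r γ := by
  refine ⟨hf.1, ?_⟩
  intro a ha b hb hr
  by_cases hab : a = b
  · subst hab
    exact ⟨le_rfl, fun h => absurd h (lt_irrefl _)⟩
  · have hia : w (w.symm a) = a := w.apply_symm_apply a
    have hjb : w (w.symm b) = b := w.apply_symm_apply b
    have hi : w.symm a ∈ Finset.Icc 1 n := permOn_mem (permOn_symm hw.1) ha
    have hj : w.symm b ∈ Finset.Icc 1 n := permOn_mem (permOn_symm hw.1) hb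
    have hij : w.symm a < w.symm b := by
      apply hw.2 _ hi _ hj
      · rw [hia, hjb]; exact hr
      · rw [hia, hjb]; exact hab
    rw [Finset.mem_Icc] at hi hj
    have hk := chain_key_lt hf (w.symm b) (w.symm a) hi.1 hij hj.2
    rw [hia, hjb] at hk
    exact of_key_lt hk

lemma mem_aofChain_of_mono {n : ℕ} {w γ : Equiv.Perm ℕ} {f : ℕ → ℕ+}
    (hnorm : ∀ j, j ∉ Finset.Icc 1 n → f j = 1)
    (hm : ∀ i j, 1 ≤ i → i < j → j ≤ n → key f γ (w i) < key f γ (w j)) :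
    f ∈ AofChain n w γ := by
  refine ⟨hnorm, ?_⟩
  intro i hi
  rw [Finset.mem_Icc] at hi
  exact of_key_lt (hm i (i + 1) hi.1 (by omega) (by omega))

lemma isLinExt_of_mono {n : ℕ} {r : ℕ → ℕ → Prop} {w γ : Equiv.Perm ℕ} {f : ℕ → ℕ+}
    (hperm : IsPermOn n w)
    (hm : ∀ i j, 1 ≤ i → i < j → j ≤ n → key f γ (w i) < key f γ (w j))
    (hf : f ∈ OrdPart n r γ) : IsLinExt n r w := by
  refine ⟨hperm, ?_⟩
  intro i hi j hj hr hne
  obtain ⟨h1, h2⟩ := hf.2 _ (permOn_mem hperm hi) _ (permOn_mem hperm hj) hr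
  have hk : key f γ (w i) < key f γ (w j) := key_lt_of h1 h2 hne
  rw [Finset.mem_Icc] at hi hj
  rcases lt_trichotomy i j with h | h | h
  · exact h
  · subst h; exact absurd rfl hne
  · exact absurd (hm j i hj.1 h hi.2) (lt_asymm hk)


end Stmt3Aux

open Stmt3Aux

/-- The fundamental theorem of `(P,γ)`-partitions in noncommuting variables:
for every `u : [n] → ℕ₊`, the number of `(P,γ)`-partitions `f` with `f(σ⁻¹ i) = u i` for
all `i ∈ [n]` equals the sum over all linear extensions `w` of `P` of the corresponding
counts for `(w,γ)`; that is, `F_{(P,γ,σ)} = Σ_{w ∈ ℒ(P)} F_{(w,γ,σ)}`. -/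
theorem stmt3 (n : ℕ) (hn : 1 ≤ n) (r : ℕ → ℕ → Prop)
    (hrefl : ∀ i ∈ Finset.Icc 1 n, r i i)
    (hantisymm : ∀ i ∈ Finset.Icc 1 n, ∀ j ∈ Finset.Icc 1 n, r i j → r j i → i = j)
    (htrans : ∀ i ∈ Finset.Icc 1 n, ∀ j ∈ Finset.Icc 1 n, ∀ k ∈ Finset.Icc 1 n,
      r i j → r j k → r i k)
    (γ σ : Equiv.Perm ℕ) (hγ : IsPermOn n γ) (hσ : IsPermOn n σ)
    (u : ℕ → ℕ+) :
    Set.ncard {f ∈ OrdPart n r γ | ∀ i ∈ Finset.Icc 1 n, f (σ.symm i) = u i} =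
      ∑ᶠ w ∈ {w : Equiv.Perm ℕ | IsLinExt n r w},
        Set.ncard {f ∈ AofChain n w γ | ∀ i ∈ Finset.Icc 1 n, f (σ.symm i) = u i} := by
  classical
  set f₀ : ℕ → ℕ+ := fun j => if j ∈ Finset.Icc 1 n then u (σ j) else 1 with hf₀
  have hA : ∀ X : Set (ℕ → ℕ+), (∀ f ∈ X, ∀ j, j ∉ Finset.Icc 1 n → f j = 1) →
      {f ∈ X | ∀ i ∈ Finset.Icc 1 n, f (σ.symm i) = u i} = X ∩ {f₀} := by
    intro X hX
    ext f
    simp only [Set.mem_setOf_eq, Set.mem_inter_iff, Set.mem_singleton_iff]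
    constructor
    · rintro ⟨hfX, hcond⟩
      refine ⟨hfX, funext fun j => ?_⟩
      by_cases hj : j ∈ Finset.Icc 1 n
      · have hσj : σ j ∈ Finset.Icc 1 n := permOn_mem hσ hj
        have hc := hcond (σ j) hσj
        rw [Equiv.symm_apply_apply] at hc
        rw [hf₀]
        simp only [hj, if_true]
        exact hc
      · rw [hX f hfX j hj, hf₀]
        simp only [hj, if_false]
    · rintro ⟨hfX, rfl⟩
      refine ⟨hfX, fun i hi => ?_⟩
      have hsi : σ.symm i ∈ Finset.Icc 1 n := permOn_mem (permOn_symm hσ) hi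
      rw [hf₀]
      simp only [hsi, if_true, Equiv.apply_symm_apply]
  rw [hA _ (fun f hf => hf.1)]
  have hrhs : ∀ w : Equiv.Perm ℕ,
      Set.ncard {f ∈ AofChain n w γ | ∀ i ∈ Finset.Icc 1 n, f (σ.symm i) = u i}
        = Set.ncard (AofChain n w γ ∩ {f₀}) := fun w => by
    rw [hA _ (fun f hf => hf.1)]
  have hstep : ∑ᶠ w ∈ {w : Equiv.Perm ℕ | IsLinExt n r w},
      Set.ncard {f ∈ AofChain n w γ | ∀ i ∈ Finset.Icc 1 n, f (σ.symm i) = u i}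
      = ∑ᶠ w ∈ {w : Equiv.Perm ℕ | IsLinExt n r w},
        Set.ncard (AofChain n w γ ∩ {f₀}) :=
    finsum_mem_congr rfl (fun w _ => hrhs w)
  rw [hstep]
  -- membership from nonzero count
  have hsupp : ∀ w : Equiv.Perm ℕ, Set.ncard (AofChain n w γ ∩ {f₀}) ≠ 0 →
      f₀ ∈ AofChain n w γ := by
    intro w h
    by_contra hc
    apply h
    have : AofChain n w γ ∩ {f₀} = ∅ := by
      ext g
      simp only [Set.mem_inter_iff, Set.mem_singleton_iff, Set.mem_empty_iff_false, iff_false,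
        not_and]
      rintro hg rfl
      exact hc hg
    rw [this, Set.ncard_empty]
  by_cases hmem : f₀ ∈ OrdPart n r γ
  · obtain ⟨w₀, hperm₀, hmono₀⟩ := exists_sorting n f₀ γ
    have hchain₀ : f₀ ∈ AofChain n w₀ γ := mem_aofChain_of_mono hmem.1 hmono₀
    have hlin₀ : IsLinExt n r w₀ := isLinExt_of_mono hperm₀ hmono₀ hmem
    have heq : ∑ᶠ w ∈ {w : Equiv.Perm ℕ | IsLinExt n r w},
        Set.ncard (AofChain n w γ ∩ {f₀})
        = ∑ᶠ w ∈ ({w₀} : Set (Equiv.Perm ℕ)), Set.ncard (AofChain n w γ ∩ {f₀}) := by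
      apply finsum_mem_inter_support_eq'
      intro w hw
      rw [Function.mem_support] at hw
      have hwchain := hsupp w hw
      simp only [Set.mem_setOf_eq, Set.mem_singleton_iff]
      constructor
      · intro hwlin
        exact unique_w hwlin.1 hperm₀
          (fun i j h1 h2 h3 => chain_key_lt hwchain j i h1 h2 h3)
          (fun i j h1 h2 h3 => chain_key_lt hchain₀ j i h1 h2 h3)
      · rintro rfl
        exact hlin₀
    rw [heq, finsum_mem_singleton]
    have h1 : OrdPart n r γ ∩ {f₀} = {f₀} := by
      ext g
      simp only [Set.mem_inter_iff, Set.mem_singleton_iff, and_iff_right_iff_imp]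
      rintro rfl
      exact hmem
    have h2 : AofChain n w₀ γ ∩ {f₀} = {f₀} := by
      ext g
      simp only [Set.mem_inter_iff, Set.mem_singleton_iff, and_iff_right_iff_imp]
      rintro rfl
      exact hchain₀
    rw [h1, h2]
  · have heq : ∑ᶠ w ∈ {w : Equiv.Perm ℕ | IsLinExt n r w},
        Set.ncard (AofChain n w γ ∩ {f₀})
        = ∑ᶠ w ∈ (∅ : Set (Equiv.Perm ℕ)), Set.ncard (AofChain n w γ ∩ {f₀}) := by
      apply finsum_mem_inter_support_eq'
      intro w hw
      rw [Function.mem_support] at hw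
      have hwchain := hsupp w hw
      simp only [Set.mem_setOf_eq, Set.mem_empty_iff_false, iff_false]
      intro hwlin
      exact hmem (mem_ordPart_of_mem_aofChain hwlin hwchain)
    rw [heq, finsum_mem_empty]
    have h1 : OrdPart n r γ ∩ {f₀} = ∅ := by
      ext g
      simp only [Set.mem_inter_iff, Set.mem_singleton_iff, Set.mem_empty_iff_false, iff_false,
        not_and]
      rintro hg rfl
      exact hmem hg
    rw [h1, Set.ncard_empty]
end

section
/- Let π be an odd set partition of [n] and let ψ be a set composition of [n] such that every block of ψ is a union of blocks of π. Then Σ_φ (−1)^{ℓ(φ)} = (−1)^{ℓ(π)} 2^{ℓ(π)−ℓ(ψ)}, where the sum is over all set compositions φ of [n] such that every block of φ is a union of blocks of π, the last block of φ has odd cardinality, and ψ ≤ Odd(φ). -/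
/-- `π` is a set partition of `[n]`. -/
def IsSetPartition (n : ℕ) (π : Finset (Finset ℕ)) : Prop :=
  (∀ B ∈ π, B.Nonempty) ∧ (∀ B ∈ π, ∀ C ∈ π, B ≠ C → Disjoint B C) ∧
    π.sup id = Finset.Icc 1 n

/-- Every block of `φ` is a union of blocks of `π`. -/
def RefinesPartition (π : Finset (Finset ℕ)) (φ : List (Finset ℕ)) : Prop :=
  ∀ X ∈ φ, ∀ B ∈ π, ¬ Disjoint B X → B ⊆ X

/-- Refinement order on set compositions: `ψ ≤ φ` iff every block of `ψ` is the union of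
a chunk of consecutive blocks of `φ` (in order). -/
def CoarserLE (ψ φ : List (Finset ℕ)) : Prop :=
  ∃ L : List (List (Finset ℕ)), (∀ c ∈ L, c ≠ []) ∧ L.flatten = φ ∧
    ψ = L.map (fun c => c.foldr (· ∪ ·) ∅)

/-- `Odd(φ)`: cut the list of blocks immediately after every block of odd cardinality
and replace each resulting maximal segment by the union of its blocks. -/
def oddMerge : List (Finset ℕ) → List (Finset ℕ)
  | [] => []
  | B :: rest =>
    if Odd B.card then B :: oddMerge rest
    else
      match oddMerge rest with
      | [] => [B]
      | C :: rest' => (B ∪ C) :: rest'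


open Finset

variable {α : Type*} [DecidableEq α]

/-- union of a list of finsets -/
def uflat (L : List (Finset α)) : Finset α := L.foldr (· ∪ ·) ∅

@[simp] lemma uflat_nil : uflat ([] : List (Finset α)) = ∅ := rfl
@[simp] lemma uflat_cons (x : Finset α) (L : List (Finset α)) :
    uflat (x :: L) = x ∪ uflat L := rfl

lemma mem_uflat {a : α} {L : List (Finset α)} : a ∈ uflat L ↔ ∃ b ∈ L, a ∈ b := by
  induction L with
  | nil => simp
  | cons x L ih => simp [uflat_cons, ih]

lemma subset_uflat {b : Finset α} {L : List (Finset α)} (hb : b ∈ L) : b ⊆ uflat L := by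
  intro a ha; exact mem_uflat.2 ⟨b, hb, ha⟩

lemma disjoint_uflat {x : Finset α} {L : List (Finset α)}
    (h : ∀ b ∈ L, Disjoint x b) : Disjoint x (uflat L) := by
  induction L with
  | nil => simp
  | cons y L ih =>
    simp only [uflat_cons, Finset.disjoint_union_right]
    exact ⟨h y (by simp), ih fun b hb => h b (by simp [hb])⟩

lemma uflat_append (l l' : List (Finset α)) : uflat (l ++ l') = uflat l ∪ uflat l' := by
  induction l with
  | nil => simp
  | cons x l ih => simp [ih, Finset.union_assoc]

/-- generalized `oddMerge` -/
def oddM : List (Finset α) → List (Finset α)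
  | [] => []
  | B :: rest =>
    if Odd B.card then B :: oddM rest
    else
      match oddM rest with
      | [] => [B]
      | C :: rest' => (B ∪ C) :: rest'

@[simp] lemma oddM_nil : oddM ([] : List (Finset α)) = [] := rfl

lemma oddM_cons_odd {x : Finset α} (hx : Odd x.card) (L : List (Finset α)) :
    oddM (x :: L) = x :: oddM L := by simp [oddM, hx]

lemma oddM_cons_even_nil {x : Finset α} (hx : ¬ Odd x.card) {L : List (Finset α)}
    (h : oddM L = []) : oddM (x :: L) = [x] := by simp [oddM, hx, h]

lemma oddM_cons_even_cons {x : Finset α} (hx : ¬ Odd x.card) {L : List (Finset α)}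
    {C : Finset α} {r : List (Finset α)} (h : oddM L = C :: r) :
    oddM (x :: L) = (x ∪ C) :: r := by simp [oddM, hx, h]

lemma oddM_ne_nil {L : List (Finset α)} (h : L ≠ []) : oddM L ≠ [] := by
  cases L with
  | nil => exact absurd rfl h
  | cons x L =>
    by_cases hx : Odd x.card
    · rw [oddM_cons_odd hx]; simp
    · rcases h' : oddM L with _ | ⟨C, r⟩
      · rw [oddM_cons_even_nil hx h']; simp
      · rw [oddM_cons_even_cons hx h']; simp

lemma uflat_oddM (L : List (Finset α)) : uflat (oddM L) = uflat L := by
  induction L with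
  | nil => rfl
  | cons x L ih =>
    by_cases hx : Odd x.card
    · rw [oddM_cons_odd hx]; simp [ih]
    · rcases h' : oddM L with _ | ⟨C, r⟩
      · rw [oddM_cons_even_nil hx h']
        have : uflat L = ∅ := by rw [← ih, h']; rfl
        simp [this]
      · rw [oddM_cons_even_cons hx h']
        have : uflat L = C ∪ uflat r := by rw [← ih, h']; rfl
        simp [this, Finset.union_assoc]

/-- `L` is a set composition of `τ`. -/
def isComp (τ : Finset α) (L : List (Finset α)) : Prop :=
  (∀ B ∈ L, B.Nonempty) ∧ L.Pairwise (fun B C => Disjoint B C) ∧ uflat L = τ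

lemma isComp_nil {τ : Finset α} : isComp τ ([] : List (Finset α)) ↔ τ = ∅ := by
  simp [isComp]; exact eq_comm

lemma isComp_cons {τ : Finset α} {x : Finset α} {L : List (Finset α)} :
    isComp τ (x :: L) ↔ x.Nonempty ∧ x ⊆ τ ∧ isComp (τ \ x) L := by
  constructor
  · rintro ⟨hne, hpw, hu⟩
    have hdx : Disjoint x (uflat L) :=
      disjoint_uflat (fun b hb => (List.pairwise_cons.1 hpw).1 b hb)
    have hu' : x ∪ uflat L = τ := by simpa using hu
    refine ⟨hne x (by simp), by rw [← hu']; exact Finset.subset_union_left, ?_⟩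
    refine ⟨fun B hB => hne B (by simp [hB]), (List.pairwise_cons.1 hpw).2, ?_⟩
    rw [← hu', Finset.union_sdiff_cancel_left hdx]
  · rintro ⟨hxne, hxsub, hne, hpw, hu⟩
    refine ⟨?_, ?_, ?_⟩
    · rintro B hB
      rcases List.mem_cons.1 hB with rfl | hB
      · exact hxne
      · exact hne B hB
    · refine List.pairwise_cons.2 ⟨fun b hb => ?_, hpw⟩
      have : b ⊆ τ \ x := hu ▸ subset_uflat hb
      exact Finset.disjoint_sdiff.mono_right this
    · rw [uflat_cons, hu, Finset.union_sdiff_of_subset hxsub]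

lemma isComp_length {τ : Finset α} {L : List (Finset α)} (h : isComp τ L) :
    L.length ≤ τ.card := by
  induction L generalizing τ with
  | nil => simp
  | cons x L ih =>
    rcases isComp_cons.1 h with ⟨hxne, hxsub, h'⟩
    have h1 : L.length ≤ (τ \ x).card := ih h'
    have h2 : (τ \ x).card = τ.card - x.card := Finset.card_sdiff_of_subset hxsub
    have h3 : 1 ≤ x.card := Finset.card_pos.2 hxne
    have h4 : x.card ≤ τ.card := Finset.card_le_card hxsub
    simp only [List.length_cons]
    omega

lemma isComp_block_subset {τ : Finset α} {L : List (Finset α)} (h : isComp τ L)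
    {b : Finset α} (hb : b ∈ L) : b ⊆ τ := h.2.2 ▸ subset_uflat hb

lemma isComp_oddM {τ : Finset α} {L : List (Finset α)} (h : isComp τ L) :
    isComp τ (oddM L) := by
  obtain ⟨hne, hpw, hu⟩ := h
  have key : ∀ (L : List (Finset α)), (∀ B ∈ L, B.Nonempty) →
      L.Pairwise (fun B C => Disjoint B C) →
      (∀ B ∈ oddM L, B.Nonempty) ∧ (oddM L).Pairwise (fun B C => Disjoint B C) := by
    intro L
    induction L with
    | nil => simp
    | cons x L ih =>
      intro hne hpw
      obtain ⟨ih1, ih2⟩ := ih (fun B hB => hne B (by simp [hB])) (List.pairwise_cons.1 hpw).2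
      have hdx : Disjoint x (uflat L) :=
        disjoint_uflat (fun b hb => (List.pairwise_cons.1 hpw).1 b hb)
      have hdx' : ∀ b ∈ oddM L, Disjoint x b := by
        intro b hb
        exact hdx.mono_right ((uflat_oddM L) ▸ subset_uflat hb)
      by_cases hx : Odd x.card
      · rw [oddM_cons_odd hx]
        refine ⟨?_, List.pairwise_cons.2 ⟨hdx', ih2⟩⟩
        intro B hB
        rcases List.mem_cons.1 hB with h1 | hB
        · exact h1 ▸ hne x (by simp)
        · exact ih1 B hB
      · rcases h' : oddM L with _ | ⟨C, r⟩
        · rw [oddM_cons_even_nil hx h']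
          simp only [List.mem_singleton, List.pairwise_singleton, and_true]
          intro B h1; exact h1 ▸ hne x (by simp)
        · rw [oddM_cons_even_cons hx h']
          constructor
          · intro B hB
            rcases List.mem_cons.1 hB with h1 | hB
            · exact h1 ▸ (hne x (by simp)).mono Finset.subset_union_left
            · exact ih1 B (by simp [h', hB])
          · refine List.pairwise_cons.2 ⟨?_, ?_⟩
            · intro b hb
              have h1 : Disjoint x b := hdx' b (by simp [h', hb])
              have h2 : Disjoint C b := by
                have := ih2; rw [h'] at this
                exact (List.pairwise_cons.1 this).1 b hb
              simp [Finset.disjoint_union_left, h1, h2]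
            · have := ih2; rw [h'] at this
              exact (List.pairwise_cons.1 this).2
  exact ⟨(key L hne hpw).1, (key L hne hpw).2, (uflat_oddM L) ▸ hu⟩

/-- generalized `CoarserLE` -/
def coarser (ψ φ : List (Finset α)) : Prop :=
  ∃ L : List (List (Finset α)), (∀ c ∈ L, c ≠ []) ∧ L.flatten = φ ∧
    ψ = L.map (fun c => uflat c)

lemma coarser_nil_left {φ : List (Finset α)} : coarser [] φ ↔ φ = [] := by
  constructor
  · rintro ⟨L, hL, hflat, hmap⟩
    have : L = [] := by
      cases L with
      | nil => rfl
      | cons c L => simp at hmap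
    subst this; simpa using hflat.symm
  · rintro rfl; exact ⟨[], by simp, rfl, rfl⟩

lemma not_coarser_cons_nil {s : Finset α} {Ψ : List (Finset α)} :
    ¬ coarser (s :: Ψ) [] := by
  rintro ⟨L, hL, hflat, hmap⟩
  cases L with
  | nil => simp at hmap
  | cons c L =>
    have h2 := hflat
    simp only [List.flatten_cons, List.append_eq_nil_iff] at h2
    exact hL c (by simp) h2.1

lemma coarser_cons_left {s : Finset α} {Ψ φ : List (Finset α)} :
    coarser (s :: Ψ) φ ↔
      ∃ c φ', c ≠ [] ∧ φ = c ++ φ' ∧ s = uflat c ∧ coarser Ψ φ' := by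
  constructor
  · rintro ⟨L, hL, hflat, hmap⟩
    cases L with
    | nil => simp at hmap
    | cons c L =>
      simp only [List.map_cons, List.cons.injEq] at hmap
      refine ⟨c, L.flatten, hL c (by simp), ?_, hmap.1, L, fun c hc => hL c (by simp [hc]),
        rfl, hmap.2⟩
      rw [← hflat]; simp
  · rintro ⟨c, φ', hc, rfl, hs, L, hL, hflat, hmap⟩
    refine ⟨c :: L, ?_, by simp [hflat], by simp [← hs, hmap]⟩
    intro d hd
    rcases List.mem_cons.1 hd with h1 | hd
    · exact h1 ▸ hc
    · exact hL d hd

lemma coarser_head_nonempty {a : Finset α} {Ψ M : List (Finset α)}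
    (h : coarser (a :: Ψ) M) (hM : ∀ b ∈ M, b.Nonempty) : a.Nonempty := by
  rcases coarser_cons_left.1 h with ⟨c, φ', hc, rfl, hs, _⟩
  cases c with
  | nil => exact absurd rfl hc
  | cons b c =>
    have hb : b.Nonempty := hM b (by simp)
    rw [hs]
    exact hb.mono (subset_uflat (by simp))

/-- Splitting lemma, odd-head case. -/
lemma coarser_split_odd {s x : Finset α} {Ψ' M : List (Finset α)}
    (hM : ∀ b ∈ M, b.Nonempty) (hd : ∀ b ∈ M, Disjoint x b) :
    coarser (s :: Ψ') (x :: M) ↔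
      (x = s ∧ coarser Ψ' M) ∨ (x ⊆ s ∧ x ≠ s ∧ coarser ((s \ x) :: Ψ') M) := by
  constructor
  · intro h
    rcases coarser_cons_left.1 h with ⟨c, φ', hc, heq, hs, hco⟩
    cases c with
    | nil => exact absurd rfl hc
    | cons y c₀ =>
      simp only [List.cons_append, List.cons.injEq] at heq
      obtain ⟨rfl, hM'⟩ := heq
      cases c₀ with
      | nil =>
        left
        have : s = x := by simpa [uflat] using hs
        exact ⟨this.symm, hM' ▸ hco⟩
      | cons b c₁ =>
        right
        have hsub : ∀ e ∈ b :: c₁, e ∈ M := by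
          intro e he
          rw [hM']
          simp only [List.mem_cons, List.mem_append] at he ⊢
          tauto
        have hu : s = x ∪ uflat (b :: c₁) := by simpa using hs
        have hdisj : Disjoint x (uflat (b :: c₁)) :=
          disjoint_uflat (fun e he => hd e (hsub e he))
        have hune : (uflat (b :: c₁)).Nonempty :=
          (hM b (hsub b (by simp))).mono (subset_uflat (by simp))
        have hxsub : x ⊆ s := hu ▸ Finset.subset_union_left
        have hsd : s \ x = uflat (b :: c₁) := by
          rw [hu, Finset.union_sdiff_cancel_left hdisj]
        refine ⟨hxsub, ?_, ?_⟩
        · intro hxs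
          rw [hxs] at hsd
          simp only [Finset.sdiff_self] at hsd
          exact hune.ne_empty hsd.symm
        · exact coarser_cons_left.2 ⟨b :: c₁, φ', by simp, by simpa using hM', hsd, hco⟩
  · rintro (⟨rfl, hco⟩ | ⟨hxs, hne, hco⟩)
    · exact coarser_cons_left.2 ⟨[x], M, by simp, rfl, by simp [uflat], hco⟩
    · rcases coarser_cons_left.1 hco with ⟨c, φ', hc, rfl, hs, hco'⟩
      refine coarser_cons_left.2 ⟨x :: c, φ', by simp, by simp, ?_, hco'⟩
      rw [uflat_cons, ← hs, Finset.union_sdiff_of_subset hxs]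

/-- Splitting lemma, even-head case. -/
lemma coarser_split_even {s x C : Finset α} {Ψ' r : List (Finset α)}
    (hdC : Disjoint x C) (hdr : ∀ b ∈ r, Disjoint x b) :
    coarser (s :: Ψ') ((x ∪ C) :: r) ↔
      x ⊆ s ∧ coarser ((s \ x) :: Ψ') (C :: r) := by
  constructor
  · intro h
    rcases coarser_cons_left.1 h with ⟨c, φ', hc, heq, hs, hco⟩
    cases c with
    | nil => exact absurd rfl hc
    | cons y c₀ =>
      simp only [List.cons_append, List.cons.injEq] at heq
      obtain ⟨hy, hr⟩ := heq
      subst hy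
      have hdisj : Disjoint x (uflat c₀) := disjoint_uflat (fun e he => hdr e
        (by rw [hr]; exact List.mem_append_left _ he))
      have hu : s = x ∪ (C ∪ uflat c₀) := by
        rw [hs]; simp [uflat_cons, Finset.union_assoc]
      have hxsub : x ⊆ s := hu ▸ Finset.subset_union_left
      have hsd : s \ x = C ∪ uflat c₀ := by
        rw [hu, Finset.union_sdiff_cancel_left (by simp [Finset.disjoint_union_right, hdC, hdisj])]
      refine ⟨hxsub, coarser_cons_left.2 ⟨C :: c₀, φ', by simp, by simp [hr], by simp [hsd], hco⟩⟩
  · rintro ⟨hxs, hco⟩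
    rcases coarser_cons_left.1 hco with ⟨c, φ', hc, heq, hs, hco'⟩
    cases c with
    | nil => exact absurd rfl hc
    | cons y c₀ =>
      simp only [List.cons_append, List.cons.injEq] at heq
      obtain ⟨hy, hr⟩ := heq
      subst hy
      refine coarser_cons_left.2 ⟨(x ∪ C) :: c₀, φ', by simp, by simp [hr], ?_, hco'⟩
      have h1 : s \ x = C ∪ uflat c₀ := by simpa using hs
      have h2 : uflat ((x ∪ C) :: c₀) = x ∪ (s \ x) := by
        rw [h1]; simp [uflat_cons, Finset.union_assoc]
      rw [h2, Finset.union_sdiff_of_subset hxs]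

lemma getLast?_cons_ne {β : Type*} {x : β} {L : List β} (h : L ≠ []) :
    (x :: L).getLast? = L.getLast? := by
  cases L with
  | nil => exact absurd rfl h
  | cons y L => exact List.getLast?_cons_cons

/-- The predicate defining the summation set (with the empty list allowed). -/
def goodL (τ : Finset α) (Ψ : List (Finset α)) (L : List (Finset α)) : Prop :=
  isComp τ L ∧ coarser Ψ (oddM L) ∧ (L = [] ∨ ∃ B, L.getLast? = some B ∧ Odd B.card)

lemma goodL_cons_iff {τ s : Finset α} {Ψ' : List (Finset α)} (hΨ : isComp τ (s :: Ψ'))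
    {x : Finset α} {L' : List (Finset α)} :
    goodL τ (s :: Ψ') (x :: L') ↔ x.Nonempty ∧ x ⊆ s ∧
      ((Odd x.card ∧ x = s ∧ goodL (τ \ s) Ψ' L') ∨
        (x ≠ s ∧ goodL (τ \ x) ((s \ x) :: Ψ') L')) := by
  have hsτ : s ⊆ τ := (isComp_cons.1 hΨ).2.1
  constructor
  · rintro ⟨hcomp, hco, hlast⟩
    obtain ⟨hxne, hxτ, hcomp'⟩ := isComp_cons.1 hcomp
    have hM : isComp (τ \ x) (oddM L') := isComp_oddM hcomp'
    have hMne : ∀ b ∈ oddM L', b.Nonempty := hM.1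
    have hMd : ∀ b ∈ oddM L', Disjoint x b := fun b hb =>
      Finset.disjoint_sdiff.mono_right (isComp_block_subset hM hb)
    have hlast' : L' ≠ [] → ∃ B, L'.getLast? = some B ∧ Odd B.card := by
      intro hne
      rcases hlast with h | ⟨B, hB, hBodd⟩
      · simp at h
      · exact ⟨B, by rw [← getLast?_cons_ne hne]; exact hB, hBodd⟩
    by_cases hx : Odd x.card
    · rw [oddM_cons_odd hx] at hco
      rcases (coarser_split_odd hMne hMd).1 hco with ⟨hxs, hco'⟩ | ⟨hxs, hne, hco'⟩
      · refine ⟨hxne, hxs ▸ subset_rfl, Or.inl ⟨hx, hxs, hxs ▸ hcomp', hco', ?_⟩⟩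
        cases L' with
        | nil => exact Or.inl rfl
        | cons y t => exact Or.inr (hlast' (by simp))
      · refine ⟨hxne, hxs, Or.inr ⟨hne, hcomp', hco', ?_⟩⟩
        cases L' with
        | nil => simp at hco'; exact absurd hco' not_coarser_cons_nil
        | cons y t => exact Or.inr (hlast' (by simp))
    · have hL'ne : L' ≠ [] := by
        rintro rfl
        rcases hlast with h | ⟨B, hB, hBodd⟩
        · simp at h
        · simp at hB; exact hx (hB ▸ hBodd)
      rcases h' : oddM L' with _ | ⟨C, r⟩
      · exact absurd h' (oddM_ne_nil hL'ne)
      · rw [oddM_cons_even_cons hx h'] at hco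
        have hdC : Disjoint x C := hMd C (by simp [h'])
        have hdr : ∀ b ∈ r, Disjoint x b := fun b hb => hMd b (by simp [h', hb])
        obtain ⟨hxs, hco'⟩ := (coarser_split_even hdC hdr).1 hco
        have hne : x ≠ s := by
          intro hxe
          have : (s \ x).Nonempty := coarser_head_nonempty hco'
            (fun b hb => hMne b (by simp [h', hb]))
          rw [hxe] at this
          simp at this
        exact ⟨hxne, hxs, Or.inr ⟨hne, hcomp', h' ▸ hco', Or.inr (hlast' hL'ne)⟩⟩
  · rintro ⟨hxne, hxs, hcase⟩
    rcases hcase with ⟨hx, hxe, hg⟩ | ⟨hne, hg⟩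
    · subst hxe
      obtain ⟨hcomp', hco', hlast'⟩ := hg
      have hM : isComp (τ \ x) (oddM L') := isComp_oddM hcomp'
      have hMne : ∀ b ∈ oddM L', b.Nonempty := hM.1
      have hMd : ∀ b ∈ oddM L', Disjoint x b := fun b hb =>
        Finset.disjoint_sdiff.mono_right (isComp_block_subset hM hb)
      have hcompL : isComp τ (x :: L') := isComp_cons.2 ⟨hxne, hxs.trans hsτ, hcomp'⟩
      refine ⟨hcompL, ?_, ?_⟩
      · rw [oddM_cons_odd hx]
        exact (coarser_split_odd hMne hMd).2 (Or.inl ⟨rfl, hco'⟩)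
      · cases L' with
        | nil => exact Or.inr ⟨x, by simp, hx⟩
        | cons y t =>
          rcases hlast' with h | ⟨B, hB, hBodd⟩
          · simp at h
          · exact Or.inr ⟨B, by rw [getLast?_cons_ne (by simp)]; exact hB, hBodd⟩
    · obtain ⟨hcomp', hco', hlast'⟩ := hg
      have hM : isComp (τ \ x) (oddM L') := isComp_oddM hcomp'
      have hMne : ∀ b ∈ oddM L', b.Nonempty := hM.1
      have hMd : ∀ b ∈ oddM L', Disjoint x b := fun b hb =>
        Finset.disjoint_sdiff.mono_right (isComp_block_subset hM hb)
      have hL'ne : L' ≠ [] := by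
        rintro rfl
        exact not_coarser_cons_nil (by simpa using hco')
      have hcompL : isComp τ (x :: L') := isComp_cons.2 ⟨hxne, hxs.trans hsτ, hcomp'⟩
      have hlastL : (x :: L') = [] ∨ ∃ B, (x :: L').getLast? = some B ∧ Odd B.card := by
        rcases hlast' with h | ⟨B, hB, hBodd⟩
        · exact absurd h hL'ne
        · exact Or.inr ⟨B, by rw [getLast?_cons_ne hL'ne]; exact hB, hBodd⟩
      refine ⟨hcompL, ?_, hlastL⟩
      by_cases hx : Odd x.card
      · rw [oddM_cons_odd hx]
        exact (coarser_split_odd hMne hMd).2 (Or.inr ⟨hxs, hne, hco'⟩)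
      · rcases h' : oddM L' with _ | ⟨C, r⟩
        · exact absurd h' (oddM_ne_nil hL'ne)
        · rw [oddM_cons_even_cons hx h']
          have hdC : Disjoint x C := hMd C (by simp [h'])
          have hdr : ∀ b ∈ r, Disjoint x b := fun b hb => hMd b (by simp [h', hb])
          exact (coarser_split_even hdC hdr).2 ⟨hxs, h' ▸ hco'⟩

/-- finset of lists of length at most `k` with entries in `P` -/
def candL : ℕ → Finset (Finset α) → Finset (List (Finset α))
  | 0, _ => {[]}
  | (k+1), P => {[]} ∪ (P ×ˢ candL k P).image (fun p => p.1 :: p.2)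

lemma mem_candL : ∀ {k : ℕ} {P : Finset (Finset α)} {L : List (Finset α)},
    L.length ≤ k → (∀ b ∈ L, b ∈ P) → L ∈ candL k P := by
  intro k
  induction k with
  | zero =>
    intro P L hlen _
    have : L = [] := List.length_eq_zero_iff.1 (Nat.le_zero.1 hlen)
    subst this; simp [candL]
  | succ k ih =>
    intro P L hlen hmem
    cases L with
    | nil => simp [candL]
    | cons x L =>
      simp only [candL, Finset.mem_union, Finset.mem_image, Finset.mem_product]
      refine Or.inr ⟨⟨x, L⟩, ?_, rfl⟩
      exact ⟨hmem x (by simp), ih (by simpa using hlen) (fun b hb => hmem b (by simp [hb]))⟩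

def cand (τ : Finset α) : Finset (List (Finset α)) := candL τ.card τ.powerset

lemma mem_cand_of_isComp {τ : Finset α} {L : List (Finset α)} (h : isComp τ L) :
    L ∈ cand τ :=
  mem_candL (isComp_length h) (fun b hb => Finset.mem_powerset.2 (isComp_block_subset h hb))

open Classical in
/-- the finset of valid compositions -/
noncomputable def goodFinset (τ : Finset α) (Ψ : List (Finset α)) :
    Finset (List (Finset α)) :=
  (cand τ).filter (fun L => goodL τ Ψ L)

open Classical in
lemma mem_goodFinset {τ : Finset α} {Ψ L : List (Finset α)} :
    L ∈ goodFinset τ Ψ ↔ goodL τ Ψ L := by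
  simp only [goodFinset, Finset.mem_filter]
  exact ⟨fun h => h.2, fun h => ⟨mem_cand_of_isComp h.1, h⟩⟩

/-- the main sum -/
noncomputable def Ssum (τ : Finset α) (Ψ : List (Finset α)) : ℤ :=
  ∑ L ∈ goodFinset τ Ψ, (-1 : ℤ) ^ L.length

lemma goodFinset_empty : goodFinset (∅ : Finset α) [] = {[]} := by
  ext L
  rw [mem_goodFinset]
  constructor
  · intro h
    rcases h.2.2 with h' | ⟨B, hB, _⟩
    · simp [h']
    · exfalso
      cases L with
      | nil => simp at hB
      | cons x L =>
        have := isComp_block_subset h.1 (show x ∈ x :: L by simp)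
        have hne := h.1.1 x (by simp)
        simp only [Finset.subset_empty] at this
        exact hne.ne_empty this
  · intro h
    simp only [Finset.mem_singleton] at h
    subst h
    exact ⟨isComp_nil.2 rfl, coarser_nil_left.2 rfl, Or.inl rfl⟩

lemma Ssum_empty : Ssum (∅ : Finset α) [] = 1 := by
  rw [Ssum, goodFinset_empty]; simp

lemma Psi_eq_nil_of_isComp_empty {Ψ : List (Finset α)} (h : isComp ∅ Ψ) : Ψ = [] := by
  cases Ψ with
  | nil => rfl
  | cons s Ψ' =>
    exfalso
    have hs := h.1 s (by simp)
    have := isComp_block_subset h (show s ∈ s :: Ψ' by simp)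
    simp only [Finset.subset_empty] at this
    exact hs.ne_empty this

lemma Ssum_rec {τ s : Finset α} {Ψ' : List (Finset α)} (hΨ : isComp τ (s :: Ψ')) :
    Ssum τ (s :: Ψ') =
      -((if Odd s.card then Ssum (τ \ s) Ψ' else 0) +
        ∑ x ∈ (s.powerset.filter (fun x => x.Nonempty)).erase s,
          Ssum (τ \ x) ((s \ x) :: Ψ')) := by
  classical
  obtain ⟨hsne, hsτ, _⟩ := isComp_cons.1 hΨ
  set A : Finset (Finset α) := s.powerset.filter (fun x => x.Nonempty) with hA
  set inner : Finset α → Finset (List (Finset α)) := fun x =>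
    if x = s then (if Odd s.card then goodFinset (τ \ s) Ψ' else ∅)
    else goodFinset (τ \ x) ((s \ x) :: Ψ') with hinner
  have hE : goodFinset τ (s :: Ψ') = A.biUnion (fun x => (inner x).image (x :: ·)) := by
    ext L
    rw [mem_goodFinset]
    constructor
    · intro hg
      have hLne : L ≠ [] := by
        rintro rfl
        have : τ = ∅ := isComp_nil.1 hg.1
        rw [this] at hsτ
        exact hsne.ne_empty (Finset.subset_empty.1 hsτ)
      cases L with
      | nil => exact absurd rfl hLne
      | cons x L' =>
        obtain ⟨hxne, hxs, hcase⟩ := (goodL_cons_iff hΨ).1 hg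
        simp only [Finset.mem_biUnion, Finset.mem_image]
        refine ⟨x, by simp [hA, Finset.mem_powerset, hxs, hxne], L', ?_, rfl⟩
        rcases hcase with ⟨hodd, hxe, hgood⟩ | ⟨hne, hgood⟩
        · subst hxe
          simp only [hinner, if_pos rfl, if_pos hodd]
          exact mem_goodFinset.2 hgood
        · simp only [hinner, if_neg hne]
          exact mem_goodFinset.2 hgood
    · intro hmem
      simp only [Finset.mem_biUnion, Finset.mem_image] at hmem
      obtain ⟨x, hxA, L', hL', rfl⟩ := hmem
      have hxs : x ⊆ s := by
        simp only [hA, Finset.mem_filter, Finset.mem_powerset] at hxA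
        exact hxA.1
      have hxne : x.Nonempty := by
        simp only [hA, Finset.mem_filter] at hxA
        exact hxA.2
      refine (goodL_cons_iff hΨ).2 ⟨hxne, hxs, ?_⟩
      by_cases hxe : x = s
      · subst hxe
        simp only [hinner, if_pos rfl] at hL'
        by_cases hodd : Odd x.card
        · rw [if_pos hodd] at hL'
          exact Or.inl ⟨hodd, rfl, mem_goodFinset.1 hL'⟩
        · rw [if_neg hodd] at hL'
          simp at hL'
      · simp only [hinner, if_neg hxe] at hL'
        exact Or.inr ⟨hxe, mem_goodFinset.1 hL'⟩
  have hdisj : (↑A : Set (Finset α)).PairwiseDisjoint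
      (fun x => (inner x).image (x :: ·)) := by
    intro x _ y _ hxy
    simp only [Function.onFun]
    rw [Finset.disjoint_left]
    rintro L hLx hLy
    simp only [Finset.mem_image] at hLx hLy
    obtain ⟨L₁, _, h1⟩ := hLx
    obtain ⟨L₂, _, h2⟩ := hLy
    rw [← h2] at h1
    exact hxy (List.cons_eq_cons.mp h1).1
  rw [Ssum, hE, Finset.sum_biUnion hdisj]
  have hsum : ∀ x ∈ A, (∑ L ∈ (inner x).image (x :: ·), (-1 : ℤ) ^ L.length) =
      -(∑ L' ∈ inner x, (-1 : ℤ) ^ L'.length) := by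
    intro x _
    rw [Finset.sum_image (by intro a _ b _ h; exact (List.cons_eq_cons.mp h).2)]
    rw [← Finset.sum_neg_distrib]
    congr 1
    ext L'
    simp only [List.length_cons, pow_succ]
    ring
  rw [Finset.sum_congr rfl hsum]
  have hsA : s ∈ A := by simp [hA, hsne]
  rw [← Finset.add_sum_erase A _ hsA]
  have h1 : (∑ L' ∈ inner s, (-1 : ℤ) ^ L'.length) =
      (if Odd s.card then Ssum (τ \ s) Ψ' else 0) := by
    simp only [hinner, if_pos rfl]
    by_cases hodd : Odd s.card
    · simp [if_pos hodd, Ssum]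
    · simp [if_neg hodd]
  have h2 : ∀ x ∈ A.erase s, (-(∑ L' ∈ inner x, (-1 : ℤ) ^ L'.length)) =
      -(Ssum (τ \ x) ((s \ x) :: Ψ')) := by
    intro x hx
    have hxe : x ≠ s := Finset.ne_of_mem_erase hx
    simp only [hinner, if_neg hxe, Ssum]
  rw [Finset.sum_congr rfl h2, h1, Finset.sum_neg_distrib]
  ring

lemma keynum {m : ℕ} (hm : 1 ≤ m) :
    (if Odd m then (2 : ℤ) else 0) +
      ∑ j ∈ Finset.Ico 1 m, (m.choose j : ℤ) * (-2) ^ (m - j) = -(-2) ^ m := by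
  have hb := add_pow (1 : ℤ) (-2) m
  norm_num at hb
  rw [Finset.sum_range_succ] at hb
  have hsplit : ∑ k ∈ Finset.range m, (-2 : ℤ) ^ (m - k) * (m.choose k : ℤ) =
      (-2) ^ m + ∑ k ∈ Finset.Ico 1 m, (-2 : ℤ) ^ (m - k) * (m.choose k : ℤ) := by
    rw [Finset.range_eq_Ico, Finset.sum_eq_sum_Ico_succ_bot (by omega : 0 < m)]
    simp
  rw [hsplit] at hb
  simp only [Nat.sub_self, pow_zero, Nat.choose_self, Nat.cast_one, one_mul] at hb
  have hcomm : ∑ j ∈ Finset.Ico 1 m, (m.choose j : ℤ) * (-2) ^ (m - j) =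
      ∑ k ∈ Finset.Ico 1 m, (-2 : ℤ) ^ (m - k) * (m.choose k : ℤ) :=
    Finset.sum_congr rfl (fun j _ => by ring)
  rw [hcomm]
  rcases Nat.even_or_odd m with he | ho
  · rw [if_neg (by simpa using Nat.not_odd_iff_even.2 he)]
    have : (-1 : ℤ) ^ m = 1 := he.neg_one_pow
    rw [this] at hb
    linarith
  · rw [if_pos ho]
    have : (-1 : ℤ) ^ m = -1 := ho.neg_one_pow
    rw [this] at hb
    linarith

lemma sum_pow_card_erase {s : Finset α} (hsne : s.Nonempty) (g : ℕ → ℤ) :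
    ∑ x ∈ (s.powerset.filter (fun x => x.Nonempty)).erase s, g x.card =
      ∑ j ∈ Finset.Ico 1 s.card, (s.card.choose j : ℤ) * g j := by
  classical
  have hm1 : 1 ≤ s.card := Finset.card_pos.2 hsne
  have hT : ∑ t ∈ s.powerset, g t.card =
      ∑ j ∈ Finset.range (s.card + 1), (s.card.choose j : ℤ) * g j := by
    rw [Finset.sum_powerset]
    refine Finset.sum_congr rfl ?_
    intro j _
    rw [Finset.sum_powersetCard j s (fun k => g k)]
    simp [nsmul_eq_mul]
  have hAe : s.powerset.filter (fun x => x.Nonempty) = s.powerset.erase ∅ := by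
    ext t
    simp only [Finset.mem_filter, Finset.mem_erase, Finset.nonempty_iff_ne_empty]
    tauto
  have h0 : ∑ t ∈ s.powerset, g t.card =
      g 0 + ∑ t ∈ s.powerset.erase ∅, g t.card := by
    rw [← Finset.add_sum_erase _ _ (Finset.empty_mem_powerset s)]
    simp
  have hsmem : s ∈ s.powerset.erase ∅ := by
    simp [Finset.mem_erase, hsne.ne_empty]
  have h1 : ∑ t ∈ s.powerset.erase ∅, g t.card =
      g s.card + ∑ t ∈ (s.powerset.erase ∅).erase s, g t.card := by
    rw [← Finset.add_sum_erase _ _ hsmem]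
  have h2 : ∑ j ∈ Finset.range (s.card + 1), (s.card.choose j : ℤ) * g j =
      g 0 + (∑ j ∈ Finset.Ico 1 s.card, (s.card.choose j : ℤ) * g j) + g s.card := by
    rw [Finset.sum_range_succ, Finset.range_eq_Ico,
      Finset.sum_eq_sum_Ico_succ_bot (by omega : 0 < s.card)]
    simp [Nat.choose_self, Nat.choose_zero_right]
  rw [hAe]
  rw [h0, h1, h2] at hT
  linarith

lemma up_main : ∀ (N : ℕ) (τ : Finset α) (Ψ : List (Finset α)), τ.card ≤ N →
    isComp τ Ψ → Ssum τ Ψ * 2 ^ Ψ.length = (-2 : ℤ) ^ τ.card := by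
  intro N
  induction N with
  | zero =>
    intro τ Ψ hcard hΨ
    have hτ : τ = ∅ := Finset.card_eq_zero.1 (Nat.le_zero.1 hcard)
    subst hτ
    have := Psi_eq_nil_of_isComp_empty hΨ
    subst this
    simp [Ssum_empty]
  | succ N ih =>
    intro τ Ψ hcard hΨ
    by_cases hτ : τ = ∅
    · subst hτ
      have := Psi_eq_nil_of_isComp_empty hΨ
      subst this
      simp [Ssum_empty]
    · cases Ψ with
      | nil =>
        exact absurd (isComp_nil.1 hΨ) hτ
      | cons s Ψ' =>
        obtain ⟨hsne, hsτ, hΨ'⟩ := isComp_cons.1 hΨ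
        set c := τ.card with hc
        set m := s.card with hm
        have hm1 : 1 ≤ m := Finset.card_pos.2 hsne
        have hmc : m ≤ c := Finset.card_le_card hsτ
        have hcs : (τ \ s).card = c - m := Finset.card_sdiff_of_subset hsτ
        have hΨ'len : Ψ'.length ≤ c - m := hcs ▸ isComp_length hΨ'
        -- IH for the s-term
        have ihs : Ssum (τ \ s) Ψ' * 2 ^ Ψ'.length = (-2 : ℤ) ^ (c - m) := by
          rw [← hcs]
          exact ih _ _ (by omega) hΨ'
        -- IH for x-terms
        have ihx : ∀ x ∈ (s.powerset.filter (fun x => x.Nonempty)).erase s,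
            Ssum (τ \ x) ((s \ x) :: Ψ') * 2 ^ (Ψ'.length + 1) = (-2 : ℤ) ^ (c - x.card) := by
          intro x hx
          have hxe : x ≠ s := Finset.ne_of_mem_erase hx
          have hx' := Finset.mem_of_mem_erase hx
          simp only [Finset.mem_filter, Finset.mem_powerset] at hx'
          obtain ⟨hxs, hxne⟩ := hx'
          have hxτ : x ⊆ τ := hxs.trans hsτ
          have hcomp : isComp (τ \ x) ((s \ x) :: Ψ') := by
            refine isComp_cons.2 ⟨?_, ?_, ?_⟩
            · rcases Finset.exists_of_ssubset (hxs.ssubset_of_ne hxe) with ⟨a, ha, hax⟩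
              exact ⟨a, Finset.mem_sdiff.2 ⟨ha, hax⟩⟩
            · exact Finset.sdiff_subset_sdiff hsτ subset_rfl
            · have heq : (τ \ x) \ (s \ x) = τ \ s := by
                ext a
                simp only [Finset.mem_sdiff]
                constructor
                · rintro ⟨⟨ha, hax⟩, hns⟩
                  exact ⟨ha, fun has => hns ⟨has, hax⟩⟩
                · rintro ⟨ha, hns⟩
                  exact ⟨⟨ha, fun hax => hns (hxs hax)⟩, fun h => hns h.1⟩
              rw [heq]
              exact hΨ'
          have hcard' : (τ \ x).card = c - x.card := Finset.card_sdiff_of_subset hxτ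
          have := ih (τ \ x) ((s \ x) :: Ψ') (by
            rw [hcard']
            have : 1 ≤ x.card := Finset.card_pos.2 hxne
            omega) hcomp
          rw [hcard'] at this
          simpa using this
        rw [Ssum_rec hΨ]
        have e1 : (if Odd s.card then Ssum (τ \ s) Ψ' else 0) * 2 ^ (Ψ'.length + 1) =
            (if Odd m then 2 * (-2 : ℤ) ^ (c - m) else 0) := by
          by_cases hodd : Odd m
          · rw [if_pos (hm ▸ hodd), if_pos hodd, pow_succ, ← mul_assoc, ihs]
            ring
          · rw [if_neg (hm ▸ hodd), if_neg hodd, zero_mul]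
        have e2 : (∑ x ∈ (s.powerset.filter (fun x => x.Nonempty)).erase s,
              Ssum (τ \ x) ((s \ x) :: Ψ')) * 2 ^ (Ψ'.length + 1) =
            ∑ x ∈ (s.powerset.filter (fun x => x.Nonempty)).erase s,
              (-2 : ℤ) ^ (c - x.card) := by
          rw [Finset.sum_mul]
          exact Finset.sum_congr rfl ihx
        have e3 := sum_pow_card_erase hsne (fun j => (-2 : ℤ) ^ (c - j))
        have e4 : ∑ j ∈ Finset.Ico 1 s.card, (s.card.choose j : ℤ) * (-2) ^ (c - j) =
            (-2 : ℤ) ^ (c - m) * ∑ j ∈ Finset.Ico 1 m, (m.choose j : ℤ) * (-2) ^ (m - j) := by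
          rw [Finset.mul_sum]
          refine Finset.sum_congr rfl ?_
          intro j hj
          simp only [Finset.mem_Ico] at hj
          have hcj : c - j = (c - m) + (m - j) := by omega
          rw [hcj, pow_add]
          ring
        have e5 := keynum hm1
        have e6 : (if Odd m then 2 * (-2 : ℤ) ^ (c - m) else 0) =
            (-2 : ℤ) ^ (c - m) * (if Odd m then (2 : ℤ) else 0) := by
          by_cases hodd : Odd m
          · rw [if_pos hodd, if_pos hodd]; ring
          · rw [if_neg hodd, if_neg hodd, mul_zero]
        have hfin : (c - m) + m = c := by omega
        calc (-((if Odd s.card then Ssum (τ \ s) Ψ' else 0) +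
              ∑ x ∈ (s.powerset.filter (fun x => x.Nonempty)).erase s,
                Ssum (τ \ x) ((s \ x) :: Ψ'))) * 2 ^ (s :: Ψ').length
            = -((if Odd s.card then Ssum (τ \ s) Ψ' else 0) * 2 ^ (Ψ'.length + 1) +
              (∑ x ∈ (s.powerset.filter (fun x => x.Nonempty)).erase s,
                Ssum (τ \ x) ((s \ x) :: Ψ')) * 2 ^ (Ψ'.length + 1)) := by
              rw [List.length_cons]; ring
          _ = -((-2 : ℤ) ^ (c - m) * ((if Odd m then (2 : ℤ) else 0) +
                ∑ j ∈ Finset.Ico 1 m, (m.choose j : ℤ) * (-2) ^ (m - j))) := by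
              rw [e1, e2, e3, e6]
              rw [show (∑ j ∈ Finset.Ico 1 s.card, (s.card.choose j : ℤ) * (-2) ^ (c - j)) =
                (-2 : ℤ) ^ (c - m) * ∑ j ∈ Finset.Ico 1 m, (m.choose j : ℤ) * (-2) ^ (m - j)
                from e4]
              ring
          _ = (-2 : ℤ) ^ c := by
              rw [e5]
              have hr : -((-2 : ℤ) ^ (c - m) * -(-2) ^ m) = (-2) ^ (c - m) * (-2) ^ m := by
                ring
              rw [hr, ← pow_add, hfin]

lemma up_main' {τ : Finset α} {Ψ : List (Finset α)} (hΨ : isComp τ Ψ) :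
    Ssum τ Ψ = (-1 : ℤ) ^ τ.card * 2 ^ (τ.card - Ψ.length) := by
  have hl : Ψ.length ≤ τ.card := isComp_length hΨ
  have h := up_main τ.card τ Ψ le_rfl hΨ
  have h2 : ((-1 : ℤ) ^ τ.card * 2 ^ (τ.card - Ψ.length)) * 2 ^ Ψ.length
      = (-2 : ℤ) ^ τ.card := by
    rw [mul_assoc, ← pow_add, Nat.sub_add_cancel hl]
    rw [show (-2 : ℤ) = -1 * 2 by norm_num, mul_pow]
  exact mul_right_cancel₀ (by positivity) (h.trans h2.symm)

/-! ### Transfer between compositions of `[n]` refining `π` and compositions of `π`. -/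

def down1 (s : Finset (Finset ℕ)) : Finset ℕ := s.sup id

def up1 (π : Finset (Finset ℕ)) (X : Finset ℕ) : Finset (Finset ℕ) :=
  π.filter (fun B => B ⊆ X)

section Transfer

variable {π : Finset (Finset ℕ)}
  (hne : ∀ B ∈ π, B.Nonempty)
  (hdis : ∀ B ∈ π, ∀ C ∈ π, B ≠ C → Disjoint B C)

@[simp] lemma down1_empty : down1 (∅ : Finset (Finset ℕ)) = ∅ := rfl

lemma down1_union (s t : Finset (Finset ℕ)) : down1 (s ∪ t) = down1 s ∪ down1 t :=
  Finset.sup_union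

lemma mem_down1 {s : Finset (Finset ℕ)} {a : ℕ} :
    a ∈ down1 s ↔ ∃ B ∈ s, a ∈ B := by
  simp [down1, Finset.mem_sup]

lemma subset_down1 {s : Finset (Finset ℕ)} {B : Finset ℕ} (hB : B ∈ s) : B ⊆ down1 s :=
  fun a ha => mem_down1.2 ⟨B, hB, ha⟩

include hne hdis in
lemma mem_of_subset_down1 {s : Finset (Finset ℕ)} (hs : s ⊆ π) {B : Finset ℕ}
    (hB : B ∈ π) (hsub : B ⊆ down1 s) : B ∈ s := by
  obtain ⟨a, ha⟩ := hne B hB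
  obtain ⟨C, hC, haC⟩ := mem_down1.1 (hsub ha)
  rcases eq_or_ne B C with rfl | hBC
  · exact hC
  · exact absurd (Finset.disjoint_left.1 (hdis B hB C (hs hC) hBC) ha) (by simpa using haC)

include hne hdis in
lemma up1_down1 {s : Finset (Finset ℕ)} (hs : s ⊆ π) : up1 π (down1 s) = s := by
  ext B
  simp only [up1, Finset.mem_filter]
  constructor
  · rintro ⟨hB, hsub⟩
    exact mem_of_subset_down1 hne hdis hs hB hsub
  · intro hB
    exact ⟨hs hB, subset_down1 hB⟩

include hne in
lemma down1_nonempty {s : Finset (Finset ℕ)} (hs : s ⊆ π) (h : s.Nonempty) :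
    (down1 s).Nonempty := by
  obtain ⟨B, hB⟩ := h
  exact ((hne B (hs hB)).mono (subset_down1 hB))

include hdis in
lemma down1_disjoint {s t : Finset (Finset ℕ)} (hs : s ⊆ π) (ht : t ⊆ π)
    (h : Disjoint s t) : Disjoint (down1 s) (down1 t) := by
  rw [Finset.disjoint_left]
  intro a has hat
  obtain ⟨B, hB, haB⟩ := mem_down1.1 has
  obtain ⟨C, hC, haC⟩ := mem_down1.1 hat
  rcases eq_or_ne B C with rfl | hBC
  · exact Finset.disjoint_left.1 h hB hC
  · exact absurd haC (Finset.disjoint_left.1 (hdis B (hs hB) C (ht hC) hBC) haB)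

include hdis in
lemma down1_card (hodd : ∀ B ∈ π, Odd B.card) {s : Finset (Finset ℕ)} (hs : s ⊆ π) :
    Odd (down1 s).card ↔ Odd s.card := by
  have hd : ∀ B ∈ s, ∀ C ∈ s, B ≠ C → Disjoint (id B) (id C) :=
    fun B hB C hC hBC => hdis B (hs hB) C (hs hC) hBC
  have hcard : (down1 s).card = ∑ B ∈ s, B.card := by
    rw [down1, Finset.sup_eq_biUnion, Finset.card_biUnion hd]
    rfl
  rw [hcard, Nat.odd_iff, Nat.odd_iff, Finset.sum_nat_mod]
  have : ∑ B ∈ s, B.card % 2 = ∑ B ∈ s, 1 := by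
    refine Finset.sum_congr rfl ?_
    intro B hB
    exact Nat.odd_iff.1 (hodd B (hs hB))
  rw [this, Finset.sum_const, smul_eq_mul, mul_one]

lemma down1_up1 {X : Finset ℕ} (hX : X ⊆ π.sup id)
    (href : ∀ B ∈ π, ¬ Disjoint B X → B ⊆ X) : down1 (up1 π X) = X := by
  apply Finset.Subset.antisymm
  · intro a ha
    obtain ⟨B, hB, haB⟩ := mem_down1.1 ha
    exact (Finset.mem_filter.1 hB).2 haB
  · intro a ha
    obtain ⟨B, hB, haB⟩ := Finset.mem_sup.1 (hX ha)
    have hBX : B ⊆ X := href B hB (Finset.not_disjoint_iff.2 ⟨a, haB, ha⟩)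
    exact mem_down1.2 ⟨B, Finset.mem_filter.2 ⟨hB, hBX⟩, haB⟩

lemma up1_nonempty {X : Finset ℕ} (hX : X ⊆ π.sup id)
    (href : ∀ B ∈ π, ¬ Disjoint B X → B ⊆ X) (h : X.Nonempty) : (up1 π X).Nonempty := by
  obtain ⟨a, ha⟩ := h
  obtain ⟨B, hB, haB⟩ := Finset.mem_sup.1 (hX ha)
  exact ⟨B, Finset.mem_filter.2 ⟨hB, href B hB (Finset.not_disjoint_iff.2 ⟨a, haB, ha⟩)⟩⟩

lemma uflat_map_down1 (L : List (Finset (Finset ℕ))) :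
    uflat (L.map down1) = down1 (uflat L) := by
  induction L with
  | nil => simp
  | cons s L ih => simp [down1_union, ih]

include hne hdis in
lemma map_down1_inj : ∀ {L₁ L₂ : List (Finset (Finset ℕ))},
    (∀ s ∈ L₁, s ⊆ π) → (∀ s ∈ L₂, s ⊆ π) →
    L₁.map down1 = L₂.map down1 → L₁ = L₂ := by
  intro L₁
  induction L₁ with
  | nil =>
    intro L₂ _ _ h
    cases L₂ with
    | nil => rfl
    | cons t L₂ => simp at h
  | cons s L₁ ih =>
    intro L₂ h1 h2 h
    cases L₂ with
    | nil => simp at h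
    | cons t L₂ =>
      simp only [List.map_cons, List.cons_eq_cons] at h
      have hst : s = t := by
        have := congrArg (up1 π) h.1
        rwa [up1_down1 hne hdis (h1 s (by simp)), up1_down1 hne hdis (h2 t (by simp))] at this
      rw [hst, ih (fun u hu => h1 u (by simp [hu])) (fun u hu => h2 u (by simp [hu])) h.2]

include hne hdis in
lemma oddM_map_down1 (hodd : ∀ B ∈ π, Odd B.card) :
    ∀ {L : List (Finset (Finset ℕ))}, (∀ s ∈ L, s ⊆ π) →
    (oddM L).map down1 = oddMerge (L.map down1) := by
  intro L
  induction L with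
  | nil => simp [oddMerge]
  | cons x L ih =>
    intro hsub
    have hx : x ⊆ π := hsub x (by simp)
    have ih' := ih (fun s hs => hsub s (by simp [hs]))
    by_cases hxo : Odd x.card
    · rw [oddM_cons_odd hxo]
      have : Odd (down1 x).card := (down1_card hdis hodd hx).2 hxo
      simp only [List.map_cons, oddMerge, if_pos this]
      rw [ih']
    · have hxo' : ¬ Odd (down1 x).card := fun h => hxo ((down1_card hdis hodd hx).1 h)
      rcases h' : oddM L with _ | ⟨C, r⟩
      · rw [oddM_cons_even_nil hxo h']
        have : oddMerge (L.map down1) = [] := by rw [← ih', h']; rfl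
        simp only [List.map_cons, oddMerge, if_neg hxo', this]
        rfl
      · rw [oddM_cons_even_cons hxo h']
        have : oddMerge (L.map down1) = down1 C :: r.map down1 := by rw [← ih', h']; rfl
        simp only [List.map_cons, oddMerge, if_neg hxo', this]
        simp [down1_union]

/-- `oddM` at `α = ℕ` agrees with `oddMerge`. -/
lemma oddM_eq_oddMerge : ∀ (L : List (Finset ℕ)), oddM L = oddMerge L := by
  intro L
  induction L with
  | nil => rfl
  | cons x L ih =>
    by_cases hx : Odd x.card
    · rw [oddM_cons_odd hx]
      simp only [oddMerge, if_pos hx, ih]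
    · rcases h' : oddM L with _ | ⟨C, r⟩
      · rw [oddM_cons_even_nil hx h']
        simp only [oddMerge, if_neg hx, ← ih, h']
      · rw [oddM_cons_even_cons hx h']
        simp only [oddMerge, if_neg hx, ← ih, h']

lemma coarserLE_eq_coarser (ψ φ : List (Finset ℕ)) : CoarserLE ψ φ ↔ coarser ψ φ :=
  Iff.rfl

/-- lifting a chunk decomposition along `map`. -/
lemma flatten_map_lift {β γ : Type*} (f : γ → β) :
    ∀ (L₀ : List (List β)) (M : List γ), L₀.flatten = M.map f →
      ∃ L₁ : List (List γ), L₁.map (List.map f) = L₀ ∧ L₁.flatten = M := by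
  intro L₀
  induction L₀ with
  | nil =>
    intro M h
    have : M = [] := by
      cases M with
      | nil => rfl
      | cons x M => simp at h
    subst this
    exact ⟨[], rfl, rfl⟩
  | cons c L₀ ih =>
    intro M h
    simp only [List.flatten_cons] at h
    obtain ⟨M₁, M₂, rfl, hM₁, hM₂⟩ := List.map_eq_append_iff.1 h.symm
    obtain ⟨L₁, hL₁, hflat⟩ := ih M₂ hM₂.symm
    exact ⟨M₁ :: L₁, by simp [hM₁, hL₁], by simp [hflat]⟩

include hne hdis in
lemma coarser_transfer {Ψ M : List (Finset (Finset ℕ))}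
    (hΨ : ∀ s ∈ Ψ, s ⊆ π) (hM : ∀ s ∈ M, s ⊆ π) :
    coarser (Ψ.map down1) (M.map down1) ↔ coarser Ψ M := by
  constructor
  · rintro ⟨L₀, hL₀ne, hflat, hmap⟩
    obtain ⟨L₁, hL₁, hflat₁⟩ := flatten_map_lift down1 L₀ M hflat
    refine ⟨L₁, ?_, hflat₁, ?_⟩
    · intro c hc
      have : c.map down1 ∈ L₀ := by
        rw [← hL₁]
        exact List.mem_map_of_mem hc
      intro hcnil
      exact hL₀ne _ this (by simp [hcnil])
    · have hmap2 : Ψ.map down1 = (L₁.map (fun c => uflat c)).map down1 := by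
        rw [hmap, ← hL₁]
        simp only [List.map_map]
        refine List.map_congr_left ?_
        intro c _
        simp only [Function.comp_apply]
        exact (uflat_map_down1 c)
      refine map_down1_inj hne hdis hΨ ?_ hmap2
      intro s hs
      simp only [List.mem_map] at hs
      obtain ⟨c, hc, rfl⟩ := hs
      intro B hB
      obtain ⟨b, hb, hBb⟩ := mem_uflat.1 hB
      have hbM : b ∈ M := hflat₁ ▸ List.mem_flatten.2 ⟨c, hc, hb⟩
      exact hM b hbM hBb
  · rintro ⟨L₁, hL₁ne, hflat, hmap⟩
    refine ⟨L₁.map (List.map down1), ?_, ?_, ?_⟩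
    · intro c hc
      simp only [List.mem_map] at hc
      obtain ⟨c', hc', rfl⟩ := hc
      simp only [ne_eq, List.map_eq_nil_iff]
      exact hL₁ne c' hc'
    · rw [← List.map_flatten, hflat]
    · rw [hmap]
      simp only [List.map_map]
      refine List.map_congr_left ?_
      intro c _
      simp only [Function.comp_apply]
      exact (uflat_map_down1 c).symm

end Transfer

section Final

lemma mem_of_getLast?' {β : Type*} {l : List β} {a : β} (h : l.getLast? = some a) :
    a ∈ l := by
  induction l with
  | nil => simp at h
  | cons x t ih =>
    cases t with
    | nil =>
      simp only [List.getLast?_singleton, Option.some.injEq] at h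
      simp [h]
    | cons y t' =>
      rw [List.getLast?_cons_cons] at h
      exact List.mem_cons_of_mem _ (ih h)

lemma lift_comp {n : ℕ} {π : Finset (Finset ℕ)} (hπ : IsSetPartition n π)
    (φ : List (Finset ℕ)) (hφ : IsSetComposition n φ) (href : RefinesPartition π φ) :
    isComp π (φ.map (up1 π)) ∧ (φ.map (up1 π)).map down1 = φ := by
  obtain ⟨hne, hdis, hsup⟩ := hπ
  have hφ' : isComp (Finset.Icc 1 n) φ := hφ
  have hXsub : ∀ X ∈ φ, X ⊆ π.sup id := by
    intro X hX
    rw [hsup]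
    exact isComp_block_subset hφ' hX
  constructor
  · refine ⟨?_, ?_, ?_⟩
    · intro s hs
      simp only [List.mem_map] at hs
      obtain ⟨X, hX, rfl⟩ := hs
      exact up1_nonempty (hXsub X hX) (fun B hB => href X hX B hB) (hφ.1 X hX)
    · rw [List.pairwise_map]
      refine hφ.2.1.imp ?_
      intro X Y hXY
      rw [Finset.disjoint_left]
      intro B hBX hBY
      simp only [up1, Finset.mem_filter] at hBX hBY
      obtain ⟨a, ha⟩ := hne B hBX.1
      exact Finset.disjoint_left.1 hXY (hBX.2 ha) (hBY.2 ha)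
    · ext B
      rw [mem_uflat]
      constructor
      · rintro ⟨s, hs, hBs⟩
        simp only [List.mem_map] at hs
        obtain ⟨X, _, rfl⟩ := hs
        exact (Finset.mem_filter.1 hBs).1
      · intro hB
        obtain ⟨a, ha⟩ := hne B hB
        have haI : a ∈ Finset.Icc 1 n := by
          rw [← hsup]
          exact Finset.mem_sup.2 ⟨B, hB, ha⟩
        have : a ∈ uflat φ := by rw [hφ'.2.2]; exact haI
        obtain ⟨X, hX, haX⟩ := mem_uflat.1 this
        have hBX : B ⊆ X := href X hX B hB (Finset.not_disjoint_iff.2 ⟨a, ha, haX⟩)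
        exact ⟨up1 π X, List.mem_map_of_mem hX, Finset.mem_filter.2 ⟨hB, hBX⟩⟩
  · rw [List.map_map]
    have : ∀ X ∈ φ, (down1 ∘ up1 π) X = X := by
      intro X hX
      exact down1_up1 (hXsub X hX) (fun B hB => href X hX B hB)
    rw [List.map_congr_left this]
    simp

end Final

/-- Let `π` be an odd set partition of `[n]` and `ψ` a set composition whose blocks are
unions of blocks of `π`.  Then `Σ_φ (−1)^{ℓ(φ)} = (−1)^{ℓ(π)} 2^{ℓ(π)−ℓ(ψ)}`, where `φ`
runs over set compositions of `[n]` whose blocks are unions of blocks of `π`, whose last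
block has odd cardinality, and with `ψ ≤ Odd(φ)`. -/
theorem stmt15 (n : ℕ) (hn : 1 ≤ n) (π : Finset (Finset ℕ))
    (hπ : IsSetPartition n π) (hodd : ∀ B ∈ π, Odd B.card)
    (ψ : List (Finset ℕ)) (hψ : IsSetComposition n ψ) (hψπ : RefinesPartition π ψ) :
    (∑ᶠ φ ∈ {φ : List (Finset ℕ) | IsSetComposition n φ ∧ RefinesPartition π φ ∧
        (∃ B, φ.getLast? = some B ∧ Odd B.card) ∧ CoarserLE ψ (oddMerge φ)},
      ((-1 : ℤ)) ^ φ.length) =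
      ((-1 : ℤ)) ^ π.card * 2 ^ (π.card - ψ.length) := by
  classical
  obtain ⟨hne, hdis, hsup⟩ := hπ
  have hπ' : IsSetPartition n π := ⟨hne, hdis, hsup⟩
  set Ψ : List (Finset (Finset ℕ)) := ψ.map (up1 π) with hΨdef
  obtain ⟨hΨcomp, hΨdown⟩ := lift_comp hπ' ψ hψ hψπ
  have hπne : π ≠ ∅ := by
    intro h
    have : Finset.Icc 1 n = ∅ := by rw [← hsup, h]; rfl
    have h1 : (1 : ℕ) ∈ Finset.Icc 1 n := Finset.mem_Icc.2 ⟨le_refl 1, hn⟩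
    rw [this] at h1
    simp at h1
  have hΨsub : ∀ s ∈ Ψ, s ⊆ π := fun s hs => isComp_block_subset hΨcomp hs
  have hset : {φ : List (Finset ℕ) | IsSetComposition n φ ∧ RefinesPartition π φ ∧
        (∃ B, φ.getLast? = some B ∧ Odd B.card) ∧ CoarserLE ψ (oddMerge φ)} =
      ↑((goodFinset π Ψ).image (List.map down1)) := by
    ext φ
    simp only [Set.mem_setOf_eq, Finset.coe_image, Set.mem_image, Finset.mem_coe,
      mem_goodFinset]
    constructor
    · rintro ⟨hc, hr, ⟨B, hB, hBodd⟩, hco⟩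
      obtain ⟨hcomp, hdown⟩ := lift_comp hπ' φ hc hr
      set L : List (Finset (Finset ℕ)) := φ.map (up1 π) with hLdef
      have hLsub : ∀ s ∈ L, s ⊆ π := fun s hs => isComp_block_subset hcomp hs
      have hMsub : ∀ s ∈ oddM L, s ⊆ π :=
        fun s hs => isComp_block_subset (isComp_oddM hcomp) hs
      refine ⟨L, ⟨hcomp, ?_, ?_⟩, hdown⟩
      · -- coarser Ψ (oddM L)
        have h1 : (oddM L).map down1 = oddMerge (L.map down1) :=
          oddM_map_down1 hne hdis hodd hLsub
        refine (coarser_transfer hne hdis hΨsub hMsub).1 ?_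
        rw [hΨdown, h1, hdown]
        exact hco
      · -- last block odd
        right
        have hgl : (L.getLast?).map down1 = some B := by
          rw [← List.getLast?_map, hdown, hB]
        obtain ⟨s, hs, hsB⟩ := Option.map_eq_some_iff.1 hgl
        refine ⟨s, hs, ?_⟩
        have hsπ : s ⊆ π := hLsub s (mem_of_getLast?' hs)
        rw [← down1_card hdis hodd hsπ, hsB]
        exact hBodd
    · rintro ⟨L, hgood, rfl⟩
      obtain ⟨hcomp, hco, hlast⟩ := hgood
      have hLsub : ∀ s ∈ L, s ⊆ π := fun s hs => isComp_block_subset hcomp hs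
      have hMsub : ∀ s ∈ oddM L, s ⊆ π :=
        fun s hs => isComp_block_subset (isComp_oddM hcomp) hs
      have hLne : L ≠ [] := by
        rintro rfl
        exact hπne (isComp_nil.1 hcomp)
      refine ⟨⟨?_, ?_, ?_⟩, ?_, ?_, ?_⟩
      · intro X hX
        simp only [List.mem_map] at hX
        obtain ⟨s, hs, rfl⟩ := hX
        exact down1_nonempty hne (hLsub s hs) (hcomp.1 s hs)
      · rw [List.pairwise_map]
        refine (hcomp.2.1.imp_of_mem ?_)
        intro s t hs ht hst
        exact down1_disjoint hdis (hLsub s hs) (hLsub t ht) hst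
      · show uflat (L.map down1) = Finset.Icc 1 n
        rw [uflat_map_down1, hcomp.2.2, ← hsup]
        rfl
      · -- RefinesPartition
        intro X hX B hB hnd
        simp only [List.mem_map] at hX
        obtain ⟨s, hs, rfl⟩ := hX
        obtain ⟨a, haB, haX⟩ := Finset.not_disjoint_iff.1 hnd
        obtain ⟨C, hC, haC⟩ := mem_down1.1 haX
        have hBC : B = C := by
          by_contra hne'
          exact absurd haC
            (Finset.disjoint_left.1 (hdis B hB C (hLsub s hs hC) hne') haB)
        rw [hBC]
        exact subset_down1 hC
      · -- last block odd
        rcases hlast with h | ⟨s, hs, hsodd⟩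
        · exact absurd h hLne
        · refine ⟨down1 s, ?_, ?_⟩
          · rw [List.getLast?_map, hs]; rfl
          · exact (down1_card hdis hodd (hLsub s (mem_of_getLast?' hs))).2 hsodd
      · -- CoarserLE
        have h1 : (oddM L).map down1 = oddMerge (L.map down1) :=
          oddM_map_down1 hne hdis hodd hLsub
        have h2 : coarser (Ψ.map down1) ((oddM L).map down1) :=
          (coarser_transfer hne hdis hΨsub hMsub).2 hco
        rw [hΨdown, h1] at h2
        exact h2
  rw [hset, finsum_mem_coe_finset]
  rw [Finset.sum_image (by
    intro L₁ h₁ L₂ h₂ h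
    exact map_down1_inj hne hdis
      (fun s hs => isComp_block_subset (mem_goodFinset.1 h₁).1 hs)
      (fun s hs => isComp_block_subset (mem_goodFinset.1 h₂).1 hs) h)]
  have hlen : ∀ L : List (Finset (Finset ℕ)), (L.map down1).length = L.length :=
    fun L => List.length_map down1
  calc (∑ L ∈ goodFinset π Ψ, (-1 : ℤ) ^ (L.map down1).length)
      = ∑ L ∈ goodFinset π Ψ, (-1 : ℤ) ^ L.length :=
        Finset.sum_congr rfl (fun L _ => by rw [hlen])
    _ = Ssum π Ψ := rfl
    _ = (-1 : ℤ) ^ π.card * 2 ^ (π.card - Ψ.length) := up_main' hΨcomp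
    _ = (-1 : ℤ) ^ π.card * 2 ^ (π.card - ψ.length) := by
        rw [hΨdef, List.length_map]
end

section
/- Let φ be an odd set composition of [n] with ℓ(φ) = ℓ. Then the poset P = {ψ : ψ an odd set composition of [n] with ψ ≤ φ}, under refinement order, is order-isomorphic to the poset P' = {α : α an odd composition of ℓ}, under refinement order; moreover, there is an order isomorphism f : P → P' with ℓ(f(ψ)) = ℓ(ψ) for every ψ ∈ P. -/
/-- `α` is a composition of `m`: a list of positive integers summing to `m`. -/
def IsComposition (m : ℕ) (α : List ℕ) : Prop :=
  (∀ a ∈ α, 0 < a) ∧ α.sum = m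

/-- Refinement order on compositions: `β ≤ α` iff every part of `β` is the sum of a
chunk of consecutive parts of `α` (in order). -/
def CoarserLEc (β α : List ℕ) : Prop :=
  ∃ L : List (List ℕ), (∀ c ∈ L, c ≠ []) ∧ L.flatten = α ∧ β = L.map List.sum

/-
A coarsening ψ of φ is obtained by merging consecutive blocks of φ, so it is `mergeBlocks φ α`
for the composition α of ℓ recording how many blocks of φ go into each block of ψ. As the
blocks of φ are nonempty and disjoint, the block sizes of ψ are the sums of consecutive chunks
of the positive list of block sizes of φ, and these determine α; as the blocks of φ are odd, a
merged block is odd iff it merges an odd number of blocks of φ. Merging is associative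
(`mergeBlocks_mergeBlocks`), which transports refinement of compositions of ℓ to refinement
below φ.
-/

namespace List

variable {X Y : Type*}

theorem splitLengths_map (g : X → Y) (sz : List ℕ) (l : List X) :
    sz.splitLengths (l.map g) = (sz.splitLengths l).map (map g) := by
  induction sz generalizing l with
  | nil => rfl
  | cons a sz ih => simp [ih, ← map_drop]

theorem splitLengths_append (sz₁ sz₂ : List ℕ) (l : List X) :
    (sz₁ ++ sz₂).splitLengths l = sz₁.splitLengths l ++ sz₂.splitLengths (l.drop sz₁.sum) := by
  induction sz₁ generalizing l with
  | nil => simp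
  | cons a sz ih => simp [ih, drop_drop]

theorem flatten_splitLengths_eq_take (sz : List ℕ) (l : List X) :
    (sz.splitLengths l).flatten = l.take sz.sum := by
  induction sz generalizing l with
  | nil => simp
  | cons a sz ih => simp [ih, take_add]

theorem splitLengths_map_length_flatten (L : List (List X)) :
    (L.map length).splitLengths L.flatten = L := by
  induction L with
  | nil => rfl
  | cons c L ih => simp [ih]

theorem sublist_of_mem_splitLengths {sz : List ℕ} {l c : List X}
    (hc : c ∈ sz.splitLengths l) : c <+ l := by
  induction sz generalizing l with
  | nil => simp at hc
  | cons a sz ih =>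
    rcases mem_cons.1 (splitLengths_cons l sz a ▸ hc) with rfl | hc
    · exact take_sublist _ _
    · exact (ih hc).trans (drop_sublist _ _)

theorem splitLengths_map_sum (M : List (List ℕ)) (l : List X) :
    (M.map sum).splitLengths l =
      ((M.map length).splitLengths (M.flatten.splitLengths l)).map flatten := by
  induction M generalizing l with
  | nil => rfl
  | cons m M ih =>
    have hm : m.length = (m.splitLengths l).length := (length_splitLengths _ _).symm
    simp only [map_cons, flatten_cons, splitLengths_cons, splitLengths_append, hm, take_left,
      drop_left, ih, flatten_splitLengths_eq_take]

end List

namespace List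

theorem sum_take_lt_sum_take {c : List ℕ} (hc : ∀ x ∈ c, 0 < x) {i j : ℕ} (hij : i < j)
    (hj : j ≤ c.length) : (c.take i).sum < (c.take j).sum := by
  have hsplit : c.take j = c.take i ++ (c.drop i).take (j - i) := by
    rw [← take_add, Nat.add_sub_cancel' hij.le]
  have hne : (c.drop i).take (j - i) ≠ [] := by
    rw [← length_pos_iff, length_take, length_drop]
    omega
  have hpos : 0 < ((c.drop i).take (j - i)).sum :=
    sum_pos _ (fun x hx => hc x (mem_of_mem_drop (mem_of_mem_take hx))) hne
  rw [hsplit, sum_append]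
  omega

theorem eq_of_sum_take_eq_sum_take {c : List ℕ} (hc : ∀ x ∈ c, 0 < x) {i j : ℕ}
    (hi : i ≤ c.length) (hj : j ≤ c.length) (h : (c.take i).sum = (c.take j).sum) : i = j := by
  by_contra hne
  rcases Nat.lt_or_gt_of_ne hne with hij | hji
  · exact (sum_take_lt_sum_take hc hij hj).ne h
  · exact (sum_take_lt_sum_take hc hji hi).ne' h

theorem eq_of_map_sum_splitLengths_eq {c sz₁ sz₂ : List ℕ} (hc : ∀ x ∈ c, 0 < x)
    (h₁ : sz₁.sum ≤ c.length) (h₂ : sz₂.sum ≤ c.length)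
    (h : (sz₁.splitLengths c).map sum = (sz₂.splitLengths c).map sum) : sz₁ = sz₂ := by
  induction sz₁ generalizing c sz₂ with
  | nil => simpa [eq_comm] using congrArg length h
  | cons a sz₁ ih =>
    cases sz₂ with
    | nil => simpa using congrArg length h
    | cons b sz₂ =>
      simp only [sum_cons] at h₁ h₂
      simp only [splitLengths_cons, map_cons, cons.injEq] at h
      obtain rfl : a = b := eq_of_sum_take_eq_sum_take hc (by omega) (by omega) h.1
      have hdrop : ∀ x ∈ c.drop a, 0 < x := fun x hx => hc x (mem_of_mem_drop hx)
      rw [ih hdrop (by simp; omega) (by simp; omega) h.2]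

theorem odd_sum_iff_odd_length {l : List ℕ} (h : ∀ x ∈ l, Odd x) :
    Odd l.sum ↔ Odd l.length := by
  induction l with
  | nil => simp
  | cons a l ih =>
    simp only [forall_mem_cons] at h
    simp only [sum_cons, length_cons, Nat.odd_add, Nat.odd_add_one, h.1, true_iff,
      ← Nat.not_odd_iff_even, ih h.2]

end List

theorem exists_flatten_eq_iff_exists_composition {X Y : Type*} (g : List X → Y) (l : List X)
    (ψ : List Y) :
    (∃ L : List (List X), (∀ c ∈ L, c ≠ []) ∧ L.flatten = l ∧ ψ = L.map g) ↔
      ∃ sz, IsComposition l.length sz ∧ ψ = (sz.splitLengths l).map g := by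
  constructor
  · rintro ⟨L, hne, rfl, rfl⟩
    refine ⟨L.map List.length, ⟨?_, List.length_flatten.symm⟩, by
      rw [List.splitLengths_map_length_flatten]⟩
    simpa [List.length_pos_iff] using hne
  · rintro ⟨sz, ⟨hpos, hsum⟩, rfl⟩
    refine ⟨sz.splitLengths l, fun c hc => ?_, List.flatten_splitLengths _ _ hsum.ge, rfl⟩
    have hlen : c.length ∈ sz := by
      rw [← List.map_splitLengths_length l sz hsum.le]
      exact List.mem_map_of_mem hc
    exact List.ne_nil_of_length_pos (hpos _ hlen)

section BlockUnion

variable {α : Type*} [DecidableEq α]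

def blockUnion (l : List (Finset α)) : Finset α := l.foldr (· ∪ ·) ∅

@[simp] theorem blockUnion_nil : blockUnion ([] : List (Finset α)) = ∅ := rfl

@[simp] theorem blockUnion_cons (B : Finset α) (l : List (Finset α)) :
    blockUnion (B :: l) = B ∪ blockUnion l := rfl

theorem blockUnion_append (l₁ l₂ : List (Finset α)) :
    blockUnion (l₁ ++ l₂) = blockUnion l₁ ∪ blockUnion l₂ := by
  induction l₁ with
  | nil => simp
  | cons B l ih => simp [ih, Finset.union_assoc]

theorem blockUnion_flatten (L : List (List (Finset α))) :
    blockUnion L.flatten = blockUnion (L.map blockUnion) := by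
  induction L with
  | nil => rfl
  | cons l L ih => simp [blockUnion_append, ih]

theorem disjoint_blockUnion_left {l : List (Finset α)} {C : Finset α} :
    Disjoint (blockUnion l) C ↔ ∀ B ∈ l, Disjoint B C := by
  induction l with
  | nil => simp
  | cons B l ih => simp [ih]

theorem blockUnion_nonempty {l : List (Finset α)} (hl : l ≠ []) (h : ∀ B ∈ l, B.Nonempty) :
    (blockUnion l).Nonempty := by
  obtain ⟨B, l, rfl⟩ := List.exists_cons_of_ne_nil hl
  exact (h B (by simp)).mono (by simp)

theorem card_blockUnion {l : List (Finset α)} (h : l.Pairwise Disjoint) :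
    (blockUnion l).card = (l.map Finset.card).sum := by
  induction l with
  | nil => simp
  | cons B l ih =>
    rw [List.pairwise_cons] at h
    have hB : Disjoint B (blockUnion l) :=
      (disjoint_blockUnion_left.2 fun C hC => (h.1 C hC).symm).symm
    simp [Finset.card_union_of_disjoint hB, ih h.2]

theorem pairwise_disjoint_map_blockUnion {L : List (List (Finset α))}
    (h : L.flatten.Pairwise Disjoint) : (L.map blockUnion).Pairwise Disjoint := by
  induction L with
  | nil => simp
  | cons l L ih =>
    simp only [List.flatten_cons, List.pairwise_append, List.mem_flatten] at h
    simp only [List.map_cons, List.pairwise_cons, List.forall_mem_map]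
    refine ⟨fun l' hl' => ?_, ih h.2.1⟩
    refine disjoint_blockUnion_left.2 fun B hB => (disjoint_blockUnion_left.2 fun C hC => ?_).symm
    exact (h.2.2 B hB C ⟨l', hl', hC⟩).symm

end BlockUnion

section MergeBlocks

variable {α : Type*} [DecidableEq α]

def mergeBlocks (φ : List (Finset α)) (sz : List ℕ) : List (Finset α) :=
  (sz.splitLengths φ).map blockUnion

@[simp] theorem length_mergeBlocks (φ : List (Finset α)) (sz : List ℕ) :
    (mergeBlocks φ sz).length = sz.length := by
  simp [mergeBlocks]

theorem mergeBlocks_mergeBlocks {φ : List (Finset α)} {sz γ : List ℕ}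
    (hγ : γ.sum = sz.length) :
    mergeBlocks (mergeBlocks φ sz) γ = mergeBlocks φ ((γ.splitLengths sz).map List.sum) := by
  have hlen : ((γ.splitLengths sz).map List.length) = γ :=
    List.map_splitLengths_length _ _ hγ.le
  have hflat : (γ.splitLengths sz).flatten = sz := List.flatten_splitLengths _ _ hγ.ge
  simp only [mergeBlocks, List.splitLengths_map_sum, hlen, hflat, List.splitLengths_map,
    List.map_map]
  exact List.map_congr_left fun L _ => (blockUnion_flatten L).symm

theorem map_card_mergeBlocks {φ : List (Finset α)} (hφ : φ.Pairwise Disjoint) (sz : List ℕ) :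
    (mergeBlocks φ sz).map Finset.card = (sz.splitLengths (φ.map Finset.card)).map List.sum := by
  rw [mergeBlocks, List.splitLengths_map, List.map_map, List.map_map]
  exact List.map_congr_left fun c hc =>
    card_blockUnion (hφ.sublist (List.sublist_of_mem_splitLengths hc))

theorem eq_of_mergeBlocks_eq {φ : List (Finset α)} (hne : ∀ B ∈ φ, B.Nonempty)
    (hφ : φ.Pairwise Disjoint) {sz₁ sz₂ : List ℕ} (h₁ : sz₁.sum ≤ φ.length)
    (h₂ : sz₂.sum ≤ φ.length) (h : mergeBlocks φ sz₁ = mergeBlocks φ sz₂) : sz₁ = sz₂ := by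
  refine List.eq_of_map_sum_splitLengths_eq (c := φ.map Finset.card) ?_ (by simpa) (by simpa) ?_
  · simpa [Finset.card_pos] using hne
  · rw [← map_card_mergeBlocks hφ, ← map_card_mergeBlocks hφ, h]

theorem forall_odd_card_mergeBlocks_iff {φ : List (Finset α)} (hodd : ∀ B ∈ φ, Odd B.card)
    (hφ : φ.Pairwise Disjoint) {sz : List ℕ} (hsz : sz.sum ≤ φ.length) :
    (∀ B ∈ mergeBlocks φ sz, Odd B.card) ↔ ∀ a ∈ sz, Odd a := by
  have hchunk : ∀ c ∈ sz.splitLengths φ, Odd (blockUnion c).card ↔ Odd c.length := by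
    intro c hc
    have hsub := List.sublist_of_mem_splitLengths hc
    rw [card_blockUnion (hφ.sublist hsub), List.odd_sum_iff_odd_length, List.length_map]
    simp only [List.forall_mem_map]
    exact fun B hB => hodd B (hsub.subset hB)
  conv_rhs => rw [← List.map_splitLengths_length φ sz hsz]
  simp only [mergeBlocks, List.forall_mem_map]
  exact forall₂_congr hchunk

end MergeBlocks

theorem coarserLE_iff {ψ φ : List (Finset ℕ)} :
    CoarserLE ψ φ ↔ ∃ sz, IsComposition φ.length sz ∧ ψ = mergeBlocks φ sz :=
  exists_flatten_eq_iff_exists_composition _ _ _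

theorem coarserLEc_iff {β α : List ℕ} :
    CoarserLEc β α ↔ ∃ γ, IsComposition α.length γ ∧ β = (γ.splitLengths α).map List.sum :=
  exists_flatten_eq_iff_exists_composition _ _ _

theorem IsSetComposition.of_coarserLE {n : ℕ} {ψ φ : List (Finset ℕ)}
    (hφ : IsSetComposition n φ) (h : CoarserLE ψ φ) : IsSetComposition n ψ := by
  obtain ⟨L, hne, rfl, rfl⟩ := h
  refine ⟨?_, pairwise_disjoint_map_blockUnion hφ.2.1, ?_⟩
  · simp only [List.forall_mem_map]
    exact fun c hc => blockUnion_nonempty (hne c hc)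
      fun B hB => hφ.1 B (List.mem_flatten.2 ⟨c, hc, hB⟩)
  · exact (blockUnion_flatten L).symm.trans hφ.2.2

theorem coarserLE_mergeBlocks_iff {φ : List (Finset ℕ)} (hne : ∀ B ∈ φ, B.Nonempty)
    (hφ : φ.Pairwise Disjoint) {α β : List ℕ} (hα : α.sum = φ.length)
    (hβ : β.sum = φ.length) :
    CoarserLE (mergeBlocks φ β) (mergeBlocks φ α) ↔ CoarserLEc β α := by
  rw [coarserLE_iff, coarserLEc_iff, length_mergeBlocks]
  refine exists_congr fun γ => and_congr_right fun hγ => ?_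
  rw [mergeBlocks_mergeBlocks hγ.2]
  have hsum : ((γ.splitLengths α).map List.sum).sum = φ.length := by
    rw [← List.sum_flatten, List.flatten_splitLengths _ _ hγ.2.ge, hα]
  exact ⟨fun h => eq_of_mergeBlocks_eq hne hφ hβ.le hsum.le h, congrArg _⟩

theorem stmt16_general (n : ℕ) (φ : List (Finset ℕ))
    (hφ : IsSetComposition n φ) (hodd : ∀ B ∈ φ, Odd B.card) :
    ∃ f : {ψ : List (Finset ℕ) //
            IsSetComposition n ψ ∧ (∀ B ∈ ψ, Odd B.card) ∧ CoarserLE ψ φ} ≃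
          {α : List ℕ // IsComposition φ.length α ∧ ∀ a ∈ α, Odd a},
      (∀ ψ₁ ψ₂, CoarserLE ψ₁.1 ψ₂.1 ↔ CoarserLEc (f ψ₁).1 (f ψ₂).1) ∧
      (∀ ψ, (f ψ).1.length = ψ.1.length) := by
  have ⟨hne, hdisj, _⟩ := hφ
  let g : {α : List ℕ // IsComposition φ.length α ∧ ∀ a ∈ α, Odd a} →
      {ψ : List (Finset ℕ) // IsSetComposition n ψ ∧ (∀ B ∈ ψ, Odd B.card) ∧ CoarserLE ψ φ} :=
    fun α =>
      have hle : CoarserLE (mergeBlocks φ α.1) φ := coarserLE_iff.2 ⟨α.1, α.2.1, rfl⟩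
      ⟨mergeBlocks φ α.1, hφ.of_coarserLE hle,
        (forall_odd_card_mergeBlocks_iff hodd hdisj α.2.1.2.le).2 α.2.2, hle⟩
  have hg : Function.Bijective g := by
    refine ⟨fun α β h => Subtype.ext ?_, fun ψ => ?_⟩
    · exact eq_of_mergeBlocks_eq hne hdisj α.2.1.2.le β.2.1.2.le (congrArg Subtype.val h)
    · obtain ⟨α, hα, hψ⟩ := coarserLE_iff.1 ψ.2.2.2
      have hαodd := (forall_odd_card_mergeBlocks_iff hodd hdisj hα.2.le).1 (hψ ▸ ψ.2.2.1)
      exact ⟨⟨α, hα, hαodd⟩, Subtype.ext hψ.symm⟩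
  refine ⟨(Equiv.ofBijective g hg).symm, fun ψ₁ ψ₂ => ?_, fun ψ => ?_⟩
  · obtain ⟨α₁, rfl⟩ := hg.2 ψ₁
    obtain ⟨α₂, rfl⟩ := hg.2 ψ₂
    simp only [Equiv.ofBijective_symm_apply_apply]
    exact coarserLE_mergeBlocks_iff hne hdisj α₂.2.1.2 α₁.2.1.2
  · obtain ⟨α, rfl⟩ := hg.2 ψ
    simp [g]

/-- For an odd set composition `φ` of `[n]` with `ℓ(φ) = ℓ`, the poset of odd set
compositions `ψ ≤ φ` is order-isomorphic to the poset of odd compositions of `ℓ`, via a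
length-preserving order isomorphism. -/
theorem stmt16 (n : ℕ) (hn : 1 ≤ n) (φ : List (Finset ℕ))
    (hφ : IsSetComposition n φ) (hodd : ∀ B ∈ φ, Odd B.card) :
    ∃ f : {ψ : List (Finset ℕ) //
            IsSetComposition n ψ ∧ (∀ B ∈ ψ, Odd B.card) ∧ CoarserLE ψ φ} ≃
          {α : List ℕ // IsComposition φ.length α ∧ ∀ a ∈ α, Odd a},
      (∀ ψ₁ ψ₂, CoarserLE ψ₁.1 ψ₂.1 ↔ CoarserLEc (f ψ₁).1 (f ψ₂).1) ∧
      (∀ ψ, (f ψ).1.length = ψ.1.length) :=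
  stmt16_general n φ hφ hodd
end

section
/- Let φ be a set composition of [n] and let ψ be a set composition of [n] with ψ ≤ φ. Then for every set composition χ of [n]: both ψ ≤ ψ ∧ χ and ψ ∧ χ ≤ φ hold if and only if χ ≤ ξ for some ξ ∈ 𝒞_φ^ψ. -/
/-- `α ∧ β`: the list of all pairwise intersections `α_i ∩ β_j`, in lexicographic order
of `(i,j)`, with empty intersections removed. -/
def scMeet (α β : List (Finset ℕ)) : List (Finset ℕ) :=
  (α.flatMap (fun A => β.map (fun B => A ∩ B))).filter (fun S => decide S.Nonempty)

/-- `𝒞_φ^ψ`: the reorderings `ξ = (φ_{τ(1)},…,φ_{τ(ℓ)})` of the blocks of `φ` such that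
`ψ ∧ ξ = φ`. -/
def CsetOf (ψ φ : List (Finset ℕ)) : Set (List (Finset ℕ)) :=
  {ξ | ξ.Perm φ ∧ scMeet ψ ξ = φ}

open List Finset

def scU (l : List (Finset ℕ)) : Finset ℕ := l.foldr (· ∪ ·) ∅

@[simp] lemma scU_nil : scU [] = ∅ := rfl
@[simp] lemma scU_cons (B : Finset ℕ) (t : List (Finset ℕ)) : scU (B :: t) = B ∪ scU t := rfl

abbrev PWD (l : List (Finset ℕ)) : Prop := l.Pairwise (fun B C => _root_.Disjoint B C)

section base
-- (base lemmas, proved already)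
lemma mem_scU {l : List (Finset ℕ)} {x : ℕ} : x ∈ scU l ↔ ∃ B ∈ l, x ∈ B := by
  induction l with
  | nil => simp
  | cons B t ih => simp [Finset.mem_union, ih]

lemma subset_scU {l : List (Finset ℕ)} {B : Finset ℕ} (h : B ∈ l) : B ⊆ scU l := by
  intro x hx; exact mem_scU.2 ⟨B, h, hx⟩

lemma scU_map_inter (A : Finset ℕ) (l : List (Finset ℕ)) :
    scU (l.map (fun B => A ∩ B)) = A ∩ scU l := by
  induction l with
  | nil => simp
  | cons B t ih => simp [ih, Finset.inter_union_distrib_left]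

lemma scU_filter_ne (l : List (Finset ℕ)) :
    scU (l.filter (fun S => decide S.Nonempty)) = scU l := by
  induction l with
  | nil => simp
  | cons B t ih =>
    by_cases h : B.Nonempty
    · simp [List.filter_cons, h, ih]
    · simp only [Finset.not_nonempty_iff_eq_empty] at h
      simp [List.filter_cons, h, ih]

lemma filter_ne_nonempty_iff (l : List (Finset ℕ)) :
    l.filter (fun S => decide S.Nonempty) ≠ [] ↔ (scU l).Nonempty := by
  constructor
  · intro h
    match hl : l.filter (fun S => decide S.Nonempty) with
    | [] => exact absurd hl h
    | B :: t =>
      have hB : B ∈ l.filter (fun S => decide S.Nonempty) := by rw [hl]; exact List.mem_cons_self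
      have h2 := (List.mem_filter.1 hB).2
      simp only [decide_eq_true_eq] at h2
      obtain ⟨x, hx⟩ := h2
      exact ⟨x, mem_scU.2 ⟨B, (List.mem_filter.1 hB).1, hx⟩⟩
  · rintro ⟨x, hx⟩
    obtain ⟨B, hB, hxB⟩ := mem_scU.1 hx
    refine ne_nil_of_mem (a := B) (List.mem_filter.2 ⟨hB, ?_⟩)
    simp only [decide_eq_true_eq]; exact ⟨x, hxB⟩

lemma flatten_flatMap' {α β : Type*} (l : List α) (f : α → List (List β)) :
    (l.flatMap f).flatten = l.flatMap fun a => (f a).flatten := by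
  induction l with
  | nil => rfl
  | cons a t ih => simp [List.flatMap_cons, List.flatten_append, ih]

lemma flatMap_filter_eq {α β : Type*} (p : α → Bool) (f : α → List β) (l : List α)
    (h : ∀ a ∈ l, p a = false → f a = []) :
    (l.filter p).flatMap f = l.flatMap f := by
  induction l with
  | nil => rfl
  | cons a t ih =>
    by_cases hp : p a
    · simp [List.filter_cons, hp, ih fun x hx => h x (mem_cons_of_mem _ hx)]
    · simp only [Bool.not_eq_true] at hp
      simp [List.filter_cons, hp, ih fun x hx => h x (mem_cons_of_mem _ hx),
        h a List.mem_cons_self hp]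

lemma map_filter_comm {α β : Type*} (f : α → β) (p : α → Bool) (q : β → Bool) (l : List α)
    (h : ∀ x ∈ l, p x = q (f x)) :
    (l.filter p).map f = (l.map f).filter q := by
  induction l with
  | nil => rfl
  | cons a t ih =>
    have ht := ih fun x hx => h x (mem_cons_of_mem _ hx)
    by_cases hp : p a
    · have hq : q (f a) = true := (h a List.mem_cons_self) ▸ hp
      simp [List.filter_cons, hp, hq, ht]
    · simp only [Bool.not_eq_true] at hp
      have hq : q (f a) = false := (h a List.mem_cons_self) ▸ hp
      simp [List.filter_cons, hp, hq, ht]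

lemma eq_of_not_disjoint {l : List (Finset ℕ)} (hl : PWD l)
    {A B : Finset ℕ} (hA : A ∈ l) (hB : B ∈ l) (h : ¬ _root_.Disjoint A B) : A = B := by
  by_contra hne
  haveI : Std.Symm (fun B C : Finset ℕ => _root_.Disjoint B C) := ⟨fun _ _ h => h.symm⟩
  exact h (hl.forall hA hB hne)

lemma subset_unique {χ : List (Finset ℕ)} (hχ : PWD χ)
    {B C C' : Finset ℕ} (hB : B.Nonempty) (hC : C ∈ χ) (hC' : C' ∈ χ)
    (h1 : B ⊆ C) (h2 : B ⊆ C') : C = C' := by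
  refine eq_of_not_disjoint hχ hC hC' (fun hd => ?_)
  obtain ⟨x, hx⟩ := hB
  exact (Finset.disjoint_left.1 hd (h1 hx)) (h2 hx)

lemma not_subset_of_disjoint {B X Y : Finset ℕ} (hB : B.Nonempty) (hBY : B ⊆ Y)
    (hd : _root_.Disjoint X Y) : ¬ B ⊆ X := fun h => by
  obtain ⟨x, hx⟩ := hB
  exact Finset.disjoint_left.1 hd (h hx) (hBY hx)
end base

/-- STAR core, by induction. -/
lemma star_core (L : List (List (Finset ℕ))) (hpwd : PWD (L.map scU))
    (hne : ∀ B ∈ L.flatten, B.Nonempty) :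
    (L.flatMap fun c => L.flatten.filter (fun B => decide (B ⊆ scU c))) = L.flatten := by
  induction L with
  | nil => rfl
  | cons c L' ih =>
    simp only [List.map_cons, List.pairwise_cons] at hpwd
    obtain ⟨hhead, htail⟩ := hpwd
    simp only [List.flatten_cons] at hne ⊢
    have hnec : ∀ B ∈ c, B.Nonempty := fun B hB => hne B (List.mem_append_left _ hB)
    have hnef : ∀ B ∈ L'.flatten, B.Nonempty := fun B hB => hne B (List.mem_append_right _ hB)
    -- B in flatten L' fails ⊆ scU c ; B in c fails ⊆ scU c' for c' ∈ L'
    have key1 : (L'.flatten.filter (fun B => decide (B ⊆ scU c))) = [] := by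
      rw [List.filter_eq_nil_iff]
      intro B hB
      obtain ⟨c', hc', hBc'⟩ := List.mem_flatten.1 hB
      have hd : _root_.Disjoint (scU c) (scU c') := hhead _ (List.mem_map_of_mem hc')
      simp only [decide_eq_true_eq]
      exact not_subset_of_disjoint (hnef B hB) (subset_scU hBc') hd
    have key2 : ∀ c' ∈ L', (c.filter (fun B => decide (B ⊆ scU c'))) = [] := by
      intro c' hc'
      rw [List.filter_eq_nil_iff]
      intro B hB
      have hd : _root_.Disjoint (scU c) (scU c') := hhead _ (List.mem_map_of_mem hc')
      simp only [decide_eq_true_eq]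
      exact not_subset_of_disjoint (hnec B hB) (subset_scU hB) hd.symm
    rw [List.flatMap_cons]
    have h1 : (c ++ L'.flatten).filter (fun B => decide (B ⊆ scU c)) = c := by
      rw [List.filter_append, key1, List.append_nil, List.filter_eq_self]
      intro B hB; simp only [decide_eq_true_eq]; exact subset_scU hB
    have h2 : (L'.flatMap fun c' => (c ++ L'.flatten).filter (fun B => decide (B ⊆ scU c')))
        = L'.flatMap fun c' => L'.flatten.filter (fun B => decide (B ⊆ scU c')) := by
      refine List.flatMap_congr fun c' hc' => ?_
      rw [List.filter_append, key2 c' hc', List.nil_append]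
    rw [h1, h2, ih htail hnef]

lemma star {φ σ : List (Finset ℕ)} (hne : ∀ B ∈ φ, B.Nonempty)
    (hpwd : PWD σ) (hco : CoarserLE σ φ) :
    (σ.flatMap fun D => φ.filter (fun B => decide (B ⊆ D))) = φ := by
  obtain ⟨L, -, hflat, hσ⟩ := hco
  subst hflat
  subst hσ
  rw [List.flatMap_map]
  exact star_core L hpwd hne


/-- reordering blocks of φ by the χ-block containing them is a permutation of φ -/
lemma perm_regroup : ∀ (χ : List (Finset ℕ)), PWD χ → ∀ (φ : List (Finset ℕ)),
    (∀ B ∈ φ, B.Nonempty) → (∀ B ∈ φ, ∃ C ∈ χ, B ⊆ C) →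
    (χ.flatMap fun C => φ.filter (fun B => decide (B ⊆ C))).Perm φ := by
  intro χ
  induction χ with
  | nil =>
    intro _ φ _ hcov
    have : φ = [] := List.eq_nil_iff_forall_not_mem.2 fun B hB => by
      obtain ⟨C, hC, -⟩ := hcov B hB; exact List.not_mem_nil hC
    simp [this]
  | cons C χ' ih =>
    intro hχ φ hne hcov
    obtain ⟨hhead, htail⟩ := List.pairwise_cons.1 hχ
    rw [List.flatMap_cons]
    set φ' := φ.filter (fun B => !decide (B ⊆ C)) with hφ'
    have htailEq : (χ'.flatMap fun C' => φ.filter (fun B => decide (B ⊆ C')))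
        = χ'.flatMap fun C' => φ'.filter (fun B => decide (B ⊆ C')) := by
      refine List.flatMap_congr fun C' hC' => ?_
      rw [hφ', List.filter_filter]
      refine List.filter_congr fun B hB => ?_
      by_cases h : B ⊆ C'
      · have : ¬ B ⊆ C := not_subset_of_disjoint (hne B hB) h (hhead C' hC')
        simp [h, this]
      · simp [h]
    rw [htailEq]
    have hperm' : (χ'.flatMap fun C' => φ'.filter (fun B => decide (B ⊆ C'))).Perm φ' := by
      refine ih htail φ' (fun B hB => hne B (List.mem_of_mem_filter hB)) ?_
      intro B hB
      have hBφ : B ∈ φ := List.mem_of_mem_filter hB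
      have hnC : ¬ B ⊆ C := by
        have := (List.mem_filter.1 hB).2; simpa using this
      obtain ⟨C', hC', hsub⟩ := hcov B hBφ
      rcases List.mem_cons.1 hC' with h | h
      · exact absurd (h ▸ hsub) hnC
      · exact ⟨C', h, hsub⟩
    calc (φ.filter (fun B => decide (B ⊆ C)) ++
            χ'.flatMap fun C' => φ'.filter (fun B => decide (B ⊆ C')))
        ~ φ.filter (fun B => decide (B ⊆ C)) ++ φ' := (hperm'.append_left _)
      _ ~ φ := List.filter_append_perm _ φ

lemma pwd_flatMap_inter {ψ χ : List (Finset ℕ)} (hψ : PWD ψ) (hχ : PWD χ) :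
    PWD (ψ.flatMap fun A => χ.map (fun B => A ∩ B)) := by
  induction ψ with
  | nil => exact List.Pairwise.nil
  | cons A ψ' ih =>
    obtain ⟨hhead, htail⟩ := List.pairwise_cons.1 hψ
    rw [List.flatMap_cons]
    rw [show PWD (List.map (fun B => A ∩ B) χ ++ ψ'.flatMap fun A => List.map (fun B => A ∩ B) χ) =
      List.Pairwise (fun B C => _root_.Disjoint B C)
        (List.map (fun B => A ∩ B) χ ++ ψ'.flatMap fun A => List.map (fun B => A ∩ B) χ) from rfl,
      List.pairwise_append]
    refine ⟨hχ.map _ fun B C h => h.mono Finset.inter_subset_right Finset.inter_subset_right,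
      ih htail, ?_⟩
    intro x hx y hy
    obtain ⟨B, -, rfl⟩ := List.mem_map.1 hx
    obtain ⟨A', hA', z, -, rfl⟩ := by
      simpa using List.mem_flatMap.1 hy
    exact ((hhead A' hA').mono Finset.inter_subset_left Finset.inter_subset_left)

lemma pwd_scMeet {ψ χ : List (Finset ℕ)} (hψ : PWD ψ) (hχ : PWD χ) : PWD (scMeet ψ χ) :=
  List.Pairwise.sublist List.filter_sublist (pwd_flatMap_inter hψ hχ)

lemma mem_scMeet' {ψ χ : List (Finset ℕ)} {D : Finset ℕ} (h : D ∈ scMeet ψ χ) :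
    ∃ A ∈ ψ, ∃ C ∈ χ, D = A ∩ C := by
  have := List.mem_of_mem_filter h
  obtain ⟨A, hA, hD⟩ := List.mem_flatMap.1 this
  obtain ⟨C, hC, rfl⟩ := List.mem_map.1 hD
  exact ⟨A, hA, C, hC, rfl⟩

lemma funext_scU : (fun c : List (Finset ℕ) => c.foldr (· ∪ ·) ∅) = scU := rfl

lemma coarser_scMeet_left {ψ χ : List (Finset ℕ)} (hne : ∀ A ∈ ψ, A.Nonempty)
    (hsub : ∀ A ∈ ψ, A ⊆ scU χ) : CoarserLE ψ (scMeet ψ χ) := by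
  refine ⟨ψ.map (fun A => (χ.map (fun B => A ∩ B)).filter (fun S => decide S.Nonempty)),
    ?_, ?_, ?_⟩
  · intro c hc
    obtain ⟨A, hA, rfl⟩ := List.mem_map.1 hc
    rw [filter_ne_nonempty_iff, scU_map_inter, Finset.inter_eq_left.2 (hsub A hA)]
    exact hne A hA
  · rw [scMeet, List.filter_flatMap, List.flatMap_def]
  · rw [funext_scU, List.map_map]
    symm
    refine (List.map_congr_left fun A hA => ?_).trans (List.map_id _)
    show scU ((χ.map (fun B => A ∩ B)).filter (fun S => decide S.Nonempty)) = A
    rw [scU_filter_ne, scU_map_inter, Finset.inter_eq_left.2 (hsub A hA)]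

lemma scMeet_mono {ψ χ ξ : List (Finset ℕ)} (h : CoarserLE χ ξ) :
    CoarserLE (scMeet ψ χ) (scMeet ψ ξ) := by
  obtain ⟨L, hLne, rfl, rfl⟩ := h
  rw [funext_scU]
  refine ⟨ψ.flatMap (fun A =>
      (L.map (fun c => (c.map (fun B => A ∩ B)).filter (fun S => decide S.Nonempty))).filter
        (fun c => decide (c ≠ []))), ?_, ?_, ?_⟩
  · intro c hc
    obtain ⟨A, hA, hc2⟩ := List.mem_flatMap.1 hc
    have := (List.mem_filter.1 hc2).2
    simpa using this
  · rw [flatten_flatMap', scMeet, List.filter_flatMap]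
    refine List.flatMap_congr fun A hA => ?_
    rw [List.flatten_filter_ne_nil, List.map_flatten, List.filter_flatten, List.map_map]
    rfl
  · rw [funext_scU, List.map_flatMap, scMeet, List.filter_flatMap]
    refine List.flatMap_congr fun A hA => ?_
    rw [map_filter_comm scU (fun c => decide (c ≠ [])) (fun S => decide S.Nonempty) _ ?_]
    · rw [List.map_map, List.map_map]
      congr 1
      refine List.map_congr_left fun c hc => ?_
      show A ∩ scU c = scU ((c.map (fun B => A ∩ B)).filter (fun S => decide S.Nonempty))
      rw [scU_filter_ne, scU_map_inter]
    · intro x hx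
      obtain ⟨c, hc, rfl⟩ := List.mem_map.1 hx
      rw [decide_eq_decide, filter_ne_nonempty_iff, scU_filter_ne]

lemma scU_subset_iff {l : List (Finset ℕ)} {X : Finset ℕ} :
    scU l ⊆ X ↔ ∀ B ∈ l, B ⊆ X := by
  induction l with
  | nil => simp
  | cons B t ih => simp [Finset.union_subset_iff, ih]

lemma cover_of_coarser {ψ φ : List (Finset ℕ)} (h : CoarserLE ψ φ) :
    ∀ B ∈ φ, ∃ A ∈ ψ, B ⊆ A := by
  obtain ⟨L, -, rfl, rfl⟩ := h
  rw [funext_scU]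
  intro B hB
  obtain ⟨c, hc, hBc⟩ := List.mem_flatten.1 hB
  exact ⟨scU c, List.mem_map_of_mem hc, subset_scU hBc⟩

/-- For set compositions `ψ ≤ φ` of `[n]` and any set composition `χ` of `[n]`:
`ψ ≤ ψ ∧ χ ≤ φ` holds iff `χ ≤ ξ` for some `ξ ∈ 𝒞_φ^ψ`. -/
theorem stmt18 (n : ℕ) (hn : 1 ≤ n) (φ ψ : List (Finset ℕ))
    (hφ : IsSetComposition n φ) (hψ : IsSetComposition n ψ) (hle : CoarserLE ψ φ)
    (χ : List (Finset ℕ)) (hχ : IsSetComposition n χ) :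
    (CoarserLE ψ (scMeet ψ χ) ∧ CoarserLE (scMeet ψ χ) φ) ↔
      ∃ ξ ∈ CsetOf ψ φ, CoarserLE χ ξ := by
  obtain ⟨hφne, hφpw, hφU⟩ := hφ
  obtain ⟨hψne, hψpw, hψU⟩ := hψ
  obtain ⟨hχne, hχpw, hχU⟩ := hχ
  have hψU' : scU ψ = Finset.Icc 1 n := hψU
  have hχU' : scU χ = Finset.Icc 1 n := hχU
  have hφU' : scU φ = Finset.Icc 1 n := hφU
  have hA1 : CoarserLE ψ (scMeet ψ χ) :=
    coarser_scMeet_left hψne (fun A hA => hχU' ▸ hψU' ▸ subset_scU hA)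
  constructor
  · rintro ⟨-, h2⟩
    -- cover of φ by χ
    have hcovχ : ∀ B ∈ φ, ∃ C ∈ χ, B ⊆ C := by
      intro B hB
      obtain ⟨D, hD, hBD⟩ := cover_of_coarser h2 B hB
      obtain ⟨A, -, C, hC, rfl⟩ := mem_scMeet' hD
      exact ⟨C, hC, hBD.trans Finset.inter_subset_right⟩
    have hcovψ : ∀ B ∈ φ, ∃ A ∈ ψ, B ⊆ A := cover_of_coarser hle
    set ξ := χ.flatMap fun C => φ.filter (fun B => decide (B ⊆ C)) with hξdef
    have hξφ : ∀ B ∈ ξ, B ∈ φ := by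
      intro B hB
      obtain ⟨C, -, hB2⟩ := List.mem_flatMap.1 hB
      exact List.mem_of_mem_filter hB2
    -- for each x in a block C of χ, there is a block of φ containing x inside C
    have hcb : ∀ C ∈ χ, ∀ x ∈ C, ∃ B ∈ φ, x ∈ B ∧ B ⊆ C := by
      intro C hC x hx
      have hxI : x ∈ scU φ := by
        rw [hφU']; exact hχU' ▸ (subset_scU hC) hx
      obtain ⟨B, hB, hxB⟩ := mem_scU.1 hxI
      obtain ⟨C', hC', hBC'⟩ := hcovχ B hB
      have : C = C' := by
        refine eq_of_not_disjoint hχpw hC hC' fun hd => ?_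
        exact Finset.disjoint_left.1 hd hx (hBC' hxB)
      exact ⟨B, hB, hxB, this ▸ hBC'⟩
    refine ⟨ξ, ⟨perm_regroup χ hχpw φ hφne hcovχ, ?_⟩, ?_⟩
    · -- scMeet ψ ξ = φ
      rw [scMeet, List.filter_flatMap]
      have step : ∀ A ∈ ψ,
          (ξ.map (fun B => A ∩ B)).filter (fun S => decide S.Nonempty)
            = χ.flatMap fun C => φ.filter (fun B => decide (B ⊆ A ∩ C)) := by
        intro A hA
        have sub_iff : ∀ B ∈ φ, ((A ∩ B).Nonempty ↔ B ⊆ A) := by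
          intro B hB
          constructor
          · rintro ⟨x, hx⟩
            obtain ⟨A', hA', hBA'⟩ := hcovψ B hB
            have : A = A' := by
              refine eq_of_not_disjoint hψpw hA hA' fun hd => ?_
              exact Finset.disjoint_left.1 hd (Finset.mem_inter.1 hx).1
                (hBA' (Finset.mem_inter.1 hx).2)
            exact this ▸ hBA'
          · intro hsub
            obtain ⟨x, hx⟩ := hφne B hB
            exact ⟨x, Finset.mem_inter.2 ⟨hsub hx, hx⟩⟩
        rw [List.filter_map]
        have e1 : ξ.filter ((fun S => decide S.Nonempty) ∘ (fun B => A ∩ B))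
            = ξ.filter (fun B => decide (B ⊆ A)) := by
          refine List.filter_congr fun B hB => ?_
          simp only [Function.comp, decide_eq_decide]
          exact sub_iff B (hξφ B hB)
        rw [e1]
        have e2 : (ξ.filter (fun B => decide (B ⊆ A))).map (fun B => A ∩ B)
            = ξ.filter (fun B => decide (B ⊆ A)) := by
          refine (List.map_congr_left fun B hB => ?_).trans (List.map_id _)
          have h1 := List.mem_of_mem_filter hB
          have h2 := (List.mem_filter.1 hB).2
          simp only [decide_eq_true_eq] at h2
          exact Finset.inter_eq_right.2 h2
        rw [e2, hξdef, List.filter_flatMap]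
        refine List.flatMap_congr fun C hC => ?_
        rw [List.filter_filter]
        refine List.filter_congr fun B hB => ?_
        simp [Finset.subset_inter_iff, Bool.and_comm]
      rw [List.flatMap_congr step]
      have assoc : (ψ.flatMap fun A => χ.flatMap fun C =>
            φ.filter (fun B => decide (B ⊆ A ∩ C)))
          = (ψ.flatMap fun A => χ.map (fun B => A ∩ B)).flatMap
              fun D => φ.filter (fun B => decide (B ⊆ D)) := by
        rw [List.flatMap_assoc]
        refine List.flatMap_congr fun A hA => ?_
        rw [List.flatMap_map]
      rw [assoc, ← flatMap_filter_eq (fun S => decide S.Nonempty)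
        (fun D => φ.filter (fun B => decide (B ⊆ D))) _ ?_]
      · exact star hφne (pwd_scMeet hψpw hχpw) h2
      · intro D hD hfalse
        simp only [decide_eq_false_iff_not, Finset.not_nonempty_iff_eq_empty] at hfalse
        rw [List.filter_eq_nil_iff]
        intro B hB
        simp only [decide_eq_true_eq, hfalse, Finset.subset_empty]
        intro h
        exact (hφne B hB).ne_empty h
    · -- CoarserLE χ ξ
      refine ⟨χ.map (fun C => φ.filter (fun B => decide (B ⊆ C))), ?_, ?_, ?_⟩
      · intro c hc
        obtain ⟨C, hC, rfl⟩ := List.mem_map.1 hc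
        obtain ⟨x, hx⟩ := hχne C hC
        obtain ⟨B, hB, -, hBC⟩ := hcb C hC x hx
        exact ne_nil_of_mem (List.mem_filter.2 ⟨hB, by simpa using hBC⟩)
      · rw [hξdef, List.flatMap_def]
      · rw [funext_scU]
        symm
        rw [List.map_map]
        refine (List.map_congr_left fun C hC => ?_).trans (List.map_id _)
        show scU (φ.filter (fun B => decide (B ⊆ C))) = C
        apply Finset.Subset.antisymm
        · rw [scU_subset_iff]
          intro B hB
          have := (List.mem_filter.1 hB).2
          simpa using this
        · intro x hx
          obtain ⟨B, hB, hxB, hBC⟩ := hcb C hC x hx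
          exact mem_scU.2 ⟨B, List.mem_filter.2 ⟨hB, by simpa using hBC⟩, hxB⟩
  · rintro ⟨ξ, ⟨hperm, hmeet⟩, hχξ⟩
    exact ⟨hA1, hmeet ▸ scMeet_mono hχξ⟩
end
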